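/- arXiv:1611.02089 — 13 statements merged into one kernel-verified Lean document; each statement's English description precedes it below -/
import Mathlib

section
/- Let n ≥ 2 and let p(x) = x^{2n+1} - m_{2n} x^{2n} + m_{2n-1} x^{2n-1} + ⋯ + m_1 x - 1 be a polynomial with integer coefficients m_1, …, m_{2n}. Let x_0, x_1, …, x_{2n} ∈ ℂ denote the roots of p (with multiplicity). If x_0 is real and is a simple root of p, and |x_1| = |x_2| = ⋯ = |x_{2n}|, then x_0 = 1 and |x_j| = 1 for all j = 1, …, 2n. -/
open Polynomial

/-- A positive real number with `r ^ m = 1` for some `m ≠ 0` equals `1`. -/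
lemma aux_pow_eq_one {r : ℝ} (hr : 0 < r) {m : ℕ} (hm : m ≠ 0) (h : r ^ m = 1) : r = 1 := by
  rcases lt_trichotomy r 1 with h1 | h1 | h1
  · exact absurd h (by have := pow_lt_one₀ hr.le h1 hm; linarith)
  · exact h1
  · exact absurd h (by have := one_lt_pow₀ h1 hm; linarith)

/-- A positive real number with two equal powers at distinct exponents equals `1`. -/
lemma aux_pow_cancel {r : ℝ} (hr : 0 < r) {s t : ℕ} (h : r ^ s = r ^ t) (hst : s ≠ t) :
    r = 1 := by
  rcases lt_or_gt_of_ne hst with hlt | hlt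
  · have h2 : r ^ s * r ^ (t - s) = r ^ s * 1 := by
      rw [← pow_add, mul_one]; rw [h]; congr 1; omega
    exact aux_pow_eq_one hr (by omega) (mul_left_cancel₀ (pow_ne_zero s hr.ne') h2)
  · have h2 : r ^ t * r ^ (s - t) = r ^ t * 1 := by
      rw [← pow_add, mul_one]; rw [← h]; congr 1; omega
    exact aux_pow_eq_one hr (by omega) (mul_left_cancel₀ (pow_ne_zero t hr.ne') h2)

/-- In a conjugation-closed multiset of unit-modulus complex numbers whose product is `-1`,
the number `-1` occurs. -/
lemma aux_neg_one_mem :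
    ∀ (S : Multiset ℂ), S.map (starRingEnd ℂ) = S →
      (∀ z ∈ S, ‖z‖ = 1) → S.prod = -1 → (-1 : ℂ) ∈ S := by
  intro S
  induction S using Multiset.strongInductionOn with
  | _ S IH =>
    intro hc habs hprod
    rcases Multiset.empty_or_exists_mem S with rfl | ⟨z, hz⟩
    · simp at hprod; exact absurd hprod (by norm_num)
    by_cases hzneg : z = -1
    · exact hzneg ▸ hz
    by_cases him : z.im = 0
    · -- z is real, hence z = 1
      have hz1 : z = 1 := by
        rcases (by
          have hzre : (z.re : ℂ) = z := by apply Complex.ext <;> simp [him]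
          have habs' := habs z hz
          rw [← hzre, Complex.norm_real, Real.norm_eq_abs] at habs'
          rcases abs_eq (by norm_num : (0:ℝ) ≤ 1) |>.mp habs' with h | h
          · exact Or.inl (by rw [← hzre, h]; norm_num)
          · exact Or.inr (by rw [← hzre, h]; norm_num) : z = 1 ∨ z = -1) with h | h
        · exact h
        · exact absurd h hzneg
      subst hz1
      set S' := S.erase 1 with hS'
      have hcons : S = 1 ::ₘ S' := (Multiset.cons_erase hz).symm
      have hlt : S' < S := by rw [hcons]; exact Multiset.lt_cons_self _ _
      have hmem : (-1 : ℂ) ∈ S' := by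
        apply IH S' hlt
        · rw [hS', Multiset.map_erase _ (starRingEnd ℂ).injective, hc, map_one]
        · intro w hw; exact habs w (Multiset.mem_of_mem_erase hw)
        · have := hprod; rw [hcons, Multiset.prod_cons, one_mul] at this; exact this
      exact Multiset.mem_of_mem_erase hmem
    · -- z nonreal: remove z and its conjugate
      have hzc : (starRingEnd ℂ) z ∈ S := by
        rw [← hc]; exact Multiset.mem_map_of_mem _ hz
      have hne : (starRingEnd ℂ) z ≠ z := by
        intro h; apply him
        exact Complex.conj_eq_iff_im.mp h
      have hzc' : (starRingEnd ℂ) z ∈ S.erase z := Multiset.mem_erase_of_ne hne |>.mpr hzc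
      set S' := (S.erase z).erase ((starRingEnd ℂ) z) with hS'
      have hcons : S = z ::ₘ (starRingEnd ℂ) z ::ₘ S' := by
        rw [hS', Multiset.cons_erase hzc', Multiset.cons_erase hz]
      have hlt : S' < S := by
        rw [hcons]
        calc S' < (starRingEnd ℂ) z ::ₘ S' := Multiset.lt_cons_self _ _
        _ < z ::ₘ (starRingEnd ℂ) z ::ₘ S' := Multiset.lt_cons_self _ _
      have hmem : (-1 : ℂ) ∈ S' := by
        apply IH S' hlt
        · rw [hS', Multiset.map_erase _ (starRingEnd ℂ).injective,
            Multiset.map_erase _ (starRingEnd ℂ).injective, hc]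
          rw [Complex.conj_conj, Multiset.erase_comm]
        · intro w hw
          exact habs w (Multiset.mem_of_mem_erase (Multiset.mem_of_mem_erase hw))
        · have hpr := hprod
          rw [hcons, Multiset.prod_cons, Multiset.prod_cons, ← mul_assoc] at hpr
          have hzz : z * (starRingEnd ℂ) z = 1 := by
            rw [Complex.mul_conj]
            norm_cast
            rw [Complex.normSq_eq_norm_sq, habs z hz]; norm_num
          rw [hzz, one_mul] at hpr; exact hpr
      rw [hcons]
      exact Multiset.mem_cons_of_mem (Multiset.mem_cons_of_mem hmem)

/-- A real complex number of absolute value one is `1` or `-1`. -/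
lemma aux_real_abs_one {z : ℂ} (him : z.im = 0) (habs : ‖z‖ = 1) :
    z = 1 ∨ z = -1 := by
  have hz : (z.re : ℂ) = z := by
    apply Complex.ext <;> simp [him]
  rw [← hz, Complex.norm_real, Real.norm_eq_abs] at habs
  rcases abs_eq (by norm_num : (0:ℝ) ≤ 1) |>.mp habs with h | h
  · left; rw [← hz, h]; norm_num
  · right; rw [← hz, h]; norm_num

set_option maxHeartbeats 2000000 in
/-- **Lemma (roots of integer polynomials).**
Let `p(x) = x^{2n+1} - m_{2n} x^{2n} + ⋯ + m_1 x - 1` be a monic integer polynomial of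
degree `2n+1` (`n ≥ 2`) with constant term `-1`, with roots `x_0, …, x_{2n} ∈ ℂ` (with
multiplicity).  If `x_0` is a simple real root and `|x_1| = ⋯ = |x_{2n}|`, then `x_0 = 1`
and `|x_j| = 1` for all `j = 1, …, 2n`. -/
theorem roots_of_integer_polynomial
    (n : ℕ) (hn : 2 ≤ n) (p : Polynomial ℤ)
    (hmonic : p.Monic) (hdeg : p.natDegree = 2 * n + 1)
    (hconst : p.coeff 0 = -1)
    (x : Fin (2 * n + 1) → ℂ)
    (hroots : p.map (Int.castRingHom ℂ) = ∏ i : Fin (2 * n + 1), (X - C (x i)))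
    (hreal : (x 0).im = 0)
    (hsimple : ∀ j : Fin (2 * n + 1), j ≠ 0 → x j ≠ x 0)
    (hmod : ∀ i j : Fin (2 * n + 1), i ≠ 0 → j ≠ 0 →
      ‖x i‖ = ‖x j‖) :
    x 0 = 1 ∧ ∀ j : Fin (2 * n + 1), j ≠ 0 → ‖x j‖ = 1 := by
  -- evaluation of the mapped polynomial
  have hev : ∀ z : ℂ, eval z (p.map (Int.castRingHom ℂ)) = ∏ i, (z - x i) := by
    intro z; rw [hroots, eval_prod]; simp
  have hroot_iff : ∀ z : ℂ, eval z (p.map (Int.castRingHom ℂ)) = 0 ↔ ∃ i, x i = z := by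
    intro z
    rw [hev, Finset.prod_eq_zero_iff]
    constructor
    · rintro ⟨i, _, hi⟩; exact ⟨i, (sub_eq_zero.mp hi).symm⟩
    · rintro ⟨i, hi⟩; exact ⟨i, Finset.mem_univ i, by rw [hi, sub_self]⟩
  -- the product of the roots is 1
  have hprod1 : ∏ i, x i = 1 := by
    have h0 : eval 0 (p.map (Int.castRingHom ℂ)) = -1 := by
      rw [← coeff_zero_eq_eval_zero, coeff_map, hconst]; simp
    rw [hev 0] at h0
    simp only [zero_sub] at h0
    have h1 : ∏ i : Fin (2*n+1), (-(x i)) = (-1)^(2*n+1) * ∏ i, x i := by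
      have hneg : ∀ i : Fin (2*n+1), -(x i) = (-1) * x i := fun i => by ring
      rw [Finset.prod_congr rfl (fun i _ => hneg i), Finset.prod_mul_distrib,
        Finset.prod_const]
      simp
    rw [h1, Odd.neg_one_pow ⟨n, by ring⟩, neg_one_mul, neg_inj] at h0
    exact h0
  have hx0 : ∀ i, x i ≠ 0 := by
    intro i h
    have h2 : ∏ i, x i = 0 := Finset.prod_eq_zero (Finset.mem_univ i) h
    rw [hprod1] at h2; exact one_ne_zero h2
  -- the common modulus r
  have hj₁ : (⟨1, by omega⟩ : Fin (2*n+1)) ≠ 0 := by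
    intro h; rw [Fin.ext_iff] at h; simpa using h
  set r : ℝ := ‖x ⟨1, by omega⟩‖ with hr_def
  have hr : ∀ j, j ≠ 0 → ‖x j‖ = r := fun j hj => hmod j _ hj hj₁
  have hrpos : 0 < r := norm_pos_iff.mpr (hx0 _)
  have hApos : 0 < ‖x 0‖ := norm_pos_iff.mpr (hx0 0)
  -- |x 0| * r ^ (2n) = 1
  have habs0 : ‖x 0‖ * r ^ (2*n) = 1 := by
    have h := congrArg (‖·‖) hprod1
    rw [norm_prod, norm_one] at h
    rw [Fintype.prod_eq_mul_prod_compl 0 (fun i => ‖x i‖)] at h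
    have h2 : ∏ i ∈ ({0}ᶜ : Finset (Fin (2*n+1))), ‖x i‖ = r ^ (2*n) := by
      rw [Finset.prod_congr rfl (fun i hi => hr i (by simpa using (Finset.mem_compl.mp hi)))]
      rw [Finset.prod_const, Finset.card_compl]
      simp
    rw [h2] at h; exact h
  -- conjugation closure of the root multiset
  have hRc : (Finset.univ.val.map x).map (starRingEnd ℂ) = Finset.univ.val.map x := by
    have hmapconj : (p.map (Int.castRingHom ℂ)).map (starRingEnd ℂ)
        = p.map (Int.castRingHom ℂ) := by
      rw [map_map]; congr 1; exact Subsingleton.elim _ _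
    have h2 : ∏ i, (X - C ((starRingEnd ℂ) (x i))) = ∏ i, (X - C (x i)) := by
      calc ∏ i, (X - C ((starRingEnd ℂ) (x i)))
          = (p.map (Int.castRingHom ℂ)).map (starRingEnd ℂ) := by
            rw [hroots, Polynomial.map_prod]; simp
        _ = _ := by rw [hmapconj, hroots]
    have key : (Multiset.map (fun a => X - C a)
          ((Finset.univ.val.map x).map (starRingEnd ℂ))).prod
        = (Multiset.map (fun a => X - C a) (Finset.univ.val.map x)).prod := by
      rw [Multiset.map_map, Multiset.map_map]
      calc (Finset.univ.val.map ((fun a => X - C a) ∘ ⇑(starRingEnd ℂ) ∘ x)).prod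
          = ∏ i, (X - C ((starRingEnd ℂ) (x i))) := (Finset.prod_eq_multiset_prod _ _).symm
        _ = ∏ i, (X - C (x i)) := h2
        _ = (Finset.univ.val.map ((fun a => X - C a) ∘ x)).prod :=
            Finset.prod_eq_multiset_prod _ _
        _ = (Multiset.map (fun a => X - C a) (Finset.univ.val.map x)).prod := by
            rw [Multiset.map_map]
    have h3 := congrArg Polynomial.roots key
    rwa [roots_multiset_prod_X_sub_C, roots_multiset_prod_X_sub_C] at h3
  have hconjroot : ∀ i, ∃ j, x j = (starRingEnd ℂ) (x i) := by
    intro i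
    have h4 : (starRingEnd ℂ) (x i) ∈ Finset.univ.val.map x := by
      rw [← hRc]
      exact Multiset.mem_map_of_mem _ (Multiset.mem_map_of_mem x (Finset.mem_univ_val i))
    obtain ⟨j, _, hj⟩ := Multiset.mem_map.mp h4
    exact ⟨j, hj⟩
  -- algebraicity of the roots
  have hpQ : ∀ i, Polynomial.aeval (x i) (p.map (Int.castRingHom ℚ)) = 0 := by
    intro i
    rw [Polynomial.aeval_def, Polynomial.eval₂_map]
    have hcomp : (algebraMap ℚ ℂ).comp (Int.castRingHom ℚ) = Int.castRingHom ℂ :=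
      Subsingleton.elim _ _
    rw [hcomp, ← Polynomial.eval_map]
    exact (hroot_iff _).mpr ⟨i, rfl⟩
  have halgQ : ∀ i, IsIntegral ℚ (x i) := by
    intro i
    exact IsAlgebraic.isIntegral
      ⟨p.map (Int.castRingHom ℚ), (hmonic.map _).ne_zero, hpQ i⟩
  -- the heart of the proof: r = 1
  have hr1 : r = 1 := by
    by_cases hcase : ∃ j : Fin (2*n+1), j ≠ 0 ∧
        Polynomial.aeval (x j) (minpoly ℚ (x 0)) = 0
    · -- Case (i): some other root shares the minimal polynomial of x 0
      obtain ⟨j₀, hj₀, hj₀root⟩ := hcase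
      have haq : minpoly ℚ (x j₀) = minpoly ℚ (x 0) :=
        (minpoly.eq_of_irreducible_of_monic
          (minpoly.irreducible (halgQ 0)) hj₀root (minpoly.monic (halgQ 0))).symm
      have hK : ∀ s ∈ Set.range x, IsIntegral ℚ s ∧ ((minpoly ℚ s).map (algebraMap ℚ ℂ)).Splits := by
        rintro s ⟨i, rfl⟩; exact ⟨halgQ i, IsAlgClosed.splits _⟩
      set L := IntermediateField.adjoin ℚ (Set.range x) with hL
      have hmem : ∀ i, x i ∈ L := fun i => IntermediateField.subset_adjoin _ _ ⟨i, rfl⟩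
      have hy : Polynomial.aeval (x 0) (minpoly ℚ (x j₀)) = 0 := by
        rw [haq]; exact minpoly.aeval ℚ (x 0)
      obtain ⟨ψ, hψa⟩ :=
        IntermediateField.exists_algHom_adjoin_of_splits_of_aeval hK (hmem j₀) hy
      set X : Fin (2*n+1) → L := fun i => ⟨x i, hmem i⟩ with hX
      have hcoe : ∀ z : L, algebraMap L ℂ z = z.val := fun _ => rfl
      have hcomp : (algebraMap (↥L) ℂ).comp (Int.castRingHom L) = Int.castRingHom ℂ :=
        Subsingleton.elim _ _
      have hcompψ : (ψ : L →+* ℂ).comp (Int.castRingHom L) = Int.castRingHom ℂ :=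
        Subsingleton.elim _ _
      have hevL : ∀ i, Polynomial.eval₂ (Int.castRingHom L) (X i) p = 0 := by
        intro i
        apply (algebraMap (↥L) ℂ).injective
        rw [map_zero, Polynomial.hom_eval₂, hcomp, hcoe]
        have h6 := (hroot_iff (x i)).mpr ⟨i, rfl⟩
        rwa [eval_map] at h6
      have hψroot : ∀ i, ∃ k, x k = ψ (X i) := by
        intro i
        apply (hroot_iff _).mp
        rw [eval_map]
        have h := Polynomial.hom_eval₂ p (Int.castRingHom L) (ψ : L →+* ℂ) (X i)
        rw [hevL i, map_zero, hcompψ] at h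
        exact h.symm
      have hψX : ∀ i, x i = x j₀ → ψ (X i) = x 0 := by
        intro i h
        have hXe : X i = X j₀ := Subtype.ext h
        rw [hXe]; exact hψa
      have hψX' : ∀ i, x i ≠ x j₀ → ψ (X i) ≠ x 0 := by
        intro i h hcon
        apply h
        have h2 : ψ (X i) = ψ (X j₀) := by rw [hcon, ← hψa]
        exact congrArg Subtype.val (ψ.injective h2)
      have hψabs : ∀ i, ‖ψ (X i)‖
          = if x i = x j₀ then ‖x 0‖ else r := by
        intro i
        split_ifs with h
        · rw [hψX i h]
        · obtain ⟨k, hk⟩ := hψroot i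
          have hk0 : k ≠ 0 := by
            rintro rfl
            exact hψX' i h hk.symm
          rw [← hk]; exact hr k hk0
      have hXprod : ∏ i, X i = 1 := by
        apply (algebraMap (↥L) ℂ).injective
        rw [map_prod, map_one]
        simpa [hcoe] using hprod1
      have h1 : ∏ i, ‖ψ (X i)‖ = 1 := by
        rw [← norm_prod, ← map_prod, hXprod, map_one, norm_one]
      set k := (Finset.univ.filter (fun i => x i = x j₀)).card with hk
      have hk1 : 1 ≤ k := by
        apply Finset.card_pos.mpr
        exact ⟨j₀, Finset.mem_filter.mpr ⟨Finset.mem_univ _, rfl⟩⟩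
      have hkle : k ≤ 2*n+1 := by
        calc k ≤ Finset.univ.card := Finset.card_filter_le _ _
        _ = 2*n+1 := by simp
      have hsplit : ‖x 0‖ ^ k * r ^ (2*n+1 - k) = 1 := by
        rw [← Finset.prod_filter_mul_prod_filter_not Finset.univ (fun i => x i = x j₀)] at h1
        have e1 : ∏ i ∈ Finset.univ.filter (fun i => x i = x j₀), ‖ψ (X i)‖
            = ‖x 0‖ ^ k := by
          rw [Finset.prod_congr rfl (fun i hi => by
            rw [hψabs i, if_pos (Finset.mem_filter.mp hi).2]), Finset.prod_const]
        have e2 : ∏ i ∈ Finset.univ.filter (fun i => ¬ x i = x j₀), ‖ψ (X i)‖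
            = r ^ (2*n+1 - k) := by
          rw [Finset.prod_congr rfl (fun i hi => by
            rw [hψabs i, if_neg (Finset.mem_filter.mp hi).2]), Finset.prod_const]
          congr 1
          have h5 := Finset.card_filter_add_card_filter_not
            (s := Finset.univ) (p := fun i => x i = x j₀)
          simp only [Finset.card_univ, Fintype.card_fin] at h5
          omega
        rw [e1, e2] at h1
        exact h1
      by_cases hk2 : 2 ≤ k
      · have e : ‖x 0‖ ^ k * r ^ (2*n*k) = 1 := by
          have h2 : (‖x 0‖ * r^(2*n))^k = 1 := by rw [habs0, one_pow]
          rwa [mul_pow, ← pow_mul] at h2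
        have hAk : ‖x 0‖ ^ k ≠ 0 := pow_ne_zero _ hApos.ne'
        have hrr : r ^ (2*n+1-k) = r ^ (2*n*k) := mul_left_cancel₀ hAk (by rw [hsplit, e])
        apply aux_pow_cancel hrpos hrr
        have h4 : 2*n*2 ≤ 2*n*k := Nat.mul_le_mul_left _ hk2
        omega
      · -- k = 1 : find an independent root b
        have hk1' : k = 1 := by omega
        have hcnt : ∀ b : ℂ, Multiset.count b (Finset.univ.val.map x)
            = (Finset.univ.filter (fun i => x i = b)).card := by
          intro b
          rw [Multiset.count_map]
          congr 1
          exact Multiset.filter_congr (fun i _ => eq_comm)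
        have hconjcount :
            (Finset.univ.filter (fun i => x i = (starRingEnd ℂ) (x j₀))).card = 1 := by
          rw [← hcnt]
          conv_lhs => rw [← hRc]
          rw [Multiset.count_map_eq_count' _ _ (starRingEnd ℂ).injective, hcnt, ← hk]
          exact hk1'
        have hexb : ∃ jb, x jb ≠ x j₀ ∧ x jb ≠ (starRingEnd ℂ) (x j₀) ∧ jb ≠ 0 := by
          by_contra hno
          push_neg at hno
          have hsub : Finset.univ.erase 0 ⊆
              (Finset.univ.filter (fun i => x i = x j₀)) ∪
              (Finset.univ.filter (fun i => x i = (starRingEnd ℂ) (x j₀))) := by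
            intro j hj
            have hj0 : j ≠ 0 := (Finset.mem_erase.mp hj).1
            by_cases h : x j = x j₀
            · exact Finset.mem_union_left _ (Finset.mem_filter.mpr ⟨Finset.mem_univ _, h⟩)
            · by_cases h2 : x j = (starRingEnd ℂ) (x j₀)
              · exact Finset.mem_union_right _
                  (Finset.mem_filter.mpr ⟨Finset.mem_univ _, h2⟩)
              · exact absurd (hno j h h2) hj0
          have hcard := Finset.card_le_card hsub
          have hcu : (Finset.univ.erase (0 : Fin (2*n+1))).card = 2*n := by
            rw [Finset.card_erase_of_mem (Finset.mem_univ _)]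
            simp
          have hun := Finset.card_union_le
            (Finset.univ.filter (fun i => x i = x j₀))
            (Finset.univ.filter (fun i => x i = (starRingEnd ℂ) (x j₀)))
          rw [hcu] at hcard
          rw [← hk] at hun
          omega
        obtain ⟨jb, hba, hbca, hb0⟩ := hexb
        obtain ⟨jc, hjc⟩ := hconjroot jb
        obtain ⟨ja, hja⟩ := hconjroot j₀
        have hrel : X j₀ * X ja = X jb * X jc := by
          apply Subtype.ext
          show x j₀ * x ja = x jb * x jc
          rw [hja, hjc, Complex.mul_conj, Complex.mul_conj]
          norm_cast
          rw [Complex.normSq_eq_norm_sq, Complex.normSq_eq_norm_sq, hr j₀ hj₀, hr jb hb0]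
        have hrel2 : ‖ψ (X j₀)‖ * ‖ψ (X ja)‖
            = ‖ψ (X jb)‖ * ‖ψ (X jc)‖ := by
          rw [← norm_mul, ← norm_mul, ← map_mul, ← map_mul, hrel]
        have hbb : ‖ψ (X jb)‖ = r := by rw [hψabs, if_neg hba]
        have hcc : ‖ψ (X jc)‖ = r := by
          rw [hψabs, if_neg]
          intro h
          apply hbca
          rw [hjc] at h
          have h7 := congrArg (starRingEnd ℂ) h
          rwa [Complex.conj_conj] at h7
        have haa : ‖ψ (X j₀)‖ = ‖x 0‖ := by rw [hψX j₀ rfl]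
        have hAr : ‖x 0‖ = r := by
          by_cases haa2 : x ja = x j₀
          · rw [hbb, hcc, haa, hψX ja haa2] at hrel2
            nlinarith [hApos, hrpos]
          · rw [hbb, hcc, haa, hψabs ja, if_neg haa2] at hrel2
            exact mul_right_cancel₀ hrpos.ne' hrel2
        rw [hAr, ← pow_succ'] at habs0
        exact aux_pow_eq_one hrpos (by omega) habs0
    · -- Case (ii): x 0 is rational
      push_neg at hcase
      set q := minpoly ℚ (x 0) with hqdef
      have hq0 : q ≠ 0 := minpoly.ne_zero (halgQ 0)
      have hqC : q.map (algebraMap ℚ ℂ) ≠ 0 := Polynomial.map_ne_zero hq0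
      have hallroots : ∀ z ∈ (q.map (algebraMap ℚ ℂ)).roots, z = x 0 := by
        intro z hz
        have hz0 : Polynomial.aeval z q = 0 := by
          have h1 := isRoot_of_mem_roots hz
          rwa [IsRoot, eval_map, ← aeval_def] at h1
        have hdvd : q ∣ p.map (Int.castRingHom ℚ) := minpoly.dvd ℚ (x 0) (hpQ 0)
        have hzp : eval z (p.map (Int.castRingHom ℂ)) = 0 := by
          obtain ⟨c, hc⟩ := hdvd
          have h8 : p.map (Int.castRingHom ℂ)
              = (q.map (algebraMap ℚ ℂ)) * (c.map (algebraMap ℚ ℂ)) := by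
            have hcomp : (algebraMap ℚ ℂ).comp (Int.castRingHom ℚ) = Int.castRingHom ℂ :=
              Subsingleton.elim _ _
            rw [← Polynomial.map_mul, ← hc, map_map, hcomp]
          rw [h8, eval_mul]
          have h9 : eval z (q.map (algebraMap ℚ ℂ)) = 0 := by
            rw [eval_map, ← aeval_def, hz0]
          rw [h9, zero_mul]
        obtain ⟨i, hi⟩ := (hroot_iff z).mp hzp
        by_cases hi0 : i = 0
        · rw [← hi, hi0]
        · exact absurd (hi ▸ hz0) (hcase i hi0)
      have hsep : (q.map (algebraMap ℚ ℂ)).roots.Nodup :=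
        Polynomial.nodup_roots ((minpoly.irreducible (halgQ 0)).separable.map)
      have hcard : Multiset.card (q.map (algebraMap ℚ ℂ)).roots = q.natDegree :=
        by rw [← (IsAlgClosed.splits (q.map (algebraMap ℚ ℂ))).natDegree_eq_card_roots, natDegree_map]
      have hle1 : q.natDegree ≤ 1 := by
        rw [← hcard]
        have hrep := Multiset.eq_replicate_of_mem hallroots
        have hcnt2 := Multiset.nodup_iff_count_le_one.mp hsep (x 0)
        rw [hrep, Multiset.count_replicate_self] at hcnt2
        exact hcnt2
      have hdeg1 : q.natDegree = 1 := le_antisymm hle1 (minpoly.natDegree_pos (halgQ 0))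
      obtain ⟨c, hc⟩ := minpoly.natDegree_eq_one_iff.mp hdeg1
      have hintZ : ∀ i, IsIntegral ℤ (x i) := by
        intro i
        refine ⟨p, hmonic, ?_⟩
        have h10 := (hroot_iff (x i)).mpr ⟨i, rfl⟩
        rwa [eval_map] at h10
      have hcint : IsIntegral ℤ c := by
        apply IsIntegral.tower_bot_of_field (B := ℂ)
        rw [hc]; exact hintZ 0
      obtain ⟨m, hm⟩ := IsIntegrallyClosed.isIntegral_iff.mp hcint
      have hc0 : c ≠ 0 := by
        rintro rfl
        rw [map_zero] at hc
        exact hx0 0 hc.symm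
      have hxw : x 0 * ∏ i ∈ ({0}ᶜ : Finset (Fin (2*n+1))), x i = 1 := by
        rw [← Fintype.prod_eq_mul_prod_compl]; exact hprod1
      have hw : (∏ i ∈ ({0}ᶜ : Finset (Fin (2*n+1))), x i) = algebraMap ℚ ℂ c⁻¹ := by
        rw [map_inv₀, hc]
        exact (inv_eq_of_mul_eq_one_right hxw).symm
      have hwint : IsIntegral ℤ c⁻¹ := by
        apply IsIntegral.tower_bot_of_field (B := ℂ)
        rw [← hw]
        exact IsIntegral.prod _ (fun i _ => hintZ i)
      obtain ⟨m', hm'⟩ := IsIntegrallyClosed.isIntegral_iff.mp hwint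
      have hmm' : m * m' = 1 := by
        have h2 : (algebraMap ℤ ℚ) m * (algebraMap ℤ ℚ) m' = 1 := by
          rw [hm, hm', mul_inv_cancel₀ hc0]
        have h3 : ((m : ℚ)) * ((m' : ℚ)) = 1 := by
          rwa [algebraMap_int_eq, eq_intCast, eq_intCast] at h2
        exact_mod_cast h3
      have hm1 : m = 1 ∨ m = -1 := Int.isUnit_iff.mp (IsUnit.of_mul_eq_one _ hmm')
      have habsx0 : ‖x 0‖ = 1 := by
        have hxm : x 0 = ((m : ℚ) : ℂ) := by
          rw [← hc, ← hm]; rfl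
        rcases hm1 with rfl | rfl <;> rw [hxm] <;> norm_num
      rw [habsx0, one_mul] at habs0
      exact aux_pow_eq_one hrpos (by omega) habs0
  -- conclude
  have habsx0 : ‖x 0‖ = 1 := by
    have h5 := habs0; rw [hr1] at h5; simpa using h5
  rcases aux_real_abs_one hreal habsx0 with h1 | h1
  · exact ⟨h1, fun j hj => by rw [hr j hj, hr1]⟩
  · -- exclude x 0 = -1 by the parity argument
    exfalso
    set R := Finset.univ.val.map x with hR
    have hmemR0 : x 0 ∈ R := Multiset.mem_map_of_mem x (Finset.mem_univ_val 0)
    set S := R.erase (x 0) with hS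
    have hconsR : R = x 0 ::ₘ S := (Multiset.cons_erase hmemR0).symm
    have hcount : Multiset.count (x 0) R = 1 := by
      rw [hR, Multiset.count_map]
      have hfil : Finset.filter (fun a => x 0 = x a) Finset.univ = {0} := by
        apply Finset.eq_singleton_iff_unique_mem.mpr
        refine ⟨by simp, fun j hj => ?_⟩
        by_contra hj0
        exact hsimple j hj0 ((Finset.mem_filter.mp hj).2).symm
      have h2 : (Finset.filter (fun a => x 0 = x a) Finset.univ).card = 1 := by
        rw [hfil]; rfl
      exact h2
    have hx0S : x 0 ∉ S := by
      rw [hS, ← Multiset.count_eq_zero, Multiset.count_erase_self, hcount]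
    have habsS : ∀ z ∈ S, ‖z‖ = 1 := by
      intro z hzS
      have hzR : z ∈ R := Multiset.mem_of_mem_erase hzS
      obtain ⟨i, _, rfl⟩ := Multiset.mem_map.mp hzR
      by_cases hi : i = 0
      · subst hi; exact absurd hzS hx0S
      · rw [hr i hi, hr1]
    have hSc : S.map (starRingEnd ℂ) = S := by
      rw [hS, Multiset.map_erase _ (starRingEnd ℂ).injective, hRc]
      congr 1
      exact Complex.conj_eq_iff_im.mpr hreal
    have hSprod : S.prod = -1 := by
      have hRprod : R.prod = 1 := by
        rw [hR, ← Finset.prod_eq_multiset_prod]; exact hprod1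
      rw [hconsR, Multiset.prod_cons, h1] at hRprod
      linear_combination -hRprod
    have hneg := aux_neg_one_mem S hSc habsS hSprod
    rw [← h1] at hneg
    exact hx0S hneg
end

section
/- Let n ≥ 2, let μ ∈ ℝ with μ ≠ 0, and let B be a real skew-symmetric 2n × 2n matrix. Let M be the (2n+1) × (2n+1) real block-diagonal matrix M = diag(μ, -(μ/(2n)) I_{2n} + B). Then there is no real number t ≠ 0 such that the matrix exponential exp(tM) is similar over ℝ to a matrix with integer entries; that is, there exist no t ≠ 0, no invertible real (2n+1) × (2n+1) matrix P, and no integer matrix N with P · exp(tM) · P⁻¹ = N. -/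
open Matrix

/-- The matrix `M = diag(μ, -(μ/(2n)) I_{2n} + B)` of `ad_{f₁}` for an almost abelian
Lie algebra with a left invariant LCK structure (unimodular case). -/
noncomputable def lckMatrix (n : ℕ) (μ : ℝ) (B : Matrix (Fin (2 * n)) (Fin (2 * n)) ℝ) :
    Matrix (Fin 1 ⊕ Fin (2 * n)) (Fin 1 ⊕ Fin (2 * n)) ℝ :=
  Matrix.fromBlocks (μ • (1 : Matrix (Fin 1) (Fin 1) ℝ)) 0 0
    ((-(μ / (2 * n))) • (1 : Matrix (Fin (2 * n)) (Fin (2 * n)) ℝ) + B)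

namespace NoLatticeAux

open Polynomial IntermediateField
open scoped ComplexOrder

noncomputable section

set_option maxHeartbeats 1000000 in
/-- The core number-theoretic lemma. -/
lemma core (n : ℕ) (hn : 2 ≤ n) (α ρ : ℝ) (hα : 1 < α) (hρ : 0 < ρ)
    (hρα : ρ ^ n * α = 1)
    (p : Polynomial ℤ) (hmon : p.Monic) (hdeg : p.natDegree = 2 * n + 1)
    (q : Polynomial ℂ)
    (hfact : p.map (Int.castRingHom ℂ) = (X - C (α : ℂ)) * q)
    (hroots : ∀ z ∈ q.roots, Complex.normSq z = ρ) : False := by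
  obtain ⟨k, rfl⟩ : ∃ k, n = k + 1 := ⟨n - 1, by omega⟩
  set n : ℕ := k + 1 with hnk
  have hk1 : 1 ≤ k := by omega
  -- basic facts
  have hα0 : (0:ℝ) < α := lt_trans one_pos hα
  have hρ1 : ρ < 1 := by
    by_contra h
    push_neg at h
    have h1 : (1:ℝ) ≤ ρ ^ n := one_le_pow₀ h
    nlinarith
  have hρα' : ((ρ:ℂ)) ^ n * ((α:ℂ)) = 1 := by exact_mod_cast hρα
  -- polynomial bookkeeping
  have hPmonic : (p.map (Int.castRingHom ℂ)).Monic := hmon.map _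
  have hPdeg : (p.map (Int.castRingHom ℂ)).natDegree = 2 * n + 1 := by
    rw [hmon.natDegree_map]; exact hdeg
  have hqmonic : q.Monic :=
    (monic_X_sub_C ((α:ℝ):ℂ)).of_mul_monic_left (hfact ▸ hPmonic)
  have hqne : q ≠ 0 := hqmonic.ne_zero
  have hqdeg : q.natDegree = 2 * n := by
    have h1 : (p.map (Int.castRingHom ℂ)).natDegree = 1 + q.natDegree := by
      rw [hfact, natDegree_mul (X_sub_C_ne_zero _) hqne, natDegree_X_sub_C]
    omega
  have hqsplits : q.Splits := IsAlgClosed.splits q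
  have hqprod : q = (q.roots.map fun a => X - C a).prod :=
    hqsplits.eq_prod_roots_of_monic hqmonic
  have hcard : Multiset.card q.roots = 2 * n := by
    have h1 := hqsplits.natDegree_eq_card_roots.symm
    rwa [hqdeg] at h1
  -- conjugation invariance
  have hconj : q.map (starRingEnd ℂ) = q := by
    have h1 : (p.map (Int.castRingHom ℂ)).map (starRingEnd ℂ) = p.map (Int.castRingHom ℂ) := by
      rw [Polynomial.map_map,
        Subsingleton.elim ((starRingEnd ℂ).comp (Int.castRingHom ℂ)) (Int.castRingHom ℂ)]
    have h2 := congrArg (Polynomial.map (starRingEnd ℂ)) hfact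
    rw [h1, hfact, Polynomial.map_mul, Polynomial.map_sub, map_X, map_C,
      Complex.conj_ofReal] at h2
    exact (mul_left_cancel₀ (X_sub_C_ne_zero ((α:ℝ):ℂ)) h2).symm
  have hrootsconj : q.roots.map (starRingEnd ℂ) = q.roots := by
    have h1 := hqsplits.roots_map_of_injective (starRingEnd ℂ).injective
    rw [hconj] at h1
    exact h1.symm
  -- constant coefficients
  have hq0prod : q.coeff 0 = (q.roots.map (fun a => -a)).prod := by
    rw [coeff_zero_eq_eval_zero]
    conv_lhs => rw [hqprod]
    rw [eval_multiset_prod, Multiset.map_map]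
    congr 1
    apply Multiset.map_congr rfl
    intro a _
    simp
  have hp0 : ((p.coeff 0 : ℤ) : ℂ) = -(α:ℂ) * q.coeff 0 := by
    have h1 := congrArg (fun f => Polynomial.coeff f 0) hfact
    simp only [coeff_map, eq_intCast, mul_coeff_zero, coeff_sub, coeff_X_zero, coeff_C_zero,
      zero_sub, neg_mul] at h1
    simpa using h1
  have hq0sqC : (q.coeff 0) ^ 2 = ((ρ:ℂ)) ^ (2 * n) := by
    have hq0conj : (starRingEnd ℂ) (q.coeff 0) = q.coeff 0 := by
      have := congrArg (fun f => Polynomial.coeff f 0) hconj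
      simpa [coeff_map] using this
    have hq0n : Complex.normSq (q.coeff 0) = ρ ^ (2 * n) := by
      rw [hq0prod, map_multiset_prod Complex.normSq, Multiset.map_map]
      have h3 : Multiset.map (⇑Complex.normSq ∘ fun a => -a) q.roots
          = Multiset.map (fun _ => ρ) q.roots :=
        Multiset.map_congr rfl (fun z hz => by
          simp only [Function.comp_apply, Complex.normSq_neg]
          exact hroots z hz)
      rw [h3, Multiset.map_const', Multiset.prod_replicate, hcard]
    calc (q.coeff 0)^2 = q.coeff 0 * (starRingEnd ℂ) (q.coeff 0) := by rw [hq0conj, sq]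
      _ = ((ρ ^ (2*n) : ℝ) : ℂ) := by rw [Complex.mul_conj, hq0n]
      _ = ((ρ:ℂ))^(2*n) := by push_cast; rfl
  have hq0val : q.coeff 0 = -((p.coeff 0 : ℤ):ℂ) * ((ρ:ℂ))^n := by
    linear_combination ((ρ:ℂ))^n * hp0 - (q.coeff 0) * hρα'
  have hp0sqC : ((p.coeff 0 : ℤ):ℂ)^2 = 1 := by
    calc ((p.coeff 0 : ℤ):ℂ)^2 = ((α:ℂ))^2 * (q.coeff 0)^2 := by rw [hp0]; ring
      _ = ((α:ℂ))^2 * ((ρ:ℂ))^(2*n) := by rw [hq0sqC]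
      _ = (((ρ:ℂ))^n * (α:ℂ))^2 := by ring
      _ = 1 := by rw [hρα']; exact one_pow 2
  have hp0sq : p.coeff 0 * p.coeff 0 = 1 := by
    have h2 : ((p.coeff 0 : ℤ):ℂ) * ((p.coeff 0 : ℤ):ℂ) = 1 := by rw [← sq]; exact hp0sqC
    exact_mod_cast h2
  have hp0ne : p.coeff 0 ≠ 0 := by
    intro h0
    rw [h0, mul_zero] at hp0sq
    exact zero_ne_one hp0sq
  have hlead : p.coeff (2*n+1) = 1 := by
    have h2 := hmon.coeff_natDegree
    rwa [hdeg] at h2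
  -- the reversed polynomial
  set R : Polynomial ℂ :=
    ∑ j ∈ Finset.range (2*n+2), C (((p.coeff j : ℤ):ℂ) * ((ρ:ℂ))^j) * X^(2*n+1-j) with hR
  have hReval : ∀ x : ℂ, x ≠ 0 →
      R.eval x = q.coeff 0 * (((ρ:ℂ)) - (α:ℂ) * x) * q.eval x := by
    intro x hx
    have h4 : x^(2*n) * q.eval ((ρ:ℂ)/x) = q.coeff 0 * q.eval x := by
      have hprodroots : q.eval ((ρ:ℂ)/x) = (q.roots.map (fun a => (ρ:ℂ)/x - a)).prod := by
        conv_lhs => rw [hqprod]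
        rw [eval_multiset_prod, Multiset.map_map]
        congr 1
        apply Multiset.map_congr rfl
        intro a _
        simp
      have hxpow2n : x^(2*n) = (q.roots.map (fun _ => x)).prod := by
        rw [Multiset.map_const', Multiset.prod_replicate, hcard]
      rw [hprodroots, hxpow2n, ← Multiset.prod_map_mul]
      have hfac : ∀ a ∈ q.roots, x * ((ρ:ℂ)/x - a) = (-a) * (x - (starRingEnd ℂ) a) := by
        intro a ha
        have haρ : a * (starRingEnd ℂ) a = ((ρ:ℝ):ℂ) := by rw [Complex.mul_conj, hroots a ha]
        have hxd : x * ((ρ:ℂ)/x) = (ρ:ℂ) := by field_simp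
        calc x * ((ρ:ℂ)/x - a) = x * ((ρ:ℂ)/x) - x*a := by ring
          _ = (ρ:ℂ) - x*a := by rw [hxd]
          _ = (-a) * (x - (starRingEnd ℂ) a) := by linear_combination -haρ
      rw [Multiset.map_congr rfl hfac, Multiset.prod_map_mul]
      congr 1
      · rw [← hq0prod]
      · have hmm : Multiset.map (fun a => x - (starRingEnd ℂ) a) q.roots
            = Multiset.map (fun b => x - b) (Multiset.map (⇑(starRingEnd ℂ)) q.roots) := by
          rw [Multiset.map_map]
          rfl
        rw [hmm, hrootsconj]
        conv_rhs => rw [hqprod]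
        rw [eval_multiset_prod, Multiset.map_map]
        congr 1
        apply Multiset.map_congr rfl
        intro a _
        simp
    have h1 : R.eval x
        = ∑ j ∈ Finset.range (2*n+2), ((p.coeff j :ℤ):ℂ) * ((ρ:ℂ))^j * x^(2*n+1-j) := by
      rw [hR, eval_finset_sum]
      refine Finset.sum_congr rfl (fun j _ => ?_)
      simp
    have h2 : (p.map (Int.castRingHom ℂ)).eval ((ρ:ℂ)/x)
        = ∑ j ∈ Finset.range (2*n+2), ((p.coeff j:ℤ):ℂ) * (((ρ:ℂ))/x)^j := by
      rw [eval_eq_sum_range, hPdeg]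
      refine Finset.sum_congr (by congr 1) (fun j _ => ?_)
      rw [coeff_map]
      simp
    calc R.eval x = ∑ j ∈ Finset.range (2*n+2), ((p.coeff j :ℤ):ℂ) * ((ρ:ℂ))^j * x^(2*n+1-j) := h1
      _ = ∑ j ∈ Finset.range (2*n+2), x^(2*n+1) * (((p.coeff j:ℤ):ℂ) * (((ρ:ℂ))/x)^j) := by
          refine Finset.sum_congr rfl (fun j hj => ?_)
          have hjle : j ≤ 2*n+1 := by
            have := Finset.mem_range.mp hj
            omega
          have hxpow : x ^ (2*n+1-j) * x ^ j = x ^ (2*n+1) := by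
            rw [← pow_add]
            congr 1
            omega
          rw [show x ^ (2*n+1) * (((p.coeff j:ℤ):ℂ) * (((ρ:ℂ))/x)^j)
              = ((p.coeff j:ℤ):ℂ) * ((ρ:ℂ))^j * (x^(2*n+1) / x^j) from by rw [div_pow]; ring,
            ← hxpow, mul_div_cancel_right₀ _ (pow_ne_zero j hx)]
      _ = x^(2*n+1) * ((p.map (Int.castRingHom ℂ)).eval ((ρ:ℂ)/x)) := by
          rw [h2, Finset.mul_sum]
      _ = x^(2*n+1) * ((((ρ:ℂ))/x - (α:ℂ)) * q.eval ((ρ:ℂ)/x)) := by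
          rw [hfact, eval_mul, eval_sub, eval_X, eval_C]
      _ = ((((ρ:ℂ))/x - (α:ℂ)) * x) * (x^(2*n) * q.eval ((ρ:ℂ)/x)) := by
          rw [pow_succ]
          ring
      _ = (((ρ:ℂ)) - (α:ℂ)*x) * (x^(2*n) * q.eval ((ρ:ℂ)/x)) := by
          have hd : (((ρ:ℂ))/x - (α:ℂ)) * x = ((ρ:ℂ)) - (α:ℂ)*x := by
            field_simp
          rw [hd]
      _ = (((ρ:ℂ)) - (α:ℂ)*x) * (q.coeff 0 * q.eval x) := by rw [h4]
      _ = q.coeff 0 * (((ρ:ℂ)) - (α:ℂ) * x) * q.eval x := by ring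
  have hR0 : R.eval 0 = ((ρ:ℂ))^(2*n+1) := by
    rw [hR, eval_finset_sum]
    rw [Finset.sum_eq_single (2*n+1)]
    · have he : 2*n+1-(2*n+1) = 0 := by omega
      rw [eval_mul, eval_pow, eval_X, eval_C, he, pow_zero, mul_one, hlead]
      simp
    · intro j hj hne
      have hjle : j ≤ 2*n+1 := by
        have := Finset.mem_range.mp hj
        omega
      rw [eval_mul, eval_pow, eval_X, eval_C, zero_pow (by omega : 2*n+1-j ≠ 0), mul_zero]
    · intro habs
      exfalso
      exact habs (Finset.mem_range.mpr (by omega))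
  have hident : (X - C ((α:ℝ):ℂ)) * R
      = C (q.coeff 0) * (C ((ρ:ℝ):ℂ) - C ((α:ℝ):ℂ) * X) * (p.map (Int.castRingHom ℂ)) := by
    apply Polynomial.funext
    intro x
    simp only [eval_mul, eval_sub, eval_X, eval_C]
    by_cases hx : x = 0
    · subst hx
      rw [hR0]
      have hp00 : (p.map (Int.castRingHom ℂ)).eval 0 = ((p.coeff 0 : ℤ):ℂ) := by
        rw [← coeff_zero_eq_eval_zero, coeff_map]
        simp
      rw [hp00]
      linear_combination (-((ρ:ℂ))^(n+1)) * hρα'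
        + (-((ρ:ℂ)) * ((p.coeff 0:ℤ):ℂ)) * hq0val + ((ρ:ℂ))^(n+1) * hp0sqC
    · rw [hReval x hx, hfact, eval_mul, eval_sub, eval_X, eval_C]
      ring
  -- coefficient extraction
  have hRc : ∀ m : ℕ, m ≤ 2*n+1 →
      R.coeff m = ((p.coeff (2*n+1-m) : ℤ):ℂ) * ((ρ:ℂ))^(2*n+1-m) := by
    intro m hm
    rw [hR, finset_sum_coeff]
    rw [Finset.sum_eq_single (2*n+1-m)]
    · rw [coeff_C_mul, coeff_X_pow, if_pos (by omega), mul_one]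
    · intro j hj hne
      have hjle : j ≤ 2*n+1 := by
        have := Finset.mem_range.mp hj
        omega
      rw [coeff_C_mul, coeff_X_pow, if_neg (by omega), mul_zero]
    · intro habs
      exfalso
      exact habs (Finset.mem_range.mpr (by omega))
  have hcoeffs : ∀ m : ℕ, R.coeff m - ((α:ℝ):ℂ) * R.coeff (m+1)
      = q.coeff 0 * (((ρ:ℝ):ℂ) * ((p.coeff (m+1) : ℤ):ℂ) - ((α:ℝ):ℂ) * ((p.coeff m : ℤ):ℂ)) := by
    intro m
    have h1 := congrArg (fun f => Polynomial.coeff f (m+1)) hident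
    have hL : ((X - C ((α:ℝ):ℂ)) * R).coeff (m+1) = R.coeff m - ((α:ℝ):ℂ) * R.coeff (m+1) := by
      rw [sub_mul, coeff_sub, coeff_X_mul, coeff_C_mul]
    have hRr : (C (q.coeff 0) * (C ((ρ:ℝ):ℂ) - C ((α:ℝ):ℂ) * X)
          * (p.map (Int.castRingHom ℂ))).coeff (m+1)
        = q.coeff 0 * (((ρ:ℝ):ℂ) * ((p.coeff (m+1):ℤ):ℂ) - ((α:ℝ):ℂ) * ((p.coeff m:ℤ):ℂ)) := by
      have hexp : C (q.coeff 0) * (C ((ρ:ℝ):ℂ) - C ((α:ℝ):ℂ) * X) * (p.map (Int.castRingHom ℂ))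
          = C (q.coeff 0 * ((ρ:ℝ):ℂ)) * (p.map (Int.castRingHom ℂ))
            - C (q.coeff 0 * ((α:ℝ):ℂ)) * (X * (p.map (Int.castRingHom ℂ))) := by
        rw [C_mul, C_mul]
        ring
      rw [hexp, coeff_sub, coeff_C_mul, coeff_C_mul, coeff_X_mul, coeff_map, coeff_map]
      simp only [eq_intCast]
      ring
    rw [hL, hRr] at h1
    exact h1
  have hC1 : ((ρ:ℂ))^(2*n+1) - ((p.coeff (2*n):ℤ):ℂ) * ((ρ:ℂ))^n
      + ((p.coeff 0:ℤ):ℂ) * ((p.coeff 1:ℤ):ℂ) * ((ρ:ℂ))^(n+1) - 1 = 0 := by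
    have h := hcoeffs 0
    rw [hRc 0 (by omega), hRc 1 (by omega)] at h
    have e1 : 2*n+1-1 = 2*n := by omega
    have e0 : 2*n+1-0 = 2*n+1 := by omega
    rw [e1, e0, hlead] at h
    push_cast at h
    linear_combination h + (((p.coeff (2*n):ℤ):ℂ) * ((ρ:ℂ))^n + ((p.coeff 0:ℤ):ℂ)^2) * hρα'
      + (((ρ:ℂ)) * ((p.coeff 1:ℤ):ℂ) - ((α:ℂ)) * ((p.coeff 0:ℤ):ℂ)) * hq0val + hp0sqC
  have hC2 : ((p.coeff (2*n):ℤ):ℂ) * ((ρ:ℂ))^(2*n) - ((p.coeff (2*k+1):ℤ):ℂ) * ((ρ:ℂ))^k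
      + ((p.coeff 0:ℤ):ℂ) * ((p.coeff 2:ℤ):ℂ) * ((ρ:ℂ))^(n+1)
      - ((p.coeff 0:ℤ):ℂ) * ((p.coeff 1:ℤ):ℂ) = 0 := by
    have h := hcoeffs 1
    rw [hRc 1 (by omega), hRc 2 (by omega)] at h
    have e1 : 2*n+1-1 = 2*n := by omega
    have e2 : 2*n+1-2 = 2*k+1 := by omega
    rw [e1, e2] at h
    linear_combination h + (((p.coeff (2*k+1):ℤ):ℂ) * ((ρ:ℂ))^k
        + ((p.coeff 0:ℤ):ℂ) * ((p.coeff 1:ℤ):ℂ)) * hρα'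
      + (((ρ:ℂ)) * ((p.coeff 2:ℤ):ℂ) - ((α:ℂ)) * ((p.coeff 1:ℤ):ℂ)) * hq0val
  -- p is the minimal polynomial of α
  have hevalmap : ∀ (g : Polynomial ℤ),
      Polynomial.eval ((α:ℂ)) (g.map (Int.castRingHom ℂ)) = Polynomial.aeval ((α:ℂ)) g := by
    intro g
    rw [Polynomial.aeval_def, Polynomial.eval_map,
      Subsingleton.elim (Int.castRingHom ℂ) (algebraMap ℤ ℂ)]
  have haeval : Polynomial.aeval ((α:ℂ)) p = 0 := by
    rw [← hevalmap p, hfact]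
    simp
  have hint : IsIntegral ℤ ((α:ℂ)) := ⟨p, hmon, by
    rw [← Polynomial.aeval_def]; exact haeval⟩
  obtain ⟨h, hph⟩ : minpoly ℤ ((α:ℂ)) ∣ p := minpoly.isIntegrallyClosed_dvd hint haeval
  have hmAmonic : (minpoly ℤ ((α:ℂ))).Monic := minpoly.monic hint
  have hhmonic : h.Monic := hmAmonic.of_mul_monic_left (hph ▸ hmon)
  have hqα : ¬ q.IsRoot ((α:ℂ)) := by
    intro hroot
    have hmem : ((α:ℂ)) ∈ q.roots := (mem_roots hqne).mpr hroot
    have h2 := hroots _ hmem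
    rw [Complex.normSq_ofReal] at h2
    nlinarith
  have hXA : (X - C ((α:ℝ):ℂ)) ∣ (minpoly ℤ ((α:ℂ))).map (Int.castRingHom ℂ) := by
    rw [dvd_iff_isRoot]
    show Polynomial.eval _ _ = 0
    rw [hevalmap, minpoly.aeval]
  have hhα : Polynomial.aeval ((α:ℂ)) h ≠ 0 := by
    intro h0
    obtain ⟨g, hg⟩ := minpoly.isIntegrallyClosed_dvd hint h0
    have hdd : (X - C ((α:ℝ):ℂ)) * (X - C ((α:ℝ):ℂ)) ∣ p.map (Int.castRingHom ℂ) := by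
      rw [hph, hg, Polynomial.map_mul, Polynomial.map_mul]
      exact mul_dvd_mul hXA (dvd_mul_of_dvd_left hXA _)
    rw [hfact] at hdd
    have hdq : (X - C ((α:ℝ):ℂ)) ∣ q := (mul_dvd_mul_iff_left (X_sub_C_ne_zero _)).mp hdd
    exact hqα (dvd_iff_isRoot.mp hdq)
  have hhroots : ∀ z ∈ (h.map (Int.castRingHom ℂ)).roots, Complex.normSq z = ρ := by
    intro z hz
    have hzr : (h.map (Int.castRingHom ℂ)).IsRoot z :=
      (mem_roots (hhmonic.map (Int.castRingHom ℂ)).ne_zero).mp hz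
    have hzr' : Polynomial.eval z (h.map (Int.castRingHom ℂ)) = 0 := hzr
    have hzP : Polynomial.eval z ((X - C ((α:ℝ):ℂ)) * q) = 0 := by
      rw [← hfact, hph, Polynomial.map_mul, eval_mul, hzr', mul_zero]
    rw [eval_mul] at hzP
    rcases mul_eq_zero.mp hzP with h1 | h2
    · exfalso
      have hzα : z = ((α:ℂ)) := by
        rw [eval_sub, eval_X, eval_C, sub_eq_zero] at h1
        exact h1
      apply hhα
      rw [← hevalmap h, ← hzα]
      exact hzr'
    · exact hroots z ((mem_roots hqne).mpr h2)
  have hhdeg0 : h.natDegree = 0 := by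
    by_contra hd
    have hsplith : (h.map (Int.castRingHom ℂ)).Splits :=
      IsAlgClosed.splits _
    have hcardh : Multiset.card (h.map (Int.castRingHom ℂ)).roots = h.natDegree := by
      have h1 := hsplith.natDegree_eq_card_roots
      rw [hhmonic.natDegree_map (Int.castRingHom ℂ)] at h1
      exact h1.symm
    have hnormh : Complex.normSq (((h.coeff 0 : ℤ):ℂ)) = ρ ^ h.natDegree := by
      have hc0 : ((h.coeff 0:ℤ):ℂ) = (h.map (Int.castRingHom ℂ)).eval 0 := by
        rw [← coeff_zero_eq_eval_zero, coeff_map]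
        simp
      rw [hc0]
      conv_lhs => rw [hsplith.eq_prod_roots_of_monic (hhmonic.map _)]
      rw [eval_multiset_prod, Multiset.map_map]
      have h3 : Multiset.map ((fun g => eval 0 g) ∘ fun a => X - C a)
            (h.map (Int.castRingHom ℂ)).roots
          = Multiset.map (fun a => -a) (h.map (Int.castRingHom ℂ)).roots :=
        Multiset.map_congr rfl (fun a _ => by simp)
      rw [h3, map_multiset_prod Complex.normSq, Multiset.map_map]
      have h5 : Multiset.map (⇑Complex.normSq ∘ fun a => -a) (h.map (Int.castRingHom ℂ)).roots
          = Multiset.map (fun _ => ρ) (h.map (Int.castRingHom ℂ)).roots :=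
        Multiset.map_congr rfl (fun z hz => by
          simp only [Function.comp_apply, Complex.normSq_neg]
          exact hhroots z hz)
      rw [h5, Multiset.map_const', Multiset.prod_replicate, hcardh]
    have hc0ne : h.coeff 0 ≠ 0 := by
      intro h0
      rw [h0] at hnormh
      simp only [Int.cast_zero, map_zero] at hnormh
      exact absurd hnormh.symm (pow_pos hρ _).ne'
    have hge1 : (1:ℝ) ≤ ((h.coeff 0 :ℤ):ℝ)^2 := by
      have h6 : (1:ℤ) ≤ (h.coeff 0)^2 := by
        nlinarith [Int.one_le_abs hc0ne, sq_abs (h.coeff 0), abs_nonneg (h.coeff 0)]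
      exact_mod_cast h6
    have hcast : Complex.normSq ((h.coeff 0:ℤ):ℂ) = ((h.coeff 0:ℤ):ℝ)^2 := by
      have h7 : ((h.coeff 0:ℤ):ℂ) = (((h.coeff 0:ℤ):ℝ):ℂ) := by push_cast; rfl
      rw [h7, Complex.normSq_ofReal, sq]
    have hlt1 : ρ ^ h.natDegree < 1 := pow_lt_one₀ hρ.le hρ1 hd
    rw [hcast] at hnormh
    rw [hnormh] at hge1
    linarith
  have hpmA : p = minpoly ℤ ((α:ℂ)) := by
    rw [hph, hhmonic.natDegree_eq_zero.mp hhdeg0, mul_one]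
  have hminQdeg : (minpoly ℚ ((α:ℂ))).natDegree = 2*n+1 := by
    rw [minpoly.isIntegrallyClosed_eq_field_fractions' ℚ hint, ← hpmA,
      hmon.natDegree_map, hdeg]
  have hdegρF : ∀ F : Polynomial ℚ, F.natDegree ≤ 2*n →
      Polynomial.aeval ((ρ:ℂ)) F = 0 → F = 0 := by
    intro F hFdeg hF0
    by_contra hF
    have hρint : IsIntegral ℚ ((ρ:ℂ)) := IsAlgebraic.isIntegral ⟨F, hF, hF0⟩
    haveI hfin : FiniteDimensional ℚ ℚ⟮((ρ:ℂ))⟯ :=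
      IntermediateField.adjoin.finiteDimensional hρint
    have hαval : ((α:ℂ)) = (((ρ:ℂ))^n)⁻¹ := eq_inv_of_mul_eq_one_left (by rw [mul_comm]; exact hρα')
    have hmem : ((α:ℂ)) ∈ ℚ⟮((ρ:ℂ))⟯ := by
      rw [hαval]
      exact inv_mem (pow_mem (IntermediateField.mem_adjoin_simple_self ℚ ((ρ:ℂ))) n)
    have hle : (minpoly ℚ ((α:ℂ))).natDegree ≤ Module.finrank ℚ ℚ⟮((ρ:ℂ))⟯ := by
      have h1 := minpoly.natDegree_le (A := ℚ) (⟨((α:ℂ)), hmem⟩ : ℚ⟮((ρ:ℂ))⟯)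
      have h2 : minpoly ℚ (algebraMap ℚ⟮((ρ:ℂ))⟯ ℂ ⟨((α:ℂ)), hmem⟩)
          = minpoly ℚ (⟨((α:ℂ)), hmem⟩ : ℚ⟮((ρ:ℂ))⟯) :=
        minpoly.algebraMap_eq (algebraMap ℚ⟮((ρ:ℂ))⟯ ℂ).injective _
      have h3 : algebraMap ℚ⟮((ρ:ℂ))⟯ ℂ ⟨((α:ℂ)), hmem⟩ = ((α:ℂ)) := rfl
      rw [h3] at h2
      rw [h2]
      exact h1
    have hfr : Module.finrank ℚ ℚ⟮((ρ:ℂ))⟯ = (minpoly ℚ ((ρ:ℂ))).natDegree :=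
      IntermediateField.adjoin.finrank hρint
    have hlt : (minpoly ℚ ((ρ:ℂ))).natDegree ≤ F.natDegree :=
      natDegree_le_natDegree (minpoly.degree_le_of_ne_zero ℚ _ hF hF0)
    rw [hminQdeg, hfr] at hle
    omega
  have hzero : ∀ a b c d : ℤ,
      (a:ℂ) * ((ρ:ℂ))^(2*n) + (b:ℂ) * ((ρ:ℂ))^(n+1) + (c:ℂ) * ((ρ:ℂ))^k + (d:ℂ) = 0 →
      a = 0 ∧ b = 0 ∧ c = 0 ∧ d = 0 := by
    intro a b c d habs
    set F : Polynomial ℚ := C (a:ℚ) * X^(2*n) + C (b:ℚ) * X^(n+1) + C (c:ℚ) * X^k + C (d:ℚ) * X^0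
      with hF
    have hFdeg : F.natDegree ≤ 2*n := by
      have b1 := natDegree_C_mul_X_pow_le (a:ℚ) (2*n)
      have b2 := natDegree_C_mul_X_pow_le (b:ℚ) (n+1)
      have b3 := natDegree_C_mul_X_pow_le (c:ℚ) k
      have b4 := natDegree_C_mul_X_pow_le (d:ℚ) 0
      refine (natDegree_add_le _ _).trans (max_le ((natDegree_add_le _ _).trans
        (max_le ((natDegree_add_le _ _).trans (max_le (b1.trans (by omega))
          (b2.trans (by omega)))) (b3.trans (by omega)))) (b4.trans (by omega)))
    have hFval : Polynomial.aeval ((ρ:ℂ)) F = 0 := by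
      rw [hF]
      simp only [map_add, _root_.map_mul, map_pow, aeval_C, aeval_X, eq_ratCast]
      push_cast
      simpa using habs
    have hF0 := hdegρF F hFdeg hFval
    rw [hF] at hF0
    refine ⟨?_, ?_, ?_, ?_⟩
    · have h1 := congrArg (fun G => Polynomial.coeff G (2*n)) hF0
      simp only [coeff_add, coeff_C_mul, coeff_X_pow,
        show ¬(2*n = n+1) by omega, show ¬(n+1 = 2*n) by omega, show ¬(2*n = k) by omega,
        show ¬(k = 2*n) by omega, show ¬(2*n = 0) by omega, show ¬(n+1 = k) by omega,
        show ¬(k = n+1) by omega, show ¬(n+1 = 0) by omega, show ¬(k = 0) by omega,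
        show ¬(0 = 2*n) by omega, show ¬(0 = n+1) by omega, show ¬(0 = k) by omega,
        eq_self_iff_true, if_true, if_false, mul_one, mul_zero, add_zero, zero_add,
        coeff_zero] at h1
      exact_mod_cast h1
    · have h1 := congrArg (fun G => Polynomial.coeff G (n+1)) hF0
      simp only [coeff_add, coeff_C_mul, coeff_X_pow,
        show ¬(2*n = n+1) by omega, show ¬(n+1 = 2*n) by omega, show ¬(2*n = k) by omega,
        show ¬(k = 2*n) by omega, show ¬(2*n = 0) by omega, show ¬(n+1 = k) by omega,
        show ¬(k = n+1) by omega, show ¬(n+1 = 0) by omega, show ¬(k = 0) by omega,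
        show ¬(0 = 2*n) by omega, show ¬(0 = n+1) by omega, show ¬(0 = k) by omega,
        eq_self_iff_true, if_true, if_false, mul_one, mul_zero, add_zero, zero_add,
        coeff_zero] at h1
      exact_mod_cast h1
    · have h1 := congrArg (fun G => Polynomial.coeff G k) hF0
      simp only [coeff_add, coeff_C_mul, coeff_X_pow,
        show ¬(2*n = n+1) by omega, show ¬(n+1 = 2*n) by omega, show ¬(2*n = k) by omega,
        show ¬(k = 2*n) by omega, show ¬(2*n = 0) by omega, show ¬(n+1 = k) by omega,
        show ¬(k = n+1) by omega, show ¬(n+1 = 0) by omega, show ¬(k = 0) by omega,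
        show ¬(0 = 2*n) by omega, show ¬(0 = n+1) by omega, show ¬(0 = k) by omega,
        eq_self_iff_true, if_true, if_false, mul_one, mul_zero, add_zero, zero_add,
        coeff_zero] at h1
      exact_mod_cast h1
    · have h1 := congrArg (fun G => Polynomial.coeff G 0) hF0
      simp only [coeff_add, coeff_C_mul, coeff_X_pow,
        show ¬(2*n = n+1) by omega, show ¬(n+1 = 2*n) by omega, show ¬(2*n = k) by omega,
        show ¬(k = 2*n) by omega, show ¬(2*n = 0) by omega, show ¬(n+1 = k) by omega,
        show ¬(k = n+1) by omega, show ¬(n+1 = 0) by omega, show ¬(k = 0) by omega,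
        show ¬(0 = 2*n) by omega, show ¬(0 = n+1) by omega, show ¬(0 = k) by omega,
        eq_self_iff_true, if_true, if_false, mul_one, mul_zero, add_zero, zero_add,
        coeff_zero] at h1
      exact_mod_cast h1
  obtain ⟨hA, hBz, hCz, hD⟩ := hzero (p.coeff (2*n)) (p.coeff 0 * p.coeff 2)
    (-(p.coeff (2*k+1))) (-(p.coeff 0 * p.coeff 1))
    (by push_cast; linear_combination hC2)
  have hp1 : p.coeff 1 = 0 := by
    have hD' : p.coeff 0 * p.coeff 1 = 0 := by omega
    rcases mul_eq_zero.mp hD' with h1 | h1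
    · exact absurd h1 hp0ne
    · exact h1
  have hfin : ((ρ:ℂ))^(2*n+1) = 1 := by
    have h9 := hC1
    rw [hA, hp1] at h9
    push_cast at h9
    linear_combination h9
  have hfinR : ρ^(2*n+1) = 1 := by exact_mod_cast hfin
  have hlt : ρ^(2*n+1) < 1 := pow_lt_one₀ hρ.le hρ1 (by omega)
  linarith

/-- fromBlocks diag as a ring hom out of a product of matrix rings. -/
def blockHom (n : ℕ) :
    Matrix (Fin 1) (Fin 1) ℝ × Matrix (Fin (2 * n)) (Fin (2 * n)) ℝ →+*
      Matrix (Fin 1 ⊕ Fin (2 * n)) (Fin 1 ⊕ Fin (2 * n)) ℝ where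
  toFun p := Matrix.fromBlocks p.1 0 0 p.2
  map_one' := Matrix.fromBlocks_one
  map_mul' p q := by
    show Matrix.fromBlocks (p.1 * q.1) 0 0 (p.2 * q.2) = _
    rw [Matrix.fromBlocks_multiply]
    simp
  map_zero' := Matrix.fromBlocks_zero
  map_add' p q := by
    show Matrix.fromBlocks (p.1 + q.1) 0 0 (p.2 + q.2) =
      Matrix.fromBlocks p.1 0 0 p.2 + Matrix.fromBlocks q.1 0 0 q.2
    rw [Matrix.fromBlocks_add]; simp

lemma continuous_blockHom (n : ℕ) : Continuous (blockHom n) := by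
  apply continuous_matrix
  rintro (i | i) (j | j)
  · exact (continuous_apply j).comp ((continuous_apply i).comp continuous_fst)
  · exact continuous_const
  · exact continuous_const
  · exact (continuous_apply j).comp ((continuous_apply i).comp continuous_snd)

lemma exp_fromBlocks (n : ℕ) (A : Matrix (Fin 1) (Fin 1) ℝ)
    (D : Matrix (Fin (2 * n)) (Fin (2 * n)) ℝ) :
    NormedSpace.exp (Matrix.fromBlocks A 0 0 D) =
      Matrix.fromBlocks (NormedSpace.exp A) 0 0 (NormedSpace.exp D) := by
  letI : SeminormedRing (Matrix (Fin 1) (Fin 1) ℝ) := Matrix.linftyOpSemiNormedRing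
  letI : NormedRing (Matrix (Fin 1) (Fin 1) ℝ) := Matrix.linftyOpNormedRing
  letI : NormedAlgebra ℝ (Matrix (Fin 1) (Fin 1) ℝ) := Matrix.linftyOpNormedAlgebra
  letI : SeminormedRing (Matrix (Fin (2 * n)) (Fin (2 * n)) ℝ) := Matrix.linftyOpSemiNormedRing
  letI : NormedRing (Matrix (Fin (2 * n)) (Fin (2 * n)) ℝ) := Matrix.linftyOpNormedRing
  letI : NormedAlgebra ℝ (Matrix (Fin (2 * n)) (Fin (2 * n)) ℝ) := Matrix.linftyOpNormedAlgebra
  letI : SeminormedRing (Matrix (Fin 1 ⊕ Fin (2 * n)) (Fin 1 ⊕ Fin (2 * n)) ℝ) :=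
    Matrix.linftyOpSemiNormedRing
  letI : NormedRing (Matrix (Fin 1 ⊕ Fin (2 * n)) (Fin 1 ⊕ Fin (2 * n)) ℝ) :=
    Matrix.linftyOpNormedRing
  letI : NormedAlgebra ℝ (Matrix (Fin 1 ⊕ Fin (2 * n)) (Fin 1 ⊕ Fin (2 * n)) ℝ) :=
    Matrix.linftyOpNormedAlgebra
  letI : NormedAlgebra ℚ (Matrix (Fin 1) (Fin 1) ℝ) := Matrix.linftyOpNormedAlgebra
  letI : NormedAlgebra ℚ (Matrix (Fin (2 * n)) (Fin (2 * n)) ℝ) := Matrix.linftyOpNormedAlgebra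
  letI : NormedAlgebra ℚ (Matrix (Fin 1 ⊕ Fin (2 * n)) (Fin 1 ⊕ Fin (2 * n)) ℝ) :=
    Matrix.linftyOpNormedAlgebra
  have h := NormedSpace.map_exp (blockHom n) (continuous_blockHom n) (A, D)
  have hexp : NormedSpace.exp (A, D) = (NormedSpace.exp A, NormedSpace.exp D) :=
    Prod.ext (Prod.fst_exp (A, D)) (Prod.snd_exp (A, D))
  exact h.symm.trans (congrArg (blockHom n) hexp)

lemma exp_smul_one (m : Type*) [Fintype m] [DecidableEq m] (c : ℝ) :
    NormedSpace.exp (c • (1 : Matrix m m ℝ)) = Real.exp c • (1 : Matrix m m ℝ) := by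
  letI : SeminormedRing (Matrix m m ℝ) := Matrix.linftyOpSemiNormedRing
  letI : NormedRing (Matrix m m ℝ) := Matrix.linftyOpNormedRing
  letI : NormedAlgebra ℝ (Matrix m m ℝ) := Matrix.linftyOpNormedAlgebra
  have h := NormedSpace.algebraMap_exp_comm (𝕂 := ℝ) (𝔸 := Matrix m m ℝ) c
  rw [Algebra.algebraMap_eq_smul_one, Algebra.algebraMap_eq_smul_one] at h
  rw [Real.exp_eq_exp_ℝ]; exact h.symm

lemma charpoly_conj {m : Type*} [Fintype m] [DecidableEq m] (P A : Matrix m m ℝ)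
    (hP : IsUnit P.det) : (P * A * P⁻¹).charpoly = A.charpoly := by
  have hPQ : P.map (C : ℝ → ℝ[X]) * P⁻¹.map (C : ℝ → ℝ[X]) = 1 := by
    rw [← Matrix.map_mul (f := (C : ℝ →+* ℝ[X])), Matrix.mul_nonsing_inv _ hP]
    exact Matrix.map_one _ (map_zero C) (map_one C)
  have key : charmatrix (P * A * P⁻¹) =
      P.map (C : ℝ → ℝ[X]) * charmatrix A * P⁻¹.map (C : ℝ → ℝ[X]) := by
    unfold charmatrix
    rw [mul_sub, sub_mul]
    congr 1
    · have : P.map (C : ℝ → ℝ[X]) * Matrix.scalar m (X : ℝ[X]) =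
        Matrix.scalar m (X : ℝ[X]) * P.map (C : ℝ → ℝ[X]) :=
        (Matrix.scalar_commute (X : ℝ[X]) (Commute.all X) (P.map C)).symm
      rw [this, mul_assoc, hPQ, mul_one]
    · simp only [RingHom.mapMatrix_apply]
      rw [← Matrix.map_mul (f := (C : ℝ →+* ℝ[X])), ← Matrix.map_mul (f := (C : ℝ →+* ℝ[X]))]
  unfold Matrix.charpoly
  rw [key, Matrix.det_mul, Matrix.det_mul]
  have h2 : (P.map (C : ℝ → ℝ[X])).det * (P⁻¹.map (C : ℝ → ℝ[X])).det = 1 := by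
    rw [← Matrix.det_mul, hPQ, Matrix.det_one]
  calc (P.map (C : ℝ → ℝ[X])).det * (charmatrix A).det * (P⁻¹.map (C : ℝ → ℝ[X])).det
      = (charmatrix A).det * ((P.map (C : ℝ → ℝ[X])).det * (P⁻¹.map (C : ℝ → ℝ[X])).det) := by
        ring
    _ = (charmatrix A).det := by rw [h2, mul_one]

lemma charpoly_smul_one_fin1 (c : ℝ) :
    (c • (1 : Matrix (Fin 1) (Fin 1) ℝ)).charpoly = X - C c := by
  unfold Matrix.charpoly
  rw [Matrix.det_fin_one]
  rw [charmatrix_apply_eq]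
  congr 1
  simp

lemma eval_charpoly_complex {m : Type*} [Fintype m] [DecidableEq m]
    (A : Matrix m m ℂ) (z : ℂ) :
    A.charpoly.eval z = (z • (1 : Matrix m m ℂ) - A).det := by
  unfold Matrix.charpoly
  rw [← Polynomial.coe_evalRingHom, RingHom.map_det]
  congr 1
  ext i j
  by_cases h : i = j
  · subst h
    simp [charmatrix_apply_eq, Matrix.one_apply]
  · simp [charmatrix_apply_ne _ _ _ h, Matrix.one_apply, h]


lemma exp_skew_orth (m : ℕ) (t : ℝ) (B : Matrix (Fin m) (Fin m) ℝ) (hB : Bᵀ = -B) :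
    (NormedSpace.exp (t • B))ᵀ * NormedSpace.exp (t • B) = 1 := by
  have h1 : (t • B)ᵀ = -(t • B) := by rw [Matrix.transpose_smul, hB, smul_neg]
  have h2 : (NormedSpace.exp (t • B))ᵀ = NormedSpace.exp (-(t • B)) := by
    rw [← Matrix.exp_transpose, h1]
  rw [h2, ← Matrix.exp_add_of_commute _ _ ((Commute.refl (t • B)).neg_left),
    neg_add_cancel, NormedSpace.exp_zero]

lemma exp_lck_decomp (n : ℕ) (μ t : ℝ) (B : Matrix (Fin (2 * n)) (Fin (2 * n)) ℝ) :
    NormedSpace.exp (t • lckMatrix n μ B) =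
      Matrix.fromBlocks (Real.exp (t * μ) • 1) 0 0
        (Real.exp (-(t * μ / (2 * (n : ℝ)))) • NormedSpace.exp (t • B)) := by
  have hM : t • lckMatrix n μ B = Matrix.fromBlocks ((t * μ) • 1) 0 0
      ((-(t * μ / (2 * (n : ℝ)))) • (1 : Matrix (Fin (2 * n)) (Fin (2 * n)) ℝ) + t • B) := by
    unfold lckMatrix
    rw [Matrix.fromBlocks_smul]
    simp only [smul_zero]
    have harg : t * -(μ / (2 * (n : ℝ))) = -(t * μ / (2 * (n : ℝ))) := by ring
    rw [smul_smul, smul_add, smul_smul, harg]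
  rw [hM, exp_fromBlocks, exp_smul_one]
  rw [Matrix.exp_add_of_commute _ _ ((Commute.one_left (t • B)).smul_left _),
    exp_smul_one, smul_mul_assoc, one_mul]

lemma key (n : ℕ) (hn : 2 ≤ n) (μ : ℝ) (B : Matrix (Fin (2 * n)) (Fin (2 * n)) ℝ)
    (hB : Bᵀ = -B) (t : ℝ) (ht : 0 < t * μ)
    (P : Matrix (Fin 1 ⊕ Fin (2 * n)) (Fin 1 ⊕ Fin (2 * n)) ℝ)
    (N : Matrix (Fin 1 ⊕ Fin (2 * n)) (Fin 1 ⊕ Fin (2 * n)) ℤ)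
    (hP : IsUnit P.det)
    (hPN : P * NormedSpace.exp (t • lckMatrix n μ B) * P⁻¹ = N.map (Int.cast : ℤ → ℝ)) :
    False := by
  have hn2 : (0:ℝ) < 2 * (n:ℝ) := by
    have : (0:ℝ) < (n:ℝ) := by exact_mod_cast Nat.lt_of_lt_of_le Nat.zero_lt_two hn
    linarith
  set a : ℝ := t * μ with ha
  set s : ℝ := a / (2 * (n : ℝ)) with hs
  set α : ℝ := Real.exp a with hα
  set r : ℝ := Real.exp (-s) with hr
  set U : Matrix (Fin (2 * n)) (Fin (2 * n)) ℝ := NormedSpace.exp (t • B) with hU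
  set E2 : Matrix (Fin (2 * n)) (Fin (2 * n)) ℝ := r • U with hE2
  have hUorth : Uᵀ * U = 1 := exp_skew_orth (2 * n) t B hB
  have hE : NormedSpace.exp (t • lckMatrix n μ B) =
      Matrix.fromBlocks (α • 1) 0 0 E2 := exp_lck_decomp n μ t B
  -- exponent arithmetic
  have hrpow : r ^ (2 * n) = Real.exp (-a) := by
    rw [hr, ← Real.exp_nat_mul]
    congr 1
    rw [hs]
    push_cast
    field_simp
  have hρα : (r ^ 2) ^ n * α = 1 := by
    rw [← pow_mul, mul_comm 2 n, mul_comm n 2, hrpow, hα, ← Real.exp_add, neg_add_cancel,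
      Real.exp_zero]
  -- characteristic polynomial over ℝ
  have hPN' : P * NormedSpace.exp (t • lckMatrix n μ B) * P⁻¹
      = N.map ⇑(Int.castRingHom ℝ) := hPN
  have hcp : N.charpoly.map (Int.castRingHom ℝ) = (X - C α) * E2.charpoly := by
    rw [← Matrix.charpoly_map N (Int.castRingHom ℝ), ← hPN', charpoly_conj _ _ hP, hE,
      Matrix.charpoly_fromBlocks_zero₁₂, charpoly_smul_one_fin1]
  -- over ℂ
  set q : Polynomial ℂ := E2.charpoly.map Complex.ofRealHom with hq
  have hfactC : N.charpoly.map (Int.castRingHom ℂ) = (X - C ((α : ℝ) : ℂ)) * q := by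
    have hcomp : (Int.castRingHom ℂ) = (Complex.ofRealHom).comp (Int.castRingHom ℝ) :=
      Subsingleton.elim _ _
    rw [hcomp, ← Polynomial.map_map, hcp, Polynomial.map_mul, Polynomial.map_sub, map_X, map_C]
    rfl
  -- roots of q have normSq r^2
  have hroots : ∀ z ∈ q.roots, Complex.normSq z = r ^ 2 := by
    intro z hz
    have hqcp : (E2.map ⇑Complex.ofRealHom).charpoly = q :=
      Matrix.charpoly_map E2 Complex.ofRealHom
    have hz0 : ((E2.map ⇑Complex.ofRealHom).charpoly).eval z = 0 := by
      rw [hqcp]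
      exact (Polynomial.mem_roots ((Matrix.charpoly_monic E2).map Complex.ofRealHom).ne_zero).mp
        hz
    rw [eval_charpoly_complex] at hz0
    obtain ⟨v, hv0, hv⟩ := (Matrix.exists_mulVec_eq_zero_iff).mpr hz0
    have hAv : (E2.map ⇑Complex.ofRealHom) *ᵥ v = z • v := by
      rw [Matrix.sub_mulVec, sub_eq_zero] at hv
      rw [← hv, Matrix.smul_mulVec, Matrix.one_mulVec]
    have hAc : E2.map ⇑Complex.ofRealHom = (r : ℂ) • (U.map ⇑Complex.ofRealHom) := by
      ext i j
      simp [hE2, Complex.ofReal_mul]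
    have hUc : (U.map ⇑Complex.ofRealHom)ᴴ * (U.map ⇑Complex.ofRealHom) = 1 := by
      have hH : (U.map ⇑Complex.ofRealHom)ᴴ = Uᵀ.map ⇑Complex.ofRealHom := by
        ext i j
        simp [Matrix.conjTranspose_apply]
      rw [hH, ← Matrix.map_mul (f := Complex.ofRealHom), hUorth]
      exact Matrix.map_one _ (map_zero _) (map_one _)
    set w := (U.map ⇑Complex.ofRealHom) *ᵥ v with hw
    have hnorm : star w ⬝ᵥ w = star v ⬝ᵥ v := by
      rw [hw, Matrix.star_mulVec, Matrix.dotProduct_mulVec, Matrix.vecMul_vecMul, hUc,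
        Matrix.vecMul_one]
    have hr0 : (r : ℂ) ≠ 0 := by
      simp only [Ne, Complex.ofReal_eq_zero]
      exact (Real.exp_pos _).ne'
    have hrw : (r : ℂ) • w = z • v := by
      rw [hw, ← Matrix.smul_mulVec, ← hAc, hAv]
    have hwv : w = ((z / r) : ℂ) • v := by
      have h1 := congrArg (fun x => ((r : ℂ))⁻¹ • x) hrw
      simp only [smul_smul, inv_mul_cancel₀ hr0, one_smul] at h1
      rw [h1, div_eq_inv_mul]
    have hS : star v ⬝ᵥ v ≠ 0 := by
      rw [Ne, dotProduct_star_self_eq_zero]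
      exact hv0
    rw [hwv, star_smul, smul_dotProduct, dotProduct_smul, smul_eq_mul,
      smul_eq_mul, ← mul_assoc] at hnorm
    have hc : star ((z / r : ℂ)) * (z / r : ℂ) = 1 :=
      mul_right_cancel₀ hS (by rw [one_mul]; exact hnorm)
    have hns : Complex.normSq ((z / r : ℂ)) = 1 := by
      have h' : ((z / r : ℂ)) * star ((z / r : ℂ)) = 1 := by rw [mul_comm]; exact hc
      rw [Complex.star_def, Complex.mul_conj] at h'
      exact_mod_cast h'
    have hz2 : z = ((z / r : ℂ)) * (r : ℂ) := by field_simp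
    have hns2 : Complex.normSq z = Complex.normSq ((z / r : ℂ)) * Complex.normSq ((r : ℝ) : ℂ) := by
      rw [← Complex.normSq_mul, ← hz2]
    rw [hns2, hns, one_mul, Complex.normSq_ofReal, sq]
  -- degree
  have hdeg : N.charpoly.natDegree = 2 * n + 1 := by
    rw [Matrix.charpoly_natDegree_eq_dim]
    simp [Fintype.card_sum]
    omega
  have hα1 : 1 < α := by
    rw [hα, ← Real.exp_zero]
    exact Real.exp_lt_exp.mpr ht
  exact core n hn α (r ^ 2) hα1 (by positivity) hρα N.charpoly (Matrix.charpoly_monic N)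
    hdeg q hfactC hroots

end

end NoLatticeAux

/-- **No lattices in dimension ≥ 6 (Theorem `6-lattices`).**
For `n ≥ 2`, `μ ≠ 0` and `B` real skew-symmetric, there is no `t ≠ 0` such that the
matrix exponential `exp(t M)`, with `M = diag(μ, -(μ/(2n)) I + B)`, is similar over `ℝ`
to an integer matrix. -/
theorem no_lattice_dim_ge_six
    (n : ℕ) (hn : 2 ≤ n) (μ : ℝ) (hμ : μ ≠ 0)
    (B : Matrix (Fin (2 * n)) (Fin (2 * n)) ℝ) (hB : Bᵀ = -B) :
    ¬ ∃ (t : ℝ), t ≠ 0 ∧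
      ∃ (P : Matrix (Fin 1 ⊕ Fin (2 * n)) (Fin 1 ⊕ Fin (2 * n)) ℝ)
        (N : Matrix (Fin 1 ⊕ Fin (2 * n)) (Fin 1 ⊕ Fin (2 * n)) ℤ),
        IsUnit P.det ∧
        P * NormedSpace.exp (t • lckMatrix n μ B) * P⁻¹ = N.map (Int.cast : ℤ → ℝ) := by
  rintro ⟨t, ht0, P, N, hP, hPN⟩
  have htμ : t * μ ≠ 0 := mul_ne_zero ht0 hμ
  rcases htμ.lt_or_gt with hlt | hgt
  · -- t * μ < 0 : pass to the inverse matrix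
    set E := NormedSpace.exp (t • lckMatrix n μ B) with hE
    have hdecomp := NoLatticeAux.exp_lck_decomp n μ t B
    have hUorth := NoLatticeAux.exp_skew_orth (2 * n) t B hB
    have hdetU : (NormedSpace.exp (t • B)).det ^ 2 = 1 := by
      have h := congrArg Matrix.det hUorth
      rwa [Matrix.det_mul, Matrix.det_transpose, ← sq, Matrix.det_one] at h
    have hn0 : (n : ℝ) ≠ 0 := by
      have : (0:ℝ) < (n:ℝ) := by exact_mod_cast Nat.lt_of_lt_of_le Nat.zero_lt_two hn
      exact this.ne'
    have h1 : Real.exp (-(t * μ / (2 * (n : ℝ)))) ^ (2 * n) = Real.exp (-(t * μ)) := by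
      rw [← Real.exp_nat_mul]
      congr 1
      push_cast
      field_simp
    have hdetE : E.det ^ 2 = 1 := by
      rw [hE, hdecomp, Matrix.det_fromBlocks_zero₁₂, Matrix.det_smul, Matrix.det_smul,
        Matrix.det_one, Fintype.card_fin, Fintype.card_fin, pow_one, mul_one, h1,
        ← mul_assoc, ← Real.exp_add, add_neg_cancel, Real.exp_zero, one_mul]
      exact hdetU
    have hNdet : (N.map (Int.cast : ℤ → ℝ)).det = ((N.det : ℝ)) :=
      ((Int.castRingHom ℝ).map_det N).symm
    have hdetN2 : N.det * N.det = 1 := by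
      have h := congrArg Matrix.det hPN
      rw [Matrix.det_mul, Matrix.det_mul, hNdet] at h
      have hPP : P.det * P⁻¹.det = 1 := by
        rw [← Matrix.det_mul, Matrix.mul_nonsing_inv _ hP, Matrix.det_one]
      have hcast : ((N.det : ℝ)) * ((N.det : ℝ)) = 1 := by
        rw [← h]
        calc P.det * E.det * P⁻¹.det * (P.det * E.det * P⁻¹.det)
            = E.det ^ 2 * ((P.det * P⁻¹.det) * (P.det * P⁻¹.det)) := by ring
          _ = 1 := by rw [hdetE, hPP, one_mul, mul_one]
      exact_mod_cast hcast
    set N' : Matrix (Fin 1 ⊕ Fin (2 * n)) (Fin 1 ⊕ Fin (2 * n)) ℤ := N.det • N.adjugate with hN'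
    have hinv : P * NormedSpace.exp ((-t) • lckMatrix n μ B) * P⁻¹
        = N'.map (Int.cast : ℤ → ℝ) := by
      have hexpneg : NormedSpace.exp ((-t) • lckMatrix n μ B) = E⁻¹ := by
        rw [neg_smul, Matrix.exp_neg, hE]
      rw [hexpneg]
      have hPEP : P * E⁻¹ * P⁻¹ = (P * E * P⁻¹)⁻¹ := by
        rw [Matrix.mul_inv_rev, Matrix.mul_inv_rev, Matrix.nonsing_inv_nonsing_inv P hP,
          mul_assoc]
      rw [hPEP, hPN, Matrix.inv_def]
      have hadj : (N.map (Int.cast : ℤ → ℝ)).adjugate = N.adjugate.map (Int.cast : ℤ → ℝ) :=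
        ((Int.castRingHom ℝ).map_adjugate N).symm
      rw [hNdet, hadj]
      have hdd : ((N.det : ℝ)) * ((N.det : ℝ)) = 1 := by exact_mod_cast hdetN2
      have hRinv : Ring.inverse ((N.det : ℝ)) = ((N.det : ℝ)) := by
        rw [Ring.inverse_eq_inv']
        exact inv_eq_of_mul_eq_one_right hdd
      rw [hRinv, hN']
      ext i j
      simp only [Matrix.map_apply, Matrix.smul_apply, smul_eq_mul]
      push_cast
      ring
    exact NoLatticeAux.key n hn μ B hB (-t) (by rw [neg_mul]; linarith) P N' hP hinv
  · exact NoLatticeAux.key n hn μ B hB t hgt P N hP hPN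
end

section
/- Let t ∈ ℝ and suppose the diagonal real 3 × 3 matrix diag(e^t, e^{-t/2}, e^{-t/2}) is similar over ℝ to a matrix with integer entries. Then t = 0. -/
open Matrix

/-- Core arithmetic lemma: if `x > 0` satisfies `a*x = x^3 + 2` and `B*x^2 = 4*x^3 + 2`
for integers `a`, `B`, then `x = 1`. -/
lemma g0_key (x : ℝ) (hx : 0 < x) (a B : ℤ)
    (hE1 : (a : ℝ) * x = x ^ 3 + 2) (hE2 : (B : ℝ) * x ^ 2 = 4 * x ^ 3 + 2) :
    x = 1 := by
  have hx0 : x ≠ 0 := ne_of_gt hx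
  set M : ℤ := 2 * B ^ 2 - 24 * a with hM
  set K : ℤ := a * B ^ 2 + 6 * B - 16 * a ^ 2 with hKdef
  have hlin : x * (K : ℝ) = (M : ℝ) := by
    push_cast [hM, hKdef]
    linear_combination ((B : ℝ) * x + 4 * a) * hE2 +
      ((B : ℝ) ^ 2 - 4 * B * x - 16 * a) * hE1
  by_cases hK : K = 0
  · -- degenerate case: forces a = 3, B = 6 (or a = 0, impossible)
    have hMR : (M : ℝ) = 0 := by rw [← hlin, hK]; push_cast; ring
    have hMz : M = 0 := by exact_mod_cast hMR
    have hB2 : B ^ 2 = 12 * a := by omega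
    have h3B : 3 * B = 2 * a ^ 2 := by nlinarith [hK, hB2]
    have ha27 : a * (a ^ 3 - 27) = 0 := by nlinarith [hB2, h3B]
    rcases mul_eq_zero.mp ha27 with ha0 | ha3
    · -- a = 0 : impossible since x > 0
      exfalso
      have : (0 : ℝ) * x = x ^ 3 + 2 := by rw [← hE1, ha0]; norm_num
      nlinarith [pow_pos hx 3]
    · have ha : a = 3 := by nlinarith [ha3]
      have h3 : (3 : ℝ) * x = x ^ 3 + 2 := by rw [← hE1, ha]; norm_num
      have hfac : (x - 1) ^ 2 * (x + 2) = 0 := by linear_combination -h3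
      rcases mul_eq_zero.mp hfac with hzz | hzz
      · have : x - 1 = 0 := by
          exact pow_eq_zero_iff (n := 2) (by norm_num) |>.mp hzz
        linarith
      · linarith
  · -- nondegenerate case: x is rational
    have hKR : (K : ℝ) ≠ 0 := Int.cast_ne_zero.2 hK
    set q0 : ℚ := (M : ℚ) / (K : ℚ) with hq0
    have hxq : x = (q0 : ℝ) := by
      rw [hq0]
      push_cast
      field_simp
      linarith [hlin]
    set m : ℤ := q0.num with hm
    set n : ℤ := (q0.den : ℤ) with hn
    have hnpos : 0 < n := by rw [hn]; exact_mod_cast q0.pos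
    have hn0 : (n : ℝ) ≠ 0 := by positivity
    have hxmn : x = (m : ℝ) / (n : ℝ) := by
      rw [hxq, Rat.cast_def]; norm_num [hm, hn]
    have hxn : x * (n : ℝ) = (m : ℝ) := by
      rw [hxmn]; field_simp
    -- integer version of hE1
    have hZ1 : a * m * n ^ 2 = m ^ 3 + 2 * n ^ 3 := by
      have h2 : (a : ℝ) * m * n ^ 2 = m ^ 3 + 2 * n ^ 3 := by
        linear_combination ((n : ℝ)) ^ 3 * hE1 +
          ((m : ℝ) ^ 2 + m * x * n + x ^ 2 * n ^ 2 - (a : ℝ) * n ^ 2) * hxn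
      exact_mod_cast h2
    -- n divides m^3, but gcd(m,n) = 1, so n = 1
    have hdvd : n ∣ m ^ 3 := ⟨a * m * n - 2 * n ^ 2, by linear_combination -hZ1⟩
    have hcop : IsCoprime n m := by
      rw [Int.isCoprime_iff_gcd_eq_one, hm, hn]
      simpa [Int.gcd] using q0.reduced.symm
    have hunit : IsUnit n := (hcop.pow_right (n := 3)).isUnit_of_dvd' dvd_rfl hdvd
    have hn1 : n = 1 := by
      rcases Int.isUnit_iff.mp hunit with hz | hz
      · exact hz
      · omega
    have hxm : x = (m : ℝ) := by rw [hxmn, hn1]; norm_num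
    have hmpos : 0 < m := by
      have : (0 : ℝ) < (m : ℝ) := by rw [← hxm]; exact hx
      exact_mod_cast this
    -- integer version of hE1 with n = 1
    have hZ1' : a * m = m ^ 3 + 2 := by
      have h5 := hZ1; rw [hn1] at h5; linarith [h5]
    have hmdvd : m ∣ 2 := ⟨a - m ^ 2, by linear_combination -hZ1'⟩
    have hmle : m ≤ 2 := Int.le_of_dvd (by norm_num) hmdvd
    interval_cases m
    · rw [hxm]; norm_num
    · -- m = 2 : contradicts integrality of B
      exfalso
      have hx2 : x = 2 := by rw [hxm]; norm_num
      have h34 : (B : ℝ) * 4 = 34 := by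
        have h6 := hE2
        rw [hx2] at h6
        norm_num at h6
        linarith [h6]
      have hB34 : (4 : ℤ) * B = 34 := by
        have h7 : (((4 * B : ℤ)) : ℝ) = ((34 : ℤ) : ℝ) := by push_cast; linarith [h34]
        exact_mod_cast h7
      omega

/-- **The group `G₀` admits no lattice.**
If the diagonal matrix `diag(e^t, e^{-t/2}, e^{-t/2})` is similar over `ℝ` to an integer
matrix, then `t = 0`. -/
theorem g0_no_lattice (t : ℝ)
    (h : ∃ (P : Matrix (Fin 3) (Fin 3) ℝ) (N : Matrix (Fin 3) (Fin 3) ℤ),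
      IsUnit P.det ∧
      P * Matrix.diagonal ![Real.exp t, Real.exp (-t / 2), Real.exp (-t / 2)] * P⁻¹
        = N.map (Int.cast : ℤ → ℝ)) :
    t = 0 := by
  obtain ⟨P, N, hP, h⟩ := h
  set v : Fin 3 → ℝ := ![Real.exp t, Real.exp (-t / 2), Real.exp (-t / 2)] with hv
  set D : Matrix (Fin 3) (Fin 3) ℝ := Matrix.diagonal v with hD
  -- trace of a conjugate
  have htr : ∀ A : Matrix (Fin 3) (Fin 3) ℝ, (P * A * P⁻¹).trace = A.trace := by
    intro A
    rw [Matrix.trace_mul_comm, ← Matrix.mul_assoc, Matrix.nonsing_inv_mul _ hP, Matrix.one_mul]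
  have htrmap : ∀ A : Matrix (Fin 3) (Fin 3) ℤ,
      (A.map (Int.cast : ℤ → ℝ)).trace = ((A.trace : ℤ) : ℝ) := by
    intro A
    simp [Matrix.trace, Matrix.diag, Matrix.map_apply]
  -- conjugate of the square
  have hmap2 : (N * N).map (Int.cast : ℤ → ℝ)
      = N.map (Int.cast : ℤ → ℝ) * N.map (Int.cast : ℤ → ℝ) := by
    simpa using Matrix.map_mul (L := N) (M := N) (f := Int.castRingHom ℝ)
  have hsq : P * (D * D) * P⁻¹ = (N * N).map (Int.cast : ℤ → ℝ) := by
    rw [hmap2, ← h]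
    have hPP : P⁻¹ * P = 1 := Matrix.nonsing_inv_mul _ hP
    calc P * (D * D) * P⁻¹ = P * D * (P⁻¹ * P) * D * P⁻¹ := by
          rw [hPP]; noncomm_ring
      _ = P * D * P⁻¹ * (P * D * P⁻¹) := by noncomm_ring
  set x : ℝ := Real.exp (t / 2) with hxdef
  have hxpos : 0 < x := Real.exp_pos _
  have hx0 : x ≠ 0 := ne_of_gt hxpos
  have hxinv : x * x⁻¹ = 1 := mul_inv_cancel₀ hx0
  have hexp_t : Real.exp t = x ^ 2 := by
    rw [hxdef, pow_two, ← Real.exp_add]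
    congr 1; ring
  have hexp_neg : Real.exp (-t / 2) = x⁻¹ := by
    rw [hxdef, ← Real.exp_neg]
    congr 1; ring
  -- trace of N
  have htr1 : ((N.trace : ℤ) : ℝ) = x ^ 2 + 2 * x⁻¹ := by
    rw [← htrmap N, ← h, htr, hD, Matrix.trace_diagonal, Fin.sum_univ_three, hv]
    simp [hexp_t, hexp_neg]
    ring
  -- trace of N²
  have htr2 : (((N * N).trace : ℤ) : ℝ) = x ^ 4 + 2 * (x⁻¹) ^ 2 := by
    rw [← htrmap (N * N), ← hsq, htr, hD, Matrix.diagonal_mul_diagonal,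
      Matrix.trace_diagonal, Fin.sum_univ_three, hv]
    simp [hexp_t, hexp_neg]
    ring
  set a : ℤ := N.trace with ha
  set B : ℤ := N.trace ^ 2 - (N * N).trace with hB
  have hE1 : (a : ℝ) * x = x ^ 3 + 2 := by
    rw [ha]
    linear_combination x * htr1 + 2 * hxinv
  have hE2 : (B : ℝ) * x ^ 2 = 4 * x ^ 3 + 2 := by
    rw [hB]
    push_cast
    linear_combination ((((N.trace : ℤ) : ℝ)) + x ^ 2 + 2 * x⁻¹) * x ^ 2 * htr1
      - x ^ 2 * htr2 + (4 * x ^ 3 + 2 * x * x⁻¹ + 2) * hxinv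
  have hx1 : x = 1 := g0_key x hxpos a B hE1 hE2
  have hexp01 : Real.exp (t / 2) = Real.exp 0 := by rw [Real.exp_zero, ← hxdef, hx1]
  have := Real.exp_injective hexp01
  linarith
end

section
/- Let m, n ∈ ℤ and let f(x) = x³ - m x² + n x - 1. Suppose f has a real root c with c ≠ 1 and two non-real complex conjugate roots α and α̅. Then c > 0, and writing α = r e^{iφ} with r > 0 and φ ∈ (0, π), the real 3 × 3 matrix diag(r⁻², R) — where R is the 2 × 2 block with rows (r cos φ, -r sin φ) and (r sin φ, r cos φ) — is similar over ℝ to the companion matrix with rows (0, 0, 1), (1, 0, -n), (0, 1, m), which is an integer matrix of determinant 1. -/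
open Polynomial Matrix

set_option maxHeartbeats 1000000 in
/-- **Existence of lattices for the `4`-dimensional LCK Lie groups (Theorem `4-lattice`,
converse direction).**
Let `f(x) = x³ - m x² + n x - 1` with `m, n ∈ ℤ`, and suppose `f` has a real root `c ≠ 1`
and two non-real complex conjugate roots `α, α̅`.  Then `c > 0` and, writing
`α = r e^{iφ}` with `r > 0`, `φ ∈ (0, π)`, the matrix `diag(r⁻², R(r,φ))` is similar over
`ℝ` to the companion matrix `!![0,0,1; 1,0,-n; 0,1,m]`, an integer matrix of
determinant `1`. -/
theorem four_dim_lck_lattice (m n : ℤ) (c : ℝ) (α : ℂ)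
    (hc : c ≠ 1) (hα : α.im ≠ 0)
    (hfact : (X ^ 3 - C (m : ℂ) * X ^ 2 + C (n : ℂ) * X - 1 : Polynomial ℂ)
      = (X - C (c : ℂ)) * (X - C α) * (X - C ((starRingEnd ℂ) α))) :
    0 < c ∧
    ∀ (r φ : ℝ), 0 < r → φ ∈ Set.Ioo 0 Real.pi →
      (α = (r : ℂ) * Complex.exp (φ * Complex.I) ∨
        (starRingEnd ℂ) α = (r : ℂ) * Complex.exp (φ * Complex.I)) →
      ((!![(0 : ℤ), 0, 1; 1, 0, -n; 0, 1, m]).det = 1 ∧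
        ∃ P : Matrix (Fin 3) (Fin 3) ℝ, IsUnit P.det ∧
          P * !![r⁻¹ ^ 2, 0, 0;
                 0, r * Real.cos φ, -(r * Real.sin φ);
                 0, r * Real.sin φ, r * Real.cos φ] * P⁻¹
            = (!![(0 : ℤ), 0, 1; 1, 0, -n; 0, 1, m]).map (Int.cast : ℤ → ℝ)) := by
  have heval : ∀ x : ℂ, x^3 - m*x^2 + n*x - 1 = (x - c)*(x - α)*(x - (starRingEnd ℂ) α) := by
    intro x
    have := congrArg (Polynomial.eval x) hfact
    simpa using this
  have hprod : (c : ℂ) * (α * (starRingEnd ℂ) α) = 1 := by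
    have h0 := heval 0
    linear_combination h0
  have hns : c * Complex.normSq α = 1 := by
    rw [Complex.mul_conj] at hprod
    exact_mod_cast hprod
  have hα0 : α ≠ 0 := fun h => hα (by simp [h])
  have hnspos : 0 < Complex.normSq α := Complex.normSq_pos.2 hα0
  have hcpos : 0 < c := by nlinarith
  refine ⟨hcpos, ?_⟩
  intro r φ hr hφ hcase
  have hsin : 0 < Real.sin φ := Real.sin_pos_of_pos_of_lt_pi hφ.1 hφ.2
  obtain ⟨co, hco⟩ : ∃ x : ℝ, x = r * Real.cos φ := ⟨_, rfl⟩
  obtain ⟨si, hsi⟩ : ∃ x : ℝ, x = r * Real.sin φ := ⟨_, rfl⟩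
  have hsipos : 0 < si := hsi ▸ mul_pos hr hsin
  have hβeq : (r : ℂ) * Complex.exp (φ * Complex.I) = (co : ℂ) + (si : ℂ) * Complex.I := by
    rw [hco, hsi, Complex.exp_mul_I]
    push_cast
    ring
  have hns2 : Complex.normSq α = r^2 := by
    have h1 : Complex.normSq ((co : ℂ) + (si : ℂ) * Complex.I) = r ^ 2 := by
      rw [Complex.normSq_add_mul_I]
      have := Real.sin_sq_add_cos_sq φ
      rw [hco, hsi]; ring_nf; nlinarith
    rcases hcase with h | h
    · rw [h, hβeq]; exact h1
    · rw [← Complex.normSq_conj, h, hβeq]; exact h1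
  have hcval : c = r⁻¹ ^ 2 := by
    have hr2 : (0:ℝ) < r^2 := by positivity
    rw [hns2] at hns
    field_simp
    linarith [hns]
  have hβroot : ((co:ℂ) + si*Complex.I)^3 - m*((co:ℂ)+si*Complex.I)^2 + n*((co:ℂ)+si*Complex.I) - 1 = 0 := by
    rw [← hβeq]
    rcases hcase with h | h
    · rw [heval ((r : ℂ) * Complex.exp (φ * Complex.I)), ← h]; ring
    · rw [heval ((r : ℂ) * Complex.exp (φ * Complex.I)), ← h]; ring
  have hre := congrArg Complex.re hβroot
  have him := congrArg Complex.im hβroot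
  simp [pow_succ, Complex.mul_re, Complex.mul_im] at hre him
  have hre2 : co^3 - 3*co*si^2 - (m:ℝ)*(co^2 - si^2) + n*co - 1 = 0 := by nlinarith [hre, him]
  have him2 : 3*co^2*si - si^3 - (m:ℝ)*(2*co*si) + n*si = 0 := by nlinarith [hre, him]
  have hcroot : c^3 - m*c^2 + n*c - 1 = 0 := by
    have h2 : ((c:ℂ))^3 - m*(c:ℂ)^2 + n*(c:ℂ) - 1 = 0 := by rw [heval (c:ℂ)]; ring
    exact_mod_cast h2
  refine ⟨by simp [Matrix.det_fin_three], ?_⟩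
  set A : Matrix (Fin 3) (Fin 3) ℝ := !![c, 0, 0; 0, co, -si; 0, si, co] with hA
  set Q : Matrix (Fin 3) (Fin 3) ℝ :=
    !![1, c, c^2; 1, co, co^2 - si^2; 0, si, 2*co*si] with hQ
  set Cr : Matrix (Fin 3) (Fin 3) ℝ := !![0, 0, 1; 1, 0, -(n:ℝ); 0, 1, (m:ℝ)] with hCr
  have hAmat : !![r⁻¹ ^ 2, 0, 0;
      0, r * Real.cos φ, -(r * Real.sin φ);
      0, r * Real.sin φ, r * Real.cos φ] = A := by
    rw [hA, hcval, hco, hsi]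
  have hdetQ : Q.det = si * ((c - co)^2 + si^2) := by
    rw [hQ]; rw [Matrix.det_fin_three]; simp; ring
  have hQunit : IsUnit Q.det := by
    rw [hdetQ, isUnit_iff_ne_zero]
    positivity
  have hAQ : A * Q = Q * Cr := by
    rw [hA, hQ, hCr, Matrix.mul_fin_three, Matrix.mul_fin_three]
    ext i j
    fin_cases i <;> fin_cases j <;> simp <;>
      first
        | ring1
        | linear_combination hcroot
        | linear_combination -hcroot
        | linear_combination hre2
        | linear_combination -hre2
        | linear_combination him2
        | linear_combination -him2
  refine ⟨Q⁻¹, Matrix.isUnit_nonsing_inv_det Q hQunit, ?_⟩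
  rw [hAmat, Matrix.nonsing_inv_nonsing_inv Q hQunit, Matrix.mul_assoc, hAQ,
    ← Matrix.mul_assoc, Matrix.nonsing_inv_mul Q hQunit, Matrix.one_mul, hCr]
  ext i j
  fin_cases i <;> fin_cases j <;> simp
end

section
/- Let 𝔤 be a finite-dimensional real Lie algebra equipped with a Hermitian structure (J, ⟨·,·⟩), and let 𝔲 ⊆ 𝔤 be an abelian ideal of codimension one. Set 𝔞 = 𝔲 ∩ J(𝔲). Then 𝔞 is a J-invariant abelian ideal of 𝔤 of codimension two, and there exist orthonormal vectors f₁, f₂ spanning the orthogonal complement 𝔞^⊥, with f₂ ∈ 𝔲 and f₁ = -J f₂, a vector v₀ ∈ 𝔞 and μ ∈ ℝ such that: [f₁, f₂] = μ f₂ + v₀; [f₂, x] = 0 for all x ∈ 𝔞; and [f₁, Jx] = J[f₁, x] for all x ∈ 𝔞 (i.e. ad_{f₁}|_𝔞 commutes with J|_𝔞). -/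
open scoped RealInnerProductSpace

open Module Submodule

/-- **Lemma (Hermitian structures on almost abelian Lie algebras).**
Let `𝔤` be a finite-dimensional real Lie algebra (given by a bilinear bracket `bra`
satisfying antisymmetry and the Jacobi identity) endowed with a Hermitian structure
`(J, ⟨·,·⟩)`, and let `𝔲` be an abelian ideal of codimension one.  Then
`𝔞 = 𝔲 ∩ J(𝔲)` is a `J`-invariant abelian ideal of codimension two, and there exist
orthonormal vectors `f₁, f₂` spanning `𝔞^⊥` with `f₂ ∈ 𝔲`, `f₁ = -J f₂`, a vector
`v₀ ∈ 𝔞` and `μ ∈ ℝ` such that `[f₁, f₂] = μ f₂ + v₀`, `ad_{f₂}|_𝔞 = 0`, and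
`ad_{f₁}|_𝔞` commutes with `J|_𝔞`. -/
theorem hermitian_almost_abelian
    {g : Type*} [NormedAddCommGroup g] [InnerProductSpace ℝ g] [FiniteDimensional ℝ g]
    (bra : g →ₗ[ℝ] g →ₗ[ℝ] g)
    (hanti : ∀ x y : g, bra x y = - bra y x)
    (hjac : ∀ x y z : g, bra x (bra y z) + bra y (bra z x) + bra z (bra x y) = 0)
    (J : g →ₗ[ℝ] g)
    (hJ2 : ∀ x : g, J (J x) = -x)
    (hJmetric : ∀ x y : g, ⟪J x, J y⟫ = ⟪x, y⟫)
    (hJint : ∀ x y : g, bra (J x) (J y) - bra x y - J (bra (J x) y + bra x (J y)) = 0)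
    (𝔲 : Submodule ℝ g)
    (hideal : ∀ x : g, ∀ y ∈ 𝔲, bra x y ∈ 𝔲)
    (habelian : ∀ x ∈ 𝔲, ∀ y ∈ 𝔲, bra x y = 0)
    (hcodim : Module.finrank ℝ 𝔲 + 1 = Module.finrank ℝ g) :
    (∀ x ∈ 𝔲 ⊓ 𝔲.map J, J x ∈ 𝔲 ⊓ 𝔲.map J) ∧
    (∀ x : g, ∀ y ∈ 𝔲 ⊓ 𝔲.map J, bra x y ∈ 𝔲 ⊓ 𝔲.map J) ∧
    (∀ x ∈ 𝔲 ⊓ 𝔲.map J, ∀ y ∈ 𝔲 ⊓ 𝔲.map J, bra x y = 0) ∧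
    Module.finrank ℝ ↥(𝔲 ⊓ 𝔲.map J) + 2 = Module.finrank ℝ g ∧
    ∃ f₁ f₂ : g, ‖f₁‖ = 1 ∧ ‖f₂‖ = 1 ∧ ⟪f₁, f₂⟫ = 0 ∧
      f₂ ∈ 𝔲 ∧ f₁ = - J f₂ ∧
      Submodule.span ℝ {f₁, f₂} = (𝔲 ⊓ 𝔲.map J)ᗮ ∧
      ∃ v₀ ∈ 𝔲 ⊓ 𝔲.map J, ∃ μ : ℝ,
        bra f₁ f₂ = μ • f₂ + v₀ ∧
        (∀ x ∈ 𝔲 ⊓ 𝔲.map J, bra f₂ x = 0) ∧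
        (∀ x ∈ 𝔲 ⊓ 𝔲.map J, bra f₁ (J x) = J (bra f₁ x)) := by
  classical
  set 𝔞 := 𝔲 ⊓ 𝔲.map J with h𝔞def
  clear_value 𝔞
  -- J is injective
  have hJinj : Function.Injective J := by
    intro a b h
    have h2 := congrArg J h
    rw [hJ2, hJ2] at h2
    exact neg_injective h2
  -- membership in 𝔞
  have hmem : ∀ x : g, x ∈ 𝔞 ↔ x ∈ 𝔲 ∧ J x ∈ 𝔲 := by
    intro x
    rw [h𝔞def, Submodule.mem_inf]
    constructor
    · rintro ⟨hx, h2⟩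
      rw [Submodule.mem_map] at h2
      obtain ⟨u, hu, rfl⟩ := h2
      exact ⟨hx, by rw [hJ2]; exact neg_mem hu⟩
    · rintro ⟨hx, hJx⟩
      refine ⟨hx, Submodule.mem_map.mpr ⟨-(J x), neg_mem hJx, ?_⟩⟩
      rw [map_neg, hJ2, neg_neg]
  -- a vector outside 𝔲
  have hne_top : 𝔲 ≠ ⊤ := by
    intro h
    rw [h, finrank_top] at hcodim
    omega
  obtain ⟨ξ, -, hξ⟩ := SetLike.exists_of_lt (lt_top_iff_ne_top.mpr hne_top : 𝔲 < ⊤)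
  have hsupξ : 𝔲 ⊔ span ℝ {ξ} = ⊤ := by
    apply Submodule.eq_top_of_finrank_eq
    have hlt : 𝔲 < 𝔲 ⊔ span ℝ {ξ} := by
      refine lt_of_le_of_ne le_sup_left fun h => hξ ?_
      rw [h]
      exact Submodule.mem_sup_right (Submodule.mem_span_singleton_self ξ)
    have h1 := Submodule.finrank_lt_finrank_of_lt hlt
    have h2 := Submodule.finrank_le (𝔲 ⊔ span ℝ {ξ})
    omega
  have hdec : ∀ x : g, ∃ u ∈ 𝔲, ∃ t : ℝ, x = u + t • ξ := by
    intro x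
    have hx : x ∈ 𝔲 ⊔ span ℝ {ξ} := hsupξ ▸ Submodule.mem_top
    rw [Submodule.mem_sup] at hx
    obtain ⟨u, hu, z, hz, h⟩ := hx
    rw [Submodule.mem_span_singleton] at hz
    obtain ⟨t, rfl⟩ := hz
    exact ⟨u, hu, t, h.symm⟩
  obtain ⟨u₀, hu₀, c, hJξ⟩ := hdec (J ξ)
  have hbJξ : ∀ z ∈ 𝔲, bra (J ξ) z = c • bra ξ z := by
    intro z hz
    rw [hJξ, map_add, map_smul, LinearMap.add_apply, LinearMap.smul_apply,
      habelian u₀ hu₀ z hz, zero_add]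
  -- the key commutation identity
  have hkeyξ : ∀ y ∈ 𝔲, J y ∈ 𝔲 → J (bra ξ y) = bra ξ (J y) := by
    intro y hy hJy
    have hI := hJint ξ y
    rw [hbJξ (J y) hJy, hbJξ y hy, map_add, map_smul] at hI
    have hII := congrArg J hI
    rw [map_zero, map_sub, map_sub, map_add, map_smul, map_smul, hJ2, hJ2] at hII
    have hz : (1 + c ^ 2) • (bra ξ (J y) - J (bra ξ y)) = 0 := by
      linear_combination (norm := module) hII + c • hI
    have h0 : (1 : ℝ) + c ^ 2 ≠ 0 := by positivity
    have := (smul_eq_zero.mp hz).resolve_left h0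
    rw [sub_eq_zero] at this
    exact this.symm
  have hcomm : ∀ x : g, ∀ y ∈ 𝔲, J y ∈ 𝔲 → J (bra x y) = bra x (J y) := by
    intro x y hy hJy
    obtain ⟨u, hu, t, rfl⟩ := hdec x
    simp only [map_add, map_smul, LinearMap.add_apply, LinearMap.smul_apply,
      habelian u hu y hy, habelian u hu (J y) hJy, zero_add, smul_zero,
      hkeyξ y hy hJy]
  -- part 1 : J-invariance
  have hpart1 : ∀ x ∈ 𝔞, J x ∈ 𝔞 := by
    intro x hx
    rw [hmem] at hx ⊢
    exact ⟨hx.2, by rw [hJ2]; exact neg_mem hx.1⟩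
  -- part 2 : ideal
  have hpart2 : ∀ x : g, ∀ y ∈ 𝔞, bra x y ∈ 𝔞 := by
    intro x y hy
    rw [hmem] at hy ⊢
    refine ⟨hideal x y hy.1, ?_⟩
    rw [hcomm x y hy.1 hy.2]
    exact hideal x (J y) hy.2
  -- part 3 : abelian
  have hpart3 : ∀ x ∈ 𝔞, ∀ y ∈ 𝔞, bra x y = 0 := by
    intro x hx y hy
    exact habelian x ((hmem x).mp hx).1 y ((hmem y).mp hy).1
  -- finrank of map J
  have hmapfr : finrank ℝ (𝔲.map J) = finrank ℝ 𝔲 :=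
    ((Submodule.equivMapOfInjective J hJinj 𝔲).finrank_eq).symm
  -- 𝔲.map J is not contained in 𝔲
  have hnle : ¬ 𝔲.map J ≤ 𝔲 := by
    intro hle
    have heq : 𝔲.map J = 𝔲 := Submodule.eq_of_le_of_finrank_le hle hmapfr.ge
    have h1 : J u₀ ∈ 𝔲 := heq ▸ Submodule.mem_map_of_mem hu₀
    have h2 : ((1 : ℝ) + c ^ 2) • ξ = -(J u₀ + c • u₀) := by
      have h3 := hJ2 ξ
      rw [hJξ, map_add, map_smul, hJξ] at h3
      linear_combination (norm := module) h3
    have hmem' : ((1 : ℝ) + c ^ 2) • ξ ∈ 𝔲 :=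
      h2 ▸ neg_mem (add_mem h1 (Submodule.smul_mem _ _ hu₀))
    have h0 : (1 : ℝ) + c ^ 2 ≠ 0 := by positivity
    have h4 := 𝔲.smul_mem ((1 + c ^ 2)⁻¹) hmem'
    rw [smul_smul, inv_mul_cancel₀ h0, one_smul] at h4
    exact hξ h4
  obtain ⟨w1, hw1, hw1n⟩ := SetLike.not_le_iff_exists.mp hnle
  have hsupJ : 𝔲 ⊔ 𝔲.map J = ⊤ := by
    apply Submodule.eq_top_of_finrank_eq
    have hlt : 𝔲 < 𝔲 ⊔ 𝔲.map J :=
      lt_of_le_of_ne le_sup_left fun h => hw1n (h ▸ Submodule.mem_sup_right hw1)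
    have h1 := Submodule.finrank_lt_finrank_of_lt hlt
    have h2 := Submodule.finrank_le (𝔲 ⊔ 𝔲.map J)
    omega
  -- part 4 : finrank
  have hpart4 : finrank ℝ ↥𝔞 + 2 = finrank ℝ g := by
    have h := Submodule.finrank_sup_add_finrank_inf_eq 𝔲 (𝔲.map J)
    rw [hsupJ, finrank_top, ← h𝔞def] at h
    omega
  refine ⟨hpart1, hpart2, hpart3, hpart4, ?_⟩
  -- dimension of the orthogonal complement
  have hfrop : finrank ℝ ↥𝔞ᗮ = 2 := by
    have h := Submodule.finrank_add_finrank_orthogonal 𝔞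
    omega
  -- find a nonzero vector in 𝔲 ⊓ 𝔞ᗮ
  have hpos : 0 < finrank ℝ ↥(𝔲 ⊓ 𝔞ᗮ) := by
    have h := Submodule.finrank_sup_add_finrank_inf_eq 𝔲 𝔞ᗮ
    have hle := Submodule.finrank_le (𝔲 ⊔ 𝔞ᗮ)
    omega
  have hnebot : 𝔲 ⊓ 𝔞ᗮ ≠ ⊥ := by
    intro h
    rw [h, finrank_bot] at hpos
    omega
  obtain ⟨w, hwmem, hwne⟩ := Submodule.ne_bot_iff _ |>.mp hnebot
  rw [Submodule.mem_inf] at hwmem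
  set f₂ : g := ‖w‖⁻¹ • w with hf₂def
  have hf₂norm : ‖f₂‖ = 1 := norm_smul_inv_norm hwne
  have hf₂𝔲 : f₂ ∈ 𝔲 := Submodule.smul_mem _ _ hwmem.1
  have hf₂op : f₂ ∈ 𝔞ᗮ := Submodule.smul_mem _ _ hwmem.2
  set f₁ : g := -J f₂ with hf₁def
  have hnormJ : ∀ x : g, ‖J x‖ = ‖x‖ := by
    intro x
    have h := hJmetric x x
    rw [real_inner_self_eq_norm_mul_norm, real_inner_self_eq_norm_mul_norm] at h
    rcases mul_self_eq_mul_self_iff.mp h with h' | h'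
    · exact h'
    · have h1 := norm_nonneg (J x)
      have h2 := norm_nonneg x
      linarith only [h1, h2, h']
  have hf₁norm : ‖f₁‖ = 1 := by rw [hf₁def, norm_neg, hnormJ, hf₂norm]
  have hskew : ∀ x y : g, ⟪J x, y⟫ = -⟪x, J y⟫ := by
    intro x y
    have h := hJmetric x (J y)
    rw [hJ2, inner_neg_right] at h
    linarith only [h]
  have hJf₂f₂ : ⟪J f₂, f₂⟫ = 0 := by
    have h := hskew f₂ f₂
    have h2 := real_inner_comm f₂ (J f₂)
    linarith only [h, h2]
  have hinner : ⟪f₁, f₂⟫ = 0 := by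
    rw [hf₁def, inner_neg_left, hJf₂f₂, neg_zero]
  have hf₂ortho : ∀ u ∈ 𝔞, ⟪u, f₂⟫ = 0 := fun u hu => (Submodule.mem_orthogonal _ _).mp hf₂op u hu
  have hf₁op : f₁ ∈ 𝔞ᗮ := by
    rw [Submodule.mem_orthogonal]
    intro u hu
    have h1 : ⟪J u, f₂⟫ = -⟪u, J f₂⟫ := hskew u f₂
    have h2 : ⟪J u, f₂⟫ = 0 := hf₂ortho (J u) (hpart1 u hu)
    rw [hf₁def, inner_neg_right]
    linarith only [h1, h2]
  have hf₂ne : f₂ ≠ 0 := fun h => by rw [h, norm_zero] at hf₂norm; exact zero_ne_one hf₂norm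
  -- linear independence and span
  have hind : LinearIndependent ℝ ![f₁, f₂] := by
    rw [LinearIndependent.pair_iff]
    intro s t hst
    have h1 : ⟪f₁, s • f₁ + t • f₂⟫ = s := by
      rw [inner_add_right, real_inner_smul_right, real_inner_smul_right, hinner,
        real_inner_self_eq_norm_mul_norm, hf₁norm]
      ring
    have h2 : ⟪f₂, s • f₁ + t • f₂⟫ = t := by
      rw [inner_add_right, real_inner_smul_right, real_inner_smul_right,
        real_inner_comm f₁ f₂, hinner, real_inner_self_eq_norm_mul_norm, hf₂norm]
      ring
    rw [hst, inner_zero_right] at h1 h2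
    exact ⟨h1.symm, h2.symm⟩
  have hspan : Submodule.span ℝ {f₁, f₂} = 𝔞ᗮ := by
    have hle : Submodule.span ℝ {f₁, f₂} ≤ 𝔞ᗮ := by
      rw [Submodule.span_le]
      rintro x (rfl | rfl)
      · exact hf₁op
      · exact hf₂op
    have hfr2 : finrank ℝ ↥(Submodule.span ℝ {f₁, f₂}) = 2 := by
      have hrange : Set.range ![f₁, f₂] = {f₁, f₂} := by
        simp [Matrix.range_cons, Matrix.range_empty]
        exact Set.pair_comm f₂ f₁
      rw [← hrange, finrank_span_eq_card hind]
      simp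
    exact Submodule.eq_of_le_of_finrank_le hle (by rw [hfr2, hfrop])
  -- 𝔲 = 𝔞 ⊔ span f₂
  have hf₂not𝔞 : f₂ ∉ 𝔞 := by
    intro h
    have := hf₂ortho f₂ h
    rw [real_inner_self_eq_norm_mul_norm, hf₂norm] at this
    norm_num at this
  have h𝔲eq : 𝔞 ⊔ span ℝ {f₂} = 𝔲 := by
    have hle : 𝔞 ⊔ span ℝ {f₂} ≤ 𝔲 := by
      refine sup_le (h𝔞def ▸ inf_le_left) ?_
      rw [Submodule.span_le, Set.singleton_subset_iff]
      exact hf₂𝔲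
    have hlt : 𝔞 < 𝔞 ⊔ span ℝ {f₂} := by
      refine lt_of_le_of_ne le_sup_left fun h => hf₂not𝔞 ?_
      rw [h]
      exact Submodule.mem_sup_right (Submodule.mem_span_singleton_self f₂)
    have h1 := Submodule.finrank_lt_finrank_of_lt hlt
    have h2 := Submodule.finrank_mono hle
    exact Submodule.eq_of_le_of_finrank_le hle (by omega)
  refine ⟨f₁, f₂, hf₁norm, hf₂norm, hinner, hf₂𝔲, hf₁def, hspan, ?_⟩
  -- decompose bra f₁ f₂
  have hbmem : bra f₁ f₂ ∈ 𝔞 ⊔ span ℝ {f₂} := h𝔲eq ▸ hideal f₁ f₂ hf₂𝔲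
  rw [Submodule.mem_sup] at hbmem
  obtain ⟨v₀, hv₀, z, hz, hsum⟩ := hbmem
  rw [Submodule.mem_span_singleton] at hz
  obtain ⟨μ, rfl⟩ := hz
  refine ⟨v₀, hv₀, μ, by rw [← hsum]; abel, ?_, ?_⟩
  · intro x hx
    exact habelian f₂ hf₂𝔲 x ((hmem x).mp hx).1
  · intro x hx
    exact (hcomm f₁ x ((hmem x).mp hx).1 ((hmem x).mp hx).2).symm
end

section
/- Let 𝔤 be a real Lie algebra of dimension 2n+2 with n ≥ 2, equipped with a Hermitian structure (J, ⟨·,·⟩), and let 𝔲 ⊆ 𝔤 be an abelian ideal of codimension one. Let 𝔞 = 𝔲 ∩ J(𝔲), let f₂ ∈ 𝔲 be a unit vector orthogonal to 𝔞, and set f₁ = -J f₂. Suppose θ is a closed 1-form on 𝔤 with dω = θ∧ω, where ω(x,y) = ⟨Jx, y⟩ is the fundamental form, and θ ≠ 0 (LCK, non-Kähler). Then: (i) θ(x) = 0 for all x ∈ 𝔲, so θ = -2λ f¹ where f¹ is the metric dual of f₁ and λ = -θ(f₁)/2 ≠ 0; (ii) [f₁, f₂] = μ f₂ for some μ ∈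 ℝ (the 𝔞-component v₀ of [f₁,f₂] vanishes); (iii) the operator B := ad_{f₁}|_𝔞 - λ Id on 𝔞 is skew-symmetric with respect to ⟨·,·⟩ and commutes with J|_𝔞; (iv) 𝔤 is unimodular (tr(ad_x) = 0 for all x ∈ 𝔤) if and only if λ = -μ/(2n). -/
open scoped RealInnerProductSpace

open Module

lemma trace_eq_sum_inner' {E : Type*} [NormedAddCommGroup E] [InnerProductSpace ℝ E]
    [FiniteDimensional ℝ E] {ι : Type*} [Fintype ι] [DecidableEq ι]
    (b : OrthonormalBasis ι ℝ E) (T : E →ₗ[ℝ] E) :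
    LinearMap.trace ℝ E T = ∑ i, ⟪b i, T (b i)⟫ := by
  rw [LinearMap.trace_eq_matrix_trace ℝ b.toBasis, Matrix.trace]
  congr 1
  ext i
  rw [Matrix.diag_apply, LinearMap.toMatrix_apply, b.coe_toBasis, b.coe_toBasis_repr_apply,
    b.repr_apply_apply]

set_option maxHeartbeats 1000000 in
/-- **LCK almost abelian Lie algebras in dimension `2n+2 ≥ 6` (Theorem `lcK`, direct
direction).**
Let `𝔤` be a real Lie algebra of dimension `2n+2`, `n ≥ 2` (bracket given by a bilinear
map `bra`), with Hermitian structure `(J, ⟨·,·⟩)` and abelian ideal `𝔲` of codimension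
one; set `𝔞 = 𝔲 ∩ J(𝔲)`, let `f₂ ∈ 𝔲` be a unit vector orthogonal to `𝔞` and
`f₁ = -J f₂`.  If `θ` is a nonzero closed `1`-form with `dω = θ∧ω`, where
`ω(x,y) = ⟪Jx, y⟫`, then: `θ` vanishes on `𝔲` and `θ = -2λ f¹` with `λ = -θ(f₁)/2 ≠ 0`;
`[f₁, f₂] = μ f₂`; `B = ad_{f₁}|_𝔞 - λ Id` is skew-symmetric and commutes with `J|_𝔞`;
and `𝔤` is unimodular iff `λ = -μ/(2n)`. -/
theorem lck_almost_abelian_structure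
    {g : Type*} [NormedAddCommGroup g] [InnerProductSpace ℝ g] [FiniteDimensional ℝ g]
    (n : ℕ) (hn : 2 ≤ n) (hdim : Module.finrank ℝ g = 2 * n + 2)
    (bra : g →ₗ[ℝ] g →ₗ[ℝ] g)
    (hanti : ∀ x y : g, bra x y = - bra y x)
    (hjac : ∀ x y z : g, bra x (bra y z) + bra y (bra z x) + bra z (bra x y) = 0)
    (J : g →ₗ[ℝ] g)
    (hJ2 : ∀ x : g, J (J x) = -x)
    (hJmetric : ∀ x y : g, ⟪J x, J y⟫ = ⟪x, y⟫)
    (hJint : ∀ x y : g, bra (J x) (J y) - bra x y - J (bra (J x) y + bra x (J y)) = 0)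
    (𝔲 : Submodule ℝ g)
    (hideal : ∀ x : g, ∀ y ∈ 𝔲, bra x y ∈ 𝔲)
    (habelian : ∀ x ∈ 𝔲, ∀ y ∈ 𝔲, bra x y = 0)
    (hcodim : Module.finrank ℝ 𝔲 + 1 = Module.finrank ℝ g)
    (f₂ : g) (hf₂u : f₂ ∈ 𝔲) (hf₂n : ‖f₂‖ = 1)
    (hf₂orth : ∀ x ∈ 𝔲 ⊓ 𝔲.map J, ⟪f₂, x⟫ = 0)
    (f₁ : g) (hf₁ : f₁ = - J f₂)
    (θ : g →ₗ[ℝ] ℝ)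
    (hθclosed : ∀ x y : g, θ (bra x y) = 0) (hθne : θ ≠ 0)
    (hlck : ∀ x y z : g,
      -⟪J (bra x y), z⟫ + ⟪J (bra x z), y⟫ - ⟪J (bra y z), x⟫
        = θ x * ⟪J y, z⟫ - θ y * ⟪J x, z⟫ + θ z * ⟪J x, y⟫) :
    (∀ x ∈ 𝔲, θ x = 0) ∧
    -θ f₁ / 2 ≠ 0 ∧
    (∀ x : g, θ x = -2 * (-θ f₁ / 2) * ⟪f₁, x⟫) ∧
    ∃ μ : ℝ, bra f₁ f₂ = μ • f₂ ∧
      (∀ x ∈ 𝔲 ⊓ 𝔲.map J, ∀ y ∈ 𝔲 ⊓ 𝔲.map J,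
        ⟪bra f₁ x - (-θ f₁ / 2) • x, y⟫ = - ⟪x, bra f₁ y - (-θ f₁ / 2) • y⟫) ∧
      (∀ x ∈ 𝔲 ⊓ 𝔲.map J,
        bra f₁ (J x) - (-θ f₁ / 2) • J x = J (bra f₁ x - (-θ f₁ / 2) • x)) ∧
      ((∀ x : g, LinearMap.trace ℝ g (bra x) = 0) ↔ -θ f₁ / 2 = -μ / (2 * n)) := by
  classical
  -- basic facts about J, f₁, f₂
  have hJf₂ : J f₂ = -f₁ := by rw [hf₁, neg_neg]
  have hJf₁ : J f₁ = f₂ := by rw [hf₁, map_neg, hJ2, neg_neg]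
  have hf₂f₂ : ⟪f₂, f₂⟫ = 1 := by
    rw [real_inner_self_eq_norm_mul_norm, hf₂n]; norm_num
  have hf₁f₁ : ⟪f₁, f₁⟫ = 1 := by
    rw [hf₁, inner_neg_neg, hJmetric, hf₂f₂]
  have hJskew : ∀ x y : g, ⟪J x, y⟫ = -⟪x, J y⟫ := by
    intro x y
    have h := hJmetric x (J y)
    rw [hJ2, inner_neg_right] at h
    linarith
  have hJxx : ∀ x : g, ⟪J x, x⟫ = 0 := by
    intro x
    have h := hJskew x x
    have h2 : ⟪x, J x⟫ = ⟪J x, x⟫ := real_inner_comm _ _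
    linarith
  have hf₁f₂ : ⟪f₁, f₂⟫ = 0 := by
    rw [hf₁, inner_neg_left, hJxx, neg_zero]
  -- membership in map J
  have hmapJ : ∀ x : g, -(J x) ∈ 𝔲 → x ∈ 𝔲.map J := by
    intro x hx
    exact ⟨-(J x), hx, by rw [map_neg, hJ2, neg_neg]⟩
  have hmapJ' : ∀ x : g, x ∈ 𝔲.map J → -(J x) ∈ 𝔲 := by
    rintro x ⟨u, hu, rfl⟩
    rw [hJ2, neg_neg]; exact hu
  have h𝔞J : ∀ x ∈ 𝔲 ⊓ 𝔲.map J, J x ∈ 𝔲 ⊓ 𝔲.map J := by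
    rintro x ⟨hx1, hx2⟩
    refine ⟨by simpa using 𝔲.neg_mem (hmapJ' x hx2), ?_⟩
    exact ⟨x, hx1, rfl⟩
  have h𝔞𝔲 : 𝔲 ⊓ 𝔲.map J ≤ 𝔲 := inf_le_left
  -- f₁ ∉ 𝔲
  have hf₁n𝔲 : f₁ ∉ 𝔲 := by
    intro h
    have hf₂𝔞 : f₂ ∈ 𝔲 ⊓ 𝔲.map J := by
      refine ⟨hf₂u, hmapJ f₂ ?_⟩
      rw [hJf₂, neg_neg]; exact h
    have := hf₂orth f₂ hf₂𝔞
    rw [hf₂f₂] at this; norm_num at this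
  -- dimensions
  have h𝔲rank : finrank ℝ 𝔲 = 2 * n + 1 := by omega
  have hsup_top : ∀ p : Submodule ℝ g, 𝔲 < p → p = ⊤ := by
    intro p hp
    apply Submodule.eq_top_of_finrank_eq
    have h1 : finrank ℝ 𝔲 < finrank ℝ p := Submodule.finrank_lt_finrank_of_lt hp
    have h2 : finrank ℝ p ≤ finrank ℝ g := Submodule.finrank_le p
    omega
  have hsupf₁ : 𝔲 ⊔ Submodule.span ℝ {f₁} = ⊤ := by
    apply hsup_top
    refine lt_of_le_of_ne le_sup_left ?_
    intro h
    apply hf₁n𝔲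
    rw [h]
    exact Submodule.mem_sup_right (Submodule.mem_span_singleton_self f₁)
  have hdecomp : ∀ x : g, ∃ u ∈ 𝔲, ∃ c : ℝ, x = u + c • f₁ := by
    intro x
    have hx : x ∈ 𝔲 ⊔ Submodule.span ℝ {f₁} := hsupf₁ ▸ Submodule.mem_top
    obtain ⟨u, hu, v, hv, rfl⟩ := Submodule.mem_sup.mp hx
    obtain ⟨c, rfl⟩ := Submodule.mem_span_singleton.mp hv
    exact ⟨u, hu, c, rfl⟩
  have hsupJ : 𝔲 ⊔ 𝔲.map J = ⊤ := by
    apply hsup_top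
    refine lt_of_le_of_ne le_sup_left ?_
    intro h
    apply hf₁n𝔲
    rw [h]
    exact Submodule.mem_sup_right ⟨-f₂, 𝔲.neg_mem hf₂u, by rw [map_neg, hJf₂, neg_neg]⟩
  have hmaprank : finrank ℝ (𝔲.map J) = 2 * n + 1 := by
    have hinj : Function.Injective J := by
      intro a b hab
      have : J (J a) = J (J b) := by rw [hab]
      rw [hJ2, hJ2] at this
      exact neg_injective this
    rw [(Submodule.equivMapOfInjective J hinj 𝔲).finrank_eq.symm, h𝔲rank]
  have h𝔞rank : finrank ℝ (𝔲 ⊓ 𝔲.map J : Submodule ℝ g) = 2 * n := by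
    have := Submodule.finrank_sup_add_finrank_inf_eq 𝔲 (𝔲.map J)
    rw [hsupJ, finrank_top, hdim, h𝔲rank, hmaprank] at this
    omega
  -- 𝔲 = 𝔞 ⊕ ℝ f₂
  have hf₂n0 : f₂ ≠ 0 := by
    intro h; rw [h, norm_zero] at hf₂n; norm_num at hf₂n
  have h𝔲eq : (𝔲 ⊓ 𝔲.map J) ⊔ Submodule.span ℝ {f₂} = 𝔲 := by
    apply Submodule.eq_of_le_of_finrank_eq
    · exact sup_le h𝔞𝔲 ((Submodule.span_singleton_le_iff_mem _ _).mpr hf₂u)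
    · have hinf : (𝔲 ⊓ 𝔲.map J) ⊓ Submodule.span ℝ {f₂} = ⊥ := by
        rw [Submodule.eq_bot_iff]
        rintro x ⟨hx1, hx2⟩
        obtain ⟨c, rfl⟩ := Submodule.mem_span_singleton.mp hx2
        have := hf₂orth _ hx1
        rw [real_inner_smul_right, hf₂f₂, mul_one] at this
        rw [this, zero_smul]
      have := Submodule.finrank_sup_add_finrank_inf_eq (𝔲 ⊓ 𝔲.map J) (Submodule.span ℝ {f₂})
      rw [hinf, finrank_bot, h𝔞rank, finrank_span_singleton hf₂n0] at this
      omega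
  -- f₁ is orthogonal to 𝔲
  have hf₁orth𝔞 : ∀ a ∈ 𝔲 ⊓ 𝔲.map J, ⟪f₁, a⟫ = 0 := by
    intro a ha
    have h1 : ⟪f₁, a⟫ = ⟪f₂, J a⟫ := by rw [← hJmetric f₁ a, hJf₁]
    rw [h1]
    exact hf₂orth _ (h𝔞J a ha)
  have hf₁orth : ∀ u ∈ 𝔲, ⟪f₁, u⟫ = 0 := by
    intro u hu
    rw [← h𝔲eq] at hu
    obtain ⟨a, ha, v, hv, rfl⟩ := Submodule.mem_sup.mp hu
    obtain ⟨c, rfl⟩ := Submodule.mem_span_singleton.mp hv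
    rw [inner_add_right, real_inner_smul_right, hf₁orth𝔞 a ha, hf₁f₂]
    ring
  -- membership criteria
  have hmem𝔲 : ∀ x : g, ⟪f₁, x⟫ = 0 → x ∈ 𝔲 := by
    intro x hx
    obtain ⟨u, hu, c, rfl⟩ := hdecomp x
    rw [inner_add_right, real_inner_smul_right, hf₁orth u hu, hf₁f₁] at hx
    have : c = 0 := by linarith
    rw [this, zero_smul, add_zero]
    exact hu
  have hmem𝔞 : ∀ x ∈ 𝔲, ⟪f₂, x⟫ = 0 → x ∈ 𝔲 ⊓ 𝔲.map J := by
    intro x hx hx2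
    refine ⟨hx, hmapJ x (hmem𝔲 _ ?_)⟩
    rw [inner_neg_right]
    have : ⟪f₁, J x⟫ = -⟪f₂, x⟫ := by
      rw [← hJmetric f₁ (J x), hJf₁, hJ2, inner_neg_right]
    rw [this, hx2]; ring
  -- existence of orthogonal vectors
  have hexists : ∀ a : g, ∃ b : g, b ≠ 0 ∧ ⟪f₁, b⟫ = 0 ∧ ⟪f₂, b⟫ = 0 ∧
      ⟪a, b⟫ = 0 ∧ ⟪J a, b⟫ = 0 := by
    intro a
    have hrank : finrank ℝ (Submodule.span ℝ (Set.range ![f₁, f₂, a, J a])) ≤ 4 := by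
      have := finrank_range_le_card (R := ℝ) ![f₁, f₂, a, J a]
      simpa [Set.finrank] using this
    have hbot : (Submodule.span ℝ (Set.range ![f₁, f₂, a, J a]))ᗮ ≠ ⊥ := by
      intro h
      have h2 := Submodule.finrank_add_finrank_orthogonal
        (K := Submodule.span ℝ (Set.range ![f₁, f₂, a, J a]))
      rw [h, finrank_bot, hdim] at h2
      omega
    obtain ⟨b, hb, hb0⟩ := Submodule.exists_mem_ne_zero_of_ne_bot hbot
    have hbo := (Submodule.mem_orthogonal _ b).mp hb
    exact ⟨b, hb0, hbo _ (Submodule.subset_span ⟨0, rfl⟩),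
      hbo _ (Submodule.subset_span ⟨1, rfl⟩), hbo _ (Submodule.subset_span ⟨2, rfl⟩),
      hbo _ (Submodule.subset_span ⟨3, rfl⟩)⟩
  -- θ vanishes on 𝔲
  have hθ𝔲 : ∀ u ∈ 𝔲, θ u = 0 := by
    intro u hu
    obtain ⟨b, hb0, h1, h2, h3, h4⟩ := hexists u
    have hb𝔞 : b ∈ 𝔲 ⊓ 𝔲.map J := hmem𝔞 b (hmem𝔲 b h1) h2
    have hb𝔲 : b ∈ 𝔲 := hb𝔞.1
    have hJb𝔲 : J b ∈ 𝔲 := (h𝔞J b hb𝔞).1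
    have key := hlck u b (J b)
    rw [habelian u hu b hb𝔲, habelian u hu (J b) hJb𝔲, habelian b hb𝔲 (J b) hJb𝔲,
      hJmetric u b, hJmetric b b, h3, h4] at key
    simp only [map_zero, inner_zero_left] at key
    have hbb : ⟪b, b⟫ ≠ 0 := by
      rw [ne_eq, inner_self_eq_zero]; exact hb0
    have hmul : θ u * ⟪b, b⟫ = 0 := by linarith
    exact (mul_eq_zero.mp hmul).resolve_right hbb
  -- the form of θ
  have hθf : ∀ x : g, θ x = θ f₁ * ⟪f₁, x⟫ := by
    intro x
    obtain ⟨u, hu, c, rfl⟩ := hdecomp x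
    rw [map_add, map_smul, hθ𝔲 u hu, inner_add_right, real_inner_smul_right,
      hf₁orth u hu, hf₁f₁]
    simp [smul_eq_mul]
    ring
  have hθf₁0 : θ f₁ ≠ 0 := by
    intro h
    apply hθne
    ext x
    rw [hθf x, h, zero_mul, LinearMap.zero_apply]
  have hlam : -θ f₁ / 2 ≠ 0 := div_ne_zero (neg_ne_zero.mpr hθf₁0) two_ne_zero
  -- the bracket [f₁, f₂]
  have hmu : bra f₁ f₂ = ⟪f₂, bra f₁ f₂⟫ • f₂ := by
    set v := bra f₁ f₂ - ⟪f₂, bra f₁ f₂⟫ • f₂ with hvdef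
    have hv𝔲 : v ∈ 𝔲 := Submodule.sub_mem _ (hideal f₁ f₂ hf₂u) (Submodule.smul_mem _ _ hf₂u)
    have hv2 : ⟪f₂, v⟫ = 0 := by
      rw [hvdef, inner_sub_right, real_inner_smul_right, hf₂f₂]; ring
    have hv𝔞 : v ∈ 𝔲 ⊓ 𝔲.map J := hmem𝔞 v hv𝔲 hv2
    have key : ∀ a ∈ 𝔲 ⊓ 𝔲.map J, ⟪J v, a⟫ = 0 := by
      intro a ha
      have ha𝔲 : a ∈ 𝔲 := ha.1
      have k := hlck f₁ f₂ a
      have t1 : ⟪J (bra f₁ a), f₂⟫ = 0 := by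
        rw [← hJf₁, hJmetric, real_inner_comm]
        exact hf₁orth _ (hideal f₁ a ha𝔲)
      rw [habelian f₂ hf₂u a ha𝔲, t1, hθ𝔲 f₂ hf₂u, hθ𝔲 a ha𝔲, hJf₂, hJf₁] at k
      simp only [map_zero, inner_zero_left, inner_neg_left, zero_mul] at k
      rw [hf₁orth a ha𝔲] at k
      have hbra : ⟪J (bra f₁ f₂), a⟫ = 0 := by linarith
      have hdec : bra f₁ f₂ = v + ⟪f₂, bra f₁ f₂⟫ • f₂ := by rw [hvdef]; abel
      rw [hdec, map_add, map_smul, hJf₂, inner_add_left, smul_neg, inner_neg_left,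
        real_inner_smul_left, hf₁orth𝔞 a ha] at hbra
      linarith
    have hJv0 : J v = 0 := by
      have := key (J v) (h𝔞J v hv𝔞)
      rwa [inner_self_eq_zero] at this
    have hv0 : v = 0 := by
      have := congrArg J hJv0
      rw [hJ2, map_zero, neg_eq_zero] at this
      exact this
    exact sub_eq_zero.mp hv0
  -- the commutation of ad f₁ with J on 𝔞
  have hcomm : ∀ x ∈ 𝔲 ⊓ 𝔲.map J, J (bra f₁ x) = bra f₁ (J x) := by
    intro x hx
    have hx𝔲 : x ∈ 𝔲 := hx.1
    have hJx𝔲 : J x ∈ 𝔲 := (h𝔞J x hx).1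
    have k := hJint f₁ x
    rw [hJf₁, habelian f₂ hf₂u (J x) hJx𝔲, habelian f₂ hf₂u x hx𝔲, zero_add] at k
    have k2 : bra f₁ x + J (bra f₁ (J x)) = 0 := by
      calc bra f₁ x + J (bra f₁ (J x))
          = -((0:g) - bra f₁ x - J (bra f₁ (J x))) := by abel
        _ = -0 := by rw [k]
        _ = 0 := neg_zero
    have k3 := congrArg J k2
    rw [map_add, hJ2, map_zero] at k3
    have := add_eq_zero_iff_eq_neg.mp k3
    rw [this, neg_neg]
  -- skew-symmetry relation
  have hskew0 : ∀ a ∈ 𝔲 ⊓ 𝔲.map J, ∀ b ∈ 𝔲 ⊓ 𝔲.map J,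
      ⟪bra f₁ a, b⟫ + ⟪a, bra f₁ b⟫ = -θ f₁ * ⟪a, b⟫ := by
    intro a ha b hb
    have ha𝔲 : a ∈ 𝔲 := ha.1
    have hb𝔲 : b ∈ 𝔲 := hb.1
    have hJa : J a ∈ 𝔲 ⊓ 𝔲.map J := h𝔞J a ha
    have k := hlck f₁ (J a) b
    rw [habelian (J a) hJa.1 b hb𝔲, hθ𝔲 (J a) hJa.1, hθ𝔲 b hb𝔲, ← hcomm a ha,
      hJ2 (bra f₁ a), hJ2 a, hJmetric (bra f₁ b) a] at k
    simp only [map_zero, inner_zero_left, inner_neg_left, zero_mul, neg_neg] at k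
    have hc := real_inner_comm (bra f₁ b) a
    linarith
  -- the trace machinery
  have hnei : Nonempty (Fin (finrank ℝ (𝔲 ⊓ 𝔲.map J : Submodule ℝ g)) ⊕ Fin 2) := ⟨Sum.inr 0⟩
  set e := stdOrthonormalBasis ℝ (𝔲 ⊓ 𝔲.map J : Submodule ℝ g) with he
  set w : Fin (finrank ℝ (𝔲 ⊓ 𝔲.map J : Submodule ℝ g)) ⊕ Fin 2 → g :=
    Sum.elim (fun i => (e i : g)) ![f₁, f₂] with hw
  have hw_mem : ∀ i, ((e i : g)) ∈ 𝔲 ⊓ 𝔲.map J := fun i => (e i).2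
  have heon : ∀ i j, ⟪(e i : g), (e j : g)⟫ = if i = j then 1 else 0 := by
    intro i j
    rw [← Submodule.coe_inner (𝔲 ⊓ 𝔲.map J) (e i) (e j)]
    exact (orthonormal_iff_ite.mp e.orthonormal) i j
  have hwortho : Orthonormal ℝ w := by
    rw [orthonormal_iff_ite]
    rintro (i | i) (j | j)
    · rw [show ⟪w (Sum.inl i), w (Sum.inl j)⟫ = ⟪(e i : g), (e j : g)⟫ from rfl, heon i j]
      simp [Sum.inl.injEq]
    · have h1 : ⟪w (Sum.inl i), w (Sum.inr j)⟫ = 0 := by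
        fin_cases j
        · show ⟪(e i : g), f₁⟫ = 0
          rw [real_inner_comm]; exact hf₁orth𝔞 _ (hw_mem i)
        · show ⟪(e i : g), f₂⟫ = 0
          rw [real_inner_comm]; exact hf₂orth _ (hw_mem i)
      rw [h1]; simp
    · have h1 : ⟪w (Sum.inr i), w (Sum.inl j)⟫ = 0 := by
        fin_cases i
        · show ⟪f₁, (e j : g)⟫ = 0
          exact hf₁orth𝔞 _ (hw_mem j)
        · show ⟪f₂, (e j : g)⟫ = 0
          exact hf₂orth _ (hw_mem j)
      rw [h1]; simp
    · fin_cases i <;> fin_cases j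
      · show ⟪f₁, f₁⟫ = _
        rw [hf₁f₁]; simp
      · show ⟪f₁, f₂⟫ = _
        simp [hf₁f₂]
      · show ⟪f₂, f₁⟫ = _
        rw [real_inner_comm]
        simp [hf₁f₂]
      · show ⟪f₂, f₂⟫ = _
        rw [hf₂f₂]; simp
  have hcard : Fintype.card (Fin (finrank ℝ (𝔲 ⊓ 𝔲.map J : Submodule ℝ g)) ⊕ Fin 2)
      = finrank ℝ g := by
    simp [h𝔞rank, hdim]
  have htr : ∀ T : g →ₗ[ℝ] g, LinearMap.trace ℝ g T = ∑ i, ⟪w i, T (w i)⟫ := by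
    intro T
    let B := basisOfOrthonormalOfCardEqFinrank hwortho hcard
    have hBw : ⇑B = w := coe_basisOfOrthonormalOfCardEqFinrank hwortho hcard
    let ONB := B.toOrthonormalBasis (by rw [hBw]; exact hwortho)
    have hONBw : ∀ i, ONB i = w i := by
      intro i
      have h1 : ⇑ONB = ⇑B := Basis.coe_toOrthonormalBasis B _
      rw [show ONB i = (⇑ONB) i from rfl, h1, hBw]
    rw [trace_eq_sum_inner' ONB T]
    exact Finset.sum_congr rfl (fun i _ => by rw [hONBw i])
  have htru : ∀ u ∈ 𝔲, LinearMap.trace ℝ g (bra u) = 0 := by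
    intro u hu
    rw [htr, Fintype.sum_sum_type]
    have h1 : ∀ i, ⟪w (Sum.inl i), bra u (w (Sum.inl i))⟫ = (0:ℝ) := by
      intro i
      rw [show w (Sum.inl i) = (e i : g) from rfl, habelian u hu _ (hw_mem i).1,
        inner_zero_right]
    have h2 : ∑ j : Fin 2, ⟪w (Sum.inr j), bra u (w (Sum.inr j))⟫ = (0:ℝ) := by
      rw [Fin.sum_univ_two]
      have e0 : ⟪w (Sum.inr 0), bra u (w (Sum.inr 0))⟫ = (0:ℝ) := by
        show ⟪f₁, bra u f₁⟫ = (0:ℝ)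
        rw [hanti u f₁, inner_neg_right, hf₁orth _ (hideal f₁ u hu), neg_zero]
      have e1 : ⟪w (Sum.inr 1), bra u (w (Sum.inr 1))⟫ = (0:ℝ) := by
        show ⟪f₂, bra u f₂⟫ = (0:ℝ)
        rw [habelian u hu f₂ hf₂u, inner_zero_right]
      rw [e0, e1, add_zero]
    rw [Finset.sum_congr rfl (fun i _ => h1 i), h2, Finset.sum_const, smul_zero, add_zero]
  have hbraf₁f₁ : bra f₁ f₁ = 0 := by
    have h := hanti f₁ f₁
    have h1 : bra f₁ f₁ + bra f₁ f₁ = 0 := by nth_rewrite 2 [h]; abel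
    have h2 : (2:ℝ) • bra f₁ f₁ = 0 := by rw [two_smul]; exact h1
    exact (smul_eq_zero.mp h2).resolve_left (by norm_num)
  have htrf₁ : LinearMap.trace ℝ g (bra f₁)
      = (2 * n : ℝ) * (-θ f₁ / 2) + ⟪f₂, bra f₁ f₂⟫ := by
    rw [htr, Fintype.sum_sum_type]
    have h1 : ∀ i, ⟪w (Sum.inl i), bra f₁ (w (Sum.inl i))⟫ = -θ f₁ / 2 := by
      intro i
      rw [show w (Sum.inl i) = (e i : g) from rfl]
      have hs := hskew0 _ (hw_mem i) _ (hw_mem i)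
      have hone : ⟪(e i : g), (e i : g)⟫ = 1 := by rw [heon i i]; simp
      have hc := real_inner_comm (bra f₁ (e i : g)) (e i : g)
      rw [hone] at hs
      linarith
    have h2 : ∑ j : Fin 2, ⟪w (Sum.inr j), bra f₁ (w (Sum.inr j))⟫ = ⟪f₂, bra f₁ f₂⟫ := by
      rw [Fin.sum_univ_two]
      have e0 : ⟪w (Sum.inr 0), bra f₁ (w (Sum.inr 0))⟫ = (0:ℝ) := by
        show ⟪f₁, bra f₁ f₁⟫ = (0:ℝ)
        rw [hbraf₁f₁, inner_zero_right]
      have e1 : ⟪w (Sum.inr 1), bra f₁ (w (Sum.inr 1))⟫ = ⟪f₂, bra f₁ f₂⟫ := by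
        rw [show w (Sum.inr 1) = f₂ from rfl]
      rw [e0, e1, zero_add]
    rw [Finset.sum_congr rfl (fun i _ => h1 i), h2, Finset.sum_const, Finset.card_univ,
      Fintype.card_fin, h𝔞rank, nsmul_eq_mul]
    push_cast
    ring
  have htrx : ∀ x : g, LinearMap.trace ℝ g (bra x)
      = ⟪f₁, x⟫ * ((2 * n : ℝ) * (-θ f₁ / 2) + ⟪f₂, bra f₁ f₂⟫) := by
    intro x
    obtain ⟨u, hu, c, rfl⟩ := hdecomp x
    have hb : bra (u + c • f₁) = bra u + c • bra f₁ := by rw [map_add, map_smul]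
    rw [hb, map_add, map_smul, htru u hu, htrf₁, inner_add_right, real_inner_smul_right,
      hf₁orth u hu, hf₁f₁]
    simp [smul_eq_mul]
  have hn0 : (2 * n : ℝ) ≠ 0 := by
    have : (0:ℝ) < n := by exact_mod_cast (by omega : 0 < n)
    positivity
  -- assembling everything
  refine ⟨hθ𝔲, hlam, ?_, ⟪f₂, bra f₁ f₂⟫, hmu, ?_, ?_, ?_⟩
  · intro x
    rw [hθf x]; ring
  · intro x hx y hy
    have hs := hskew0 x hx y hy
    simp only [inner_sub_left, inner_sub_right, real_inner_smul_left, real_inner_smul_right]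
    have hc := real_inner_comm x y
    linarith
  · intro x hx
    rw [map_sub, map_smul, hcomm x hx]
  · constructor
    · intro h
      have h1 := h f₁
      rw [htrf₁] at h1
      field_simp
      linarith
    · intro h x
      rw [htrx x]
      have : (2 * n : ℝ) * (-θ f₁ / 2) + ⟪f₂, bra f₁ f₂⟫ = 0 := by
        rw [h]
        field_simp
        ring
      rw [this, mul_zero]
end

section
/- Let 𝔤 be a real Lie algebra of dimension 2n+2 (n ≥ 1) with an inner product ⟨·,·⟩, admitting an orthogonal decomposition 𝔤 = span{f₁, f₂} ⊕ 𝔞 where: 𝔞 is an abelian ideal, f₁, f₂ are orthonormal, [f₁, f₂] = μ f₂ for some μ ∈ ℝ, [f₂, x] = 0 for all x ∈ 𝔞, and ad_{f₁}|_𝔞 = λ Id + B for some λ ≠ 0 and some B : 𝔞 → 𝔞 that is skew-symmetric with respect to ⟨·,·⟩. Suppose J₀ is a linear map on 𝔞 with J₀² = -Id, ⟨J₀x, J₀y⟩ = ⟨x, y⟩, and B J₀ = J₀ B, and extend J₀ to the linear map J on 𝔤 with J f₁ = f₂, J f₂ = -f₁, J|_𝔞 = J₀. Then (J, ⟨·,·⟩)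 is a Hermitian structure on 𝔤 (in particular N_J = 0), and it is LCK: the fundamental form ω(x,y) = ⟨Jx, y⟩ satisfies dω = θ∧ω with θ = -2λ f¹ closed and nonzero, where f¹ is the metric dual of f₁. -/
open scoped RealInnerProductSpace

/-- **LCK almost abelian Lie algebras (Theorem `lcK`(ii), converse direction).**
Let `𝔤` be a real Lie algebra of dimension `2n+2` (`n ≥ 1`), with inner product, which
decomposes orthogonally as `𝔤 = span{f₁, f₂} ⊕ 𝔞` with `𝔞` an abelian ideal,
`f₁, f₂` orthonormal, `[f₁, f₂] = μ f₂`, `ad_{f₂}|_𝔞 = 0` and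
`ad_{f₁}|_𝔞 = λ Id + B` with `λ ≠ 0` and `B` skew-symmetric.  If `J₀` is an orthogonal
complex structure on `𝔞` commuting with `B`, extended to `J` on `𝔤` by `J f₁ = f₂`,
`J f₂ = -f₁`, then `(J, ⟨·,·⟩)` is a Hermitian structure on `𝔤` and it is LCK with Lee
form `θ = -2λ f¹` (closed and nonzero). -/
theorem lck_almost_abelian_converse
    {g : Type*} [NormedAddCommGroup g] [InnerProductSpace ℝ g] [FiniteDimensional ℝ g]
    (n : ℕ) (hn : 1 ≤ n) (hdim : Module.finrank ℝ g = 2 * n + 2)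
    (bra : g →ₗ[ℝ] g →ₗ[ℝ] g)
    (hanti : ∀ x y : g, bra x y = - bra y x)
    (hjac : ∀ x y z : g, bra x (bra y z) + bra y (bra z x) + bra z (bra x y) = 0)
    (𝔞 : Submodule ℝ g)
    (hideal : ∀ x : g, ∀ y ∈ 𝔞, bra x y ∈ 𝔞)
    (habelian : ∀ x ∈ 𝔞, ∀ y ∈ 𝔞, bra x y = 0)
    (f₁ f₂ : g) (hf₁n : ‖f₁‖ = 1) (hf₂n : ‖f₂‖ = 1) (hf₁f₂ : ⟪f₁, f₂⟫ = 0)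
    (hf₁orth : ∀ x ∈ 𝔞, ⟪f₁, x⟫ = 0) (hf₂orth : ∀ x ∈ 𝔞, ⟪f₂, x⟫ = 0)
    (hspan : Submodule.span ℝ {f₁, f₂} ⊔ 𝔞 = ⊤)
    (μ : ℝ) (hbr12 : bra f₁ f₂ = μ • f₂)
    (hf₂a : ∀ x ∈ 𝔞, bra f₂ x = 0)
    (lam : ℝ) (hlam : lam ≠ 0)
    (B : g →ₗ[ℝ] g) (hBa : ∀ x ∈ 𝔞, B x ∈ 𝔞)
    (hadf₁ : ∀ x ∈ 𝔞, bra f₁ x = lam • x + B x)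
    (hBskew : ∀ x ∈ 𝔞, ∀ y ∈ 𝔞, ⟪B x, y⟫ = - ⟪x, B y⟫)
    (J : g →ₗ[ℝ] g)
    (hJf₁ : J f₁ = f₂) (hJf₂ : J f₂ = -f₁)
    (hJa : ∀ x ∈ 𝔞, J x ∈ 𝔞)
    (hJ02 : ∀ x ∈ 𝔞, J (J x) = -x)
    (hJ0metric : ∀ x ∈ 𝔞, ∀ y ∈ 𝔞, ⟪J x, J y⟫ = ⟪x, y⟫)
    (hBJ : ∀ x ∈ 𝔞, B (J x) = J (B x)) :
    (∀ x : g, J (J x) = -x) ∧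
    (∀ x y : g, ⟪J x, J y⟫ = ⟪x, y⟫) ∧
    (∀ x y : g, bra (J x) (J y) - bra x y - J (bra (J x) y + bra x (J y)) = 0) ∧
    (∀ x y : g, -2 * lam * ⟪f₁, bra x y⟫ = 0) ∧
    (∃ x : g, -2 * lam * ⟪f₁, x⟫ ≠ 0) ∧
    (∀ x y z : g,
      -⟪J (bra x y), z⟫ + ⟪J (bra x z), y⟫ - ⟪J (bra y z), x⟫
        = (-2 * lam * ⟪f₁, x⟫) * ⟪J y, z⟫ - (-2 * lam * ⟪f₁, y⟫) * ⟪J x, z⟫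
          + (-2 * lam * ⟪f₁, z⟫) * ⟪J x, y⟫) := by

  -- basic inner product facts
  have hf11 : ⟪f₁, f₁⟫ = (1:ℝ) := by
    rw [real_inner_self_eq_norm_sq, hf₁n]; norm_num
  have hf22 : ⟪f₂, f₂⟫ = (1:ℝ) := by
    rw [real_inner_self_eq_norm_sq, hf₂n]; norm_num
  have hf21 : ⟪f₂, f₁⟫ = (0:ℝ) := by rw [real_inner_comm]; exact hf₁f₂
  have h1v : ∀ v ∈ 𝔞, ⟪v, f₁⟫ = (0:ℝ) := fun v hv => by
    rw [real_inner_comm]; exact hf₁orth v hv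
  have h2v : ∀ v ∈ 𝔞, ⟪v, f₂⟫ = (0:ℝ) := fun v hv => by
    rw [real_inner_comm]; exact hf₂orth v hv
  -- decomposition
  have key : ∀ x : g, ∃ a b : ℝ, ∃ v, v ∈ 𝔞 ∧ ⟪f₁, x⟫ = a ∧ x = a•f₁ + b•f₂ + v := by
    intro x
    have hx : x ∈ Submodule.span ℝ {f₁, f₂} ⊔ 𝔞 := by rw [hspan]; trivial
    rcases Submodule.mem_sup.mp hx with ⟨s, hs, w, hw, hsum⟩
    rcases Submodule.mem_span_pair.mp hs with ⟨p, q, hpq⟩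
    refine ⟨p, q, w, hw, ?_, ?_⟩
    · rw [← hsum, ← hpq]
      simp [inner_add_right, real_inner_smul_right, hf11, hf₁f₂, hf₁orth w hw, hf₁n]
    · rw [← hsum, ← hpq]
  -- bracket basic facts
  have hb11 : bra f₁ f₁ = 0 := by
    have h := hanti f₁ f₁
    have h2 : (2:ℝ) • bra f₁ f₁ = 0 := by
      rw [two_smul]; nth_rewrite 2 [h]; abel
    rcases smul_eq_zero.mp h2 with h' | h'
    · norm_num at h'
    · exact h'
  have hb22 : bra f₂ f₂ = 0 := by
    have h := hanti f₂ f₂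
    have h2 : (2:ℝ) • bra f₂ f₂ = 0 := by
      rw [two_smul]; nth_rewrite 2 [h]; abel
    rcases smul_eq_zero.mp h2 with h' | h'
    · norm_num at h'
    · exact h'
  have hb21 : bra f₂ f₁ = -(μ • f₂) := by rw [hanti f₂ f₁, hbr12]
  have hbv1 : ∀ v ∈ 𝔞, bra v f₁ = -(lam • v + B v) := fun v hv => by
    rw [hanti v f₁, hadf₁ v hv]
  have hbv2 : ∀ v ∈ 𝔞, bra v f₂ = 0 := fun v hv => by
    rw [hanti v f₂, hf₂a v hv, neg_zero]
  -- master bracket formula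
  have hbra : ∀ (a b c d : ℝ) (v w : g), v ∈ 𝔞 → w ∈ 𝔞 →
      bra (a•f₁ + b•f₂ + v) (c•f₁ + d•f₂ + w)
        = (μ*(a*d) - μ*(b*c)) • f₂ + (a*lam)•w + a • B w - (c*lam)•v - c • B v := by
    intro a b c d v w hv hw
    simp only [map_add, map_smul, LinearMap.add_apply, LinearMap.smul_apply,
      LinearMap.neg_apply, hb11, hb22, hbr12, hb21, hadf₁ w hw, hf₂a w hw,
      hbv1 v hv, hbv2 v hv, habelian v hv w hw]
    module
  -- master inner product formula
  have hinn : ∀ (a b c d : ℝ) (v w : g), v ∈ 𝔞 → w ∈ 𝔞 →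
      ⟪a•f₁ + b•f₂ + v, c•f₁ + d•f₂ + w⟫ = a*c + b*d + ⟪v,w⟫ := by
    intro a b c d v w hv hw
    simp only [inner_add_left, inner_add_right, real_inner_smul_left,
      real_inner_smul_right, hf11, hf22, hf₁f₂, hf21, hf₁orth w hw, hf₂orth w hw,
      h1v v hv, h2v v hv]
    ring
  -- J skewness on 𝔞
  have hJskew : ∀ v ∈ 𝔞, ∀ w ∈ 𝔞, ⟪J v, w⟫ = -⟪v, J w⟫ := by
    intro v hv w hw
    have h := hJ0metric v hv (J w) (hJa w hw)
    rw [hJ02 w hw, inner_neg_right] at h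
    linarith
  have hJs : ∀ v ∈ 𝔞, ∀ w ∈ 𝔞, ⟪J v, w⟫ = -⟪J w, v⟫ := by
    intro v hv w hw
    rw [hJskew v hv w hw, real_inner_comm]
  have hBJs : ∀ v ∈ 𝔞, ∀ w ∈ 𝔞, ⟪B (J v), w⟫ = ⟪B (J w), v⟫ := by
    intro v hv w hw
    rw [hBskew (J v) (hJa v hv) w hw, hJskew v hv (B w) (hBa w hw), hBJ w hw,
      neg_neg, real_inner_comm]
  -- J on decomposed vectors
  have hJdec : ∀ (a b : ℝ) (v : g), J (a•f₁ + b•f₂ + v) = (-b)•f₁ + a•f₂ + J v := by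
    intro a b v
    simp only [map_add, map_smul, hJf₁, hJf₂]
    module
  refine ⟨?_, ?_, ?_, ?_, ?_, ?_⟩
  · -- J² = -1
    intro x
    obtain ⟨a, b, v, hv, -, rfl⟩ := key x
    rw [hJdec, hJdec]
    rw [hJ02 v hv]
    module
  · -- metric
    intro x y
    obtain ⟨a, b, v, hv, -, rfl⟩ := key x
    obtain ⟨c, d, w, hw, -, rfl⟩ := key y
    rw [hJdec, hJdec, hinn _ _ _ _ _ _ (hJa v hv) (hJa w hw),
      hinn a b c d v w hv hw, hJ0metric v hv w hw]
    ring
  · -- Nijenhuis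
    intro x y
    obtain ⟨a, b, v, hv, -, rfl⟩ := key x
    obtain ⟨c, d, w, hw, -, rfl⟩ := key y
    rw [hJdec, hJdec,
      hbra (-b) a (-d) c (J v) (J w) (hJa v hv) (hJa w hw),
      hbra a b c d v w hv hw,
      hbra (-b) a c d (J v) w (hJa v hv) hw,
      hbra a b (-d) c v (J w) hv (hJa w hw)]
    have hJBw : J (B w) = B (J w) := (hBJ w hw).symm
    have hJBv : J (B v) = B (J v) := (hBJ v hv).symm
    have hJJv : J (J v) = -v := hJ02 v hv
    have hJJw : J (J w) = -w := hJ02 w hw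
    have hJBJv : J (B (J v)) = -(B v) := by
      rw [← hBJ (J v) (hJa v hv), hJJv, map_neg]
    have hJBJw : J (B (J w)) = -(B w) := by
      rw [← hBJ (J w) (hJa w hw), hJJw, map_neg]
    simp only [map_add, map_smul, map_sub, map_neg, hJf₂, hJBw, hJBv, hJJv, hJJw,
      hJBJv, hJBJw]
    module
  · -- Lee form closed
    intro x y
    obtain ⟨a, b, v, hv, -, rfl⟩ := key x
    obtain ⟨c, d, w, hw, -, rfl⟩ := key y
    rw [hbra a b c d v w hv hw]
    have : ⟪f₁, (μ*(a*d) - μ*(b*c)) • f₂ + (a*lam)•w + a • B w - (c*lam)•v - c • B v⟫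
        = 0 := by
      simp [inner_add_right, inner_sub_right, real_inner_smul_right, hf₁f₂,
        hf₁orth w hw, hf₁orth v hv, hf₁orth _ (hBa w hw), hf₁orth _ (hBa v hv)]
    rw [this]; ring
  · -- Lee form nonzero
    exact ⟨f₁, by rw [hf11]; simpa using hlam⟩
  · -- dω = θ ∧ ω
    intro x y z
    obtain ⟨a, b, v, hv, ha, rfl⟩ := key x
    obtain ⟨c, d, w, hw, hc, rfl⟩ := key y
    obtain ⟨e₁, e₂, u, hu, he, rfl⟩ := key z
    rw [ha, hc, he]
    rw [hbra a b c d v w hv hw, hbra a b e₁ e₂ v u hv hu,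
      hbra c d e₁ e₂ w u hw hu, hJdec, hJdec]
    have hJBw : J (B w) = B (J w) := (hBJ w hw).symm
    have hJBv : J (B v) = B (J v) := (hBJ v hv).symm
    have hJBu : J (B u) = B (J u) := (hBJ u hu).symm
    simp only [map_add, map_smul, map_sub, map_neg, hJf₂, hJBw, hJBv, hJBu]
    simp only [inner_add_left, inner_add_right, inner_sub_left, inner_sub_right,
      inner_neg_left, inner_neg_right, real_inner_smul_left, real_inner_smul_right,
      hf11, hf22, hf₁f₂, hf21,
      hf₁orth v hv, hf₁orth w hw, hf₁orth u hu, hf₂orth v hv, hf₂orth w hw,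
      hf₂orth u hu, h1v v hv, h1v w hw, h1v u hu, h2v v hv, h2v w hw, h2v u hu,
      hf₁orth _ (hJa v hv), hf₁orth _ (hJa w hw), hf₁orth _ (hJa u hu),
      hf₂orth _ (hJa v hv), hf₂orth _ (hJa w hw), hf₂orth _ (hJa u hu),
      h1v _ (hJa v hv), h1v _ (hJa w hw), h1v _ (hJa u hu),
      h2v _ (hJa v hv), h2v _ (hJa w hw), h2v _ (hJa u hu),
      hf₁orth _ (hBa v hv), hf₁orth _ (hBa w hw), hf₁orth _ (hBa u hu),
      hf₂orth _ (hBa v hv), hf₂orth _ (hBa w hw), hf₂orth _ (hBa u hu),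
      h1v _ (hBa v hv), h1v _ (hBa w hw), h1v _ (hBa u hu),
      h2v _ (hBa v hv), h2v _ (hBa w hw), h2v _ (hBa u hu),
      hf₁orth _ (hBa _ (hJa v hv)), hf₁orth _ (hBa _ (hJa w hw)),
      hf₁orth _ (hBa _ (hJa u hu)),
      hf₂orth _ (hBa _ (hJa v hv)), hf₂orth _ (hBa _ (hJa w hw)),
      hf₂orth _ (hBa _ (hJa u hu)),
      h1v _ (hBa _ (hJa v hv)), h1v _ (hBa _ (hJa w hw)), h1v _ (hBa _ (hJa u hu)),
      h2v _ (hBa _ (hJa v hv)), h2v _ (hBa _ (hJa w hw)), h2v _ (hBa _ (hJa u hu))]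
    linear_combination (lam*a) * hJs w hw u hu + (-(lam*c)) * hJs v hv u hu
      + (lam*e₁) * hJs v hv w hw + (-a) * hBJs w hw u hu + c * hBJs v hv u hu
      + (-e₁) * hBJs v hv w hw
end

section
/- Let 𝔤 be a real Lie algebra of dimension 2n+2 with n ≥ 2, let 𝔲 ⊆ 𝔤 be an abelian ideal of codimension one, and let (ω, θ) be an LCS structure on 𝔤 with θ ≠ 0. Then: (i) θ(x) = 0 for all x ∈ 𝔲; (ii) the kernel K = {x ∈ 𝔲 : ω(x, y) = 0 for all y ∈ 𝔲} of the restriction ω|_{𝔲×𝔲} is one-dimensional, and any f₂ spanning K satisfies [x, f₂] ∈ ℝ f₂ for all x ∈ 𝔤; (iii) for any f₁ ∈ 𝔤 with a := θ(f₁) ≠ 0 and for all x, y in 𝔳 := {x ∈ 𝔲 : ω(f₂, x) = 0}, one has ω([f₁, x], y) + ω(x, [f₁, y]) = -a · ω(x, y). -/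
/-- **LCS structures on almost abelian Lie algebras of dimension ≥ 6 (towards Theorem
`lcs`).**
Let `𝔤` be a real Lie algebra of dimension `2n+2`, `n ≥ 2`, with an abelian ideal `𝔲`
of codimension one, and let `(ω, θ)` be an LCS structure with `θ ≠ 0`.  Then
(i) `θ` vanishes on `𝔲`;
(ii) the kernel `K` of `ω|_{𝔲×𝔲}` is one-dimensional and any `f₂` spanning it satisfies
`[x, f₂] ∈ ℝ f₂` for all `x ∈ 𝔤`;
(iii) for any `f₁` with `a = θ(f₁) ≠ 0` and all `x, y ∈ 𝔳 = {x ∈ 𝔲 : ω(f₂,x) = 0}`,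
`ω([f₁,x],y) + ω(x,[f₁,y]) = -a·ω(x,y)`. -/
theorem lcs_almost_abelian_dim_ge_six
    {g : Type*} [LieRing g] [LieAlgebra ℝ g] [FiniteDimensional ℝ g]
    (n : ℕ) (hn : 2 ≤ n) (hdim : Module.finrank ℝ g = 2 * n + 2)
    (𝔲 : LieIdeal ℝ g)
    (habelian : ∀ x ∈ 𝔲, ∀ y ∈ 𝔲, ⁅x, y⁆ = 0)
    (hcodim : Module.finrank ℝ ↥(𝔲 : Submodule ℝ g) + 1 = Module.finrank ℝ g)
    (ω : g →ₗ[ℝ] g →ₗ[ℝ] ℝ)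
    (halt : ∀ x : g, ω x x = 0)
    (hnondeg : ∀ x : g, (∀ y : g, ω x y = 0) → x = 0)
    (θ : g →ₗ[ℝ] ℝ)
    (hθclosed : ∀ x y : g, θ ⁅x, y⁆ = 0) (hθne : θ ≠ 0)
    (hlcs : ∀ x y z : g,
      -ω ⁅x, y⁆ z + ω ⁅x, z⁆ y - ω ⁅y, z⁆ x
        = θ x * ω y z - θ y * ω x z + θ z * ω x y) :
    (∀ x ∈ 𝔲, θ x = 0) ∧
    (Module.finrank ℝ
      ↥((𝔲 : Submodule ℝ g) ⊓ ⨅ y ∈ (𝔲 : Submodule ℝ g), LinearMap.ker (ω.flip y)) = 1) ∧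
    (∀ f₂ : g,
      Submodule.span ℝ {f₂}
          = (𝔲 : Submodule ℝ g) ⊓ ⨅ y ∈ (𝔲 : Submodule ℝ g), LinearMap.ker (ω.flip y) →
      (∀ x : g, ∃ c : ℝ, ⁅x, f₂⁆ = c • f₂) ∧
      (∀ f₁ : g, θ f₁ ≠ 0 →
        ∀ x y : g, x ∈ 𝔲 → ω f₂ x = 0 → y ∈ 𝔲 → ω f₂ y = 0 →
          ω ⁅f₁, x⁆ y + ω x ⁅f₁, y⁆ = -θ f₁ * ω x y)) := by
  have hskew : ∀ x y : g, ω x y = - ω y x := by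
    intro x y
    have h := halt (x + y)
    simp only [map_add, LinearMap.add_apply, halt x, halt y] at h
    linarith
  have hrefl : (ω : LinearMap.BilinForm ℝ g).IsRefl := by
    intro x y h
    rw [hskew] at h; linarith
  have hndg : LinearMap.BilinForm.Nondegenerate (ω : LinearMap.BilinForm ℝ g) :=
    ⟨hnondeg, fun y hy => hnondeg y (fun x => by rw [hskew, hy x, neg_zero])⟩
  have hkerθ : Module.finrank ℝ (LinearMap.ker θ) = 2 * n + 1 := by
    have hr : LinearMap.range θ = ⊤ := by
      obtain ⟨v, hv⟩ := DFunLike.ne_iff.mp hθne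
      simp only [LinearMap.zero_apply] at hv
      rw [LinearMap.range_eq_top]
      intro c
      exact ⟨(c / θ v) • v, by simp; field_simp⟩
    have := LinearMap.finrank_range_add_finrank_ker θ
    rw [hr, finrank_top] at this
    simp only [Module.finrank_self] at this
    omega
  -- part (i)
  have hθ0 : ∀ x ∈ 𝔲, θ x = 0 := by
    by_contra hcon
    push_neg at hcon
    obtain ⟨x0, hx0u, hx0θ⟩ := hcon
    set W : Submodule ℝ g := (𝔲 : Submodule ℝ g) ⊓ LinearMap.ker θ with hW
    have hWu : ∀ w ∈ W, w ∈ 𝔲 := fun w hw => hw.1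
    have hiso : ∀ y ∈ W, ∀ z ∈ W, ω y z = 0 := by
      intro y hy z hz
      have h := hlcs x0 y z
      rw [habelian x0 hx0u y (hy.1), habelian x0 hx0u z (hz.1),
        habelian y (hy.1) z (hz.1)] at h
      simp only [map_zero, LinearMap.zero_apply] at h
      have hyθ : θ y = 0 := hy.2
      have hzθ : θ z = 0 := hz.2
      rw [hyθ, hzθ] at h
      simp only [zero_mul, sub_zero, add_zero] at h
      have : θ x0 * ω y z = 0 := by linarith
      rcases mul_eq_zero.mp this with h' | h'
      · exact absurd h' hx0θ
      · exact h'
    have hWle : W ≤ LinearMap.BilinForm.orthogonal (ω : LinearMap.BilinForm ℝ g) W := by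
      intro w hw
      rw [LinearMap.BilinForm.mem_orthogonal_iff]
      intro z hz
      exact hiso z hz w hw
    have hWrank : Module.finrank ℝ W = 2 * n := by
      have hsup : (𝔲 : Submodule ℝ g) ⊔ LinearMap.ker θ = ⊤ := by
        apply Submodule.eq_top_of_finrank_eq
        have h1 : LinearMap.ker θ < (𝔲 : Submodule ℝ g) ⊔ LinearMap.ker θ := by
          refine lt_of_le_of_ne le_sup_right ?_
          intro h
          have : x0 ∈ LinearMap.ker θ := by
            rw [h]; exact Submodule.mem_sup_left hx0u
          exact hx0θ this
        have h2 := Submodule.finrank_lt_finrank_of_lt h1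
        have h3 := Submodule.finrank_le ((𝔲 : Submodule ℝ g) ⊔ LinearMap.ker θ)
        omega
      have := Submodule.finrank_sup_add_finrank_inf_eq (𝔲 : Submodule ℝ g)
        (LinearMap.ker θ)
      rw [hsup, finrank_top] at this
      rw [hW]
      omega
    have h1 := LinearMap.BilinForm.finrank_orthogonal hndg W
    have h2 := Submodule.finrank_mono hWle
    rw [h1, hWrank, hdim] at h2
    omega
  -- 𝔲 = ker θ
  have h𝔲ker : (𝔲 : Submodule ℝ g) = LinearMap.ker θ := by
    apply Submodule.eq_of_le_of_finrank_eq
    · intro x hx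
      exact hθ0 x hx
    · rw [hkerθ]; omega
  have hbr𝔲 : ∀ x y : g, ⁅x, y⁆ ∈ 𝔲 := by
    intro x y
    have : ⁅x, y⁆ ∈ (𝔲 : Submodule ℝ g) := by
      rw [h𝔲ker]; exact hθclosed x y
    exact this
  -- the kernel K
  set O := LinearMap.BilinForm.orthogonal (ω : LinearMap.BilinForm ℝ g) (𝔲 : Submodule ℝ g) with hO
  have hmemO : ∀ x : g, x ∈ O ↔ ∀ y ∈ 𝔲, ω x y = 0 := by
    intro x
    rw [LinearMap.BilinForm.mem_orthogonal_iff]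
    constructor
    · intro h y hy
      have := h y hy
      rw [hskew x y]
      simp [this]
    · intro h y hy
      have := h y hy
      show ω y x = 0
      rw [hskew y x, this, neg_zero]
  have hOle : O ≤ (𝔲 : Submodule ℝ g) := by
    intro v hv
    rw [h𝔲ker]
    show θ v = 0
    by_contra hvθ
    have hv0 : v = 0 := by
      apply hnondeg
      intro z
      have hz : z - (θ z / θ v) • v ∈ (𝔲 : Submodule ℝ g) := by
        rw [h𝔲ker]
        simp only [LinearMap.mem_ker, map_sub, map_smul, smul_eq_mul]
        field_simp
        ring
      have h1 : ω v (z - (θ z / θ v) • v) = 0 := (hmemO v).mp hv _ hz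
      rw [map_sub, map_smul] at h1
      simp only [smul_eq_mul, halt v, mul_zero, sub_zero] at h1
      exact h1
    rw [hv0, map_zero] at hvθ
    exact hvθ rfl
  have hKO : (𝔲 : Submodule ℝ g) ⊓ ⨅ y ∈ (𝔲 : Submodule ℝ g), LinearMap.ker (ω.flip y)
      = O := by
    ext x
    simp only [Submodule.mem_inf, Submodule.mem_iInf, LinearMap.mem_ker,
      LinearMap.flip_apply]
    constructor
    · intro ⟨hxu, hx⟩
      rw [hmemO]
      intro y hy
      exact hx y hy
    · intro hx
      refine ⟨hOle hx, ?_⟩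
      intro y hy
      exact (hmemO x).mp hx y hy
  have hOrank : Module.finrank ℝ O = 1 := by
    rw [hO, LinearMap.BilinForm.finrank_orthogonal hndg]
    omega
  refine ⟨hθ0, by rw [hKO]; exact hOrank, ?_⟩
  intro f₂ hf₂
  rw [hKO] at hf₂
  have hf₂O : f₂ ∈ O := by
    rw [← hf₂]; exact Submodule.mem_span_singleton_self f₂
  have hf₂u : f₂ ∈ 𝔲 := hOle hf₂O
  constructor
  · intro x
    have hmem : ⁅x, f₂⁆ ∈ O := by
      rw [hmemO]
      intro y hy
      have h := hlcs x f₂ y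
      rw [habelian f₂ hf₂u y hy] at h
      have hωxy : ω ⁅x, y⁆ f₂ = 0 := by
        rw [hskew]
        rw [(hmemO f₂).mp hf₂O ⁅x, y⁆ (hbr𝔲 x y), neg_zero]
      have hf₂y : ω f₂ y = 0 := (hmemO f₂).mp hf₂O y hy
      rw [hθ0 f₂ hf₂u, hθ0 y hy, hf₂y, hωxy] at h
      simp only [map_zero, LinearMap.zero_apply, mul_zero, zero_mul] at h
      linarith
    rw [← hf₂, Submodule.mem_span_singleton] at hmem
    obtain ⟨c, hc⟩ := hmem
    exact ⟨c, hc.symm⟩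
  · intro f₁ hf₁ x y hxu hf₂x hyu hf₂y
    have h := hlcs f₁ x y
    rw [habelian x hxu y hyu] at h
    rw [hθ0 x hxu, hθ0 y hyu] at h
    simp only [map_zero, LinearMap.zero_apply, zero_mul] at h
    have hxy : ω ⁅f₁, y⁆ x = - ω x ⁅f₁, y⁆ := hskew _ _
    linarith
end

section
/- Let n ≥ 1 and let 𝔤 be a (2n+2)-dimensional real Lie algebra with a basis f₁, f₂, u₁, …, u_n, v₁, …, v_n such that: the span 𝔲 of f₂, u₁, …, u_n, v₁, …, v_n is an abelian ideal; [f₁, f₂] = μ f₂ for some μ ∈ ℝ; and for every x in V := span{u₁, …, u_n, v₁, …, v_n}, [f₁, x] = η(x) f₂ + λ x + B x, where η is a linear functional on V, λ ∈ ℝ with λ ≠ 0, and B : V → V is linear with ω₀(Bx, y) + ω₀(x, By) = 0 for all x, y ∈ V, where ω₀ = Σ_{i=1}^n uⁱ∧vⁱ (so B ∈ 𝔰𝔭(n, ℝ)). Then, with f¹, f², uⁱ, vⁱ the dual basis, ω := f¹∧f² + Σ_{i=1}^n uⁱ∧vⁱ and θ := -2λ f¹ form an LCS structure on 𝔤: ω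 is nondegenerate, θ is closed and nonzero, and dω = θ∧ω. -/
/-- The standard symplectic form `ω₀ = Σᵢ uⁱ∧vⁱ` on the span of the `uᵢ, vᵢ`,
expressed through the coordinates of the basis `e` indexed by `Fin 2 ⊕ Fin n ⊕ Fin n`
(`f₁ = e (inl 0)`, `f₂ = e (inl 1)`, `uᵢ = e (inr (inl i))`, `vᵢ = e (inr (inr i))`). -/
noncomputable def omegaZero {g : Type*} [AddCommGroup g] [Module ℝ g] (n : ℕ)
    (e : Module.Basis (Fin 2 ⊕ Fin n ⊕ Fin n) ℝ g) (x y : g) : ℝ :=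
  ∑ i : Fin n,
    (e.coord (Sum.inr (Sum.inl i)) x * e.coord (Sum.inr (Sum.inr i)) y
      - e.coord (Sum.inr (Sum.inr i)) x * e.coord (Sum.inr (Sum.inl i)) y)

/-- The `2`-form `ω = f¹∧f² + Σᵢ uⁱ∧vⁱ`. -/
noncomputable def omegaLCS {g : Type*} [AddCommGroup g] [Module ℝ g] (n : ℕ)
    (e : Module.Basis (Fin 2 ⊕ Fin n ⊕ Fin n) ℝ g) (x y : g) : ℝ :=
  e.coord (Sum.inl 0) x * e.coord (Sum.inl 1) y
    - e.coord (Sum.inl 1) x * e.coord (Sum.inl 0) y + omegaZero n e x y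

section Aux
variable {g : Type*} [AddCommGroup g] [Module ℝ g] {n : ℕ}
  (e : Module.Basis (Fin 2 ⊕ Fin n ⊕ Fin n) ℝ g)

lemma oZ_add_left (x x' y : g) :
    omegaZero n e (x + x') y = omegaZero n e x y + omegaZero n e x' y := by
  simp only [omegaZero, map_add, ← Finset.sum_add_distrib]
  exact Finset.sum_congr rfl fun i _ => by ring

lemma oZ_sub_left (x x' y : g) :
    omegaZero n e (x - x') y = omegaZero n e x y - omegaZero n e x' y := by
  simp only [omegaZero, map_sub, ← Finset.sum_sub_distrib]
  exact Finset.sum_congr rfl fun i _ => by ring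

lemma oZ_smul_left (a : ℝ) (x y : g) :
    omegaZero n e (a • x) y = a * omegaZero n e x y := by
  simp only [omegaZero, map_smul, smul_eq_mul, Finset.mul_sum]
  exact Finset.sum_congr rfl fun i _ => by ring

lemma oZ_antisymm (x y : g) : omegaZero n e x y = - omegaZero n e y x := by
  simp only [omegaZero, ← Finset.sum_neg_distrib]
  exact Finset.sum_congr rfl fun i _ => by ring

lemma oZ_basis_left (k : Fin 2) (y : g) : omegaZero n e (e (Sum.inl k)) y = 0 := by
  simp [omegaZero, Module.Basis.coord_apply, Module.Basis.repr_self, Finsupp.single_apply]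

/-- the component of `x` in `V`. -/
noncomputable def wpart (x : g) : g :=
  x - e.coord (Sum.inl 0) x • e (Sum.inl 0) - e.coord (Sum.inl 1) x • e (Sum.inl 1)

lemma decomp (x : g) :
    x = e.coord (Sum.inl 0) x • e (Sum.inl 0) + e.coord (Sum.inl 1) x • e (Sum.inl 1)
      + wpart e x := by
  simp [wpart]

lemma wpart_mem (x : g) :
    wpart e x ∈ Submodule.span ℝ (Set.range fun i : Fin n ⊕ Fin n => e (Sum.inr i)) := by
  have h := e.sum_repr x
  rw [Fintype.sum_sum_type, Fin.sum_univ_two] at h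
  have hw : ∑ i : Fin n ⊕ Fin n, e.repr x (Sum.inr i) • e (Sum.inr i) = wpart e x := by
    simp only [wpart, Module.Basis.coord_apply, eq_sub_iff_add_eq]
    conv_rhs => rw [← h]
    abel
  rw [← hw]
  exact Submodule.sum_mem _ fun i _ =>
    Submodule.smul_mem _ _ (Submodule.subset_span ⟨i, rfl⟩)

lemma coord_inl_of_mem {s : g}
    (hs : s ∈ Submodule.span ℝ (Set.range fun i : Fin n ⊕ Fin n => e (Sum.inr i)))
    (k : Fin 2) : e.coord (Sum.inl k) s = 0 := by
  induction hs using Submodule.span_induction with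
  | mem y hy =>
    obtain ⟨i, rfl⟩ := hy
    simp [Module.Basis.coord_apply, Module.Basis.repr_self, Finsupp.single_apply]
  | zero => simp
  | add a b _ _ ha hb => rw [map_add, ha, hb, add_zero]
  | smul c a _ ha => rw [map_smul, ha, smul_zero]

lemma oZ_wpart_left (x y : g) : omegaZero n e (wpart e x) y = omegaZero n e x y := by
  simp only [omegaZero, wpart, map_sub, map_smul]
  exact Finset.sum_congr rfl fun i _ => by
    simp [Module.Basis.coord_apply, Module.Basis.repr_self, Finsupp.single_apply]

lemma oZ_wpart_right (x y : g) : omegaZero n e x (wpart e y) = omegaZero n e x y := by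
  rw [oZ_antisymm, oZ_wpart_left, ← oZ_antisymm]

end Aux

section Lie
variable {g : Type*} [LieRing g] [LieAlgebra ℝ g] {n : ℕ}
  (e : Module.Basis (Fin 2 ⊕ Fin n ⊕ Fin n) ℝ g)

lemma lie_zero_aux
    (habelian : ∀ i j : Fin 2 ⊕ Fin n ⊕ Fin n,
      i ≠ Sum.inl 0 → j ≠ Sum.inl 0 → ⁅e i, e j⁆ = 0) :
    ∀ s ∈ Submodule.span ℝ (e '' {i | i ≠ Sum.inl 0}),
    ∀ t ∈ Submodule.span ℝ (e '' {i | i ≠ Sum.inl 0}), ⁅s, t⁆ = 0 := by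
  intro s hs
  induction hs using Submodule.span_induction with
  | mem a ha =>
    intro t ht
    induction ht using Submodule.span_induction with
    | mem b hb =>
      obtain ⟨i, hi, rfl⟩ := ha
      obtain ⟨j, hj, rfl⟩ := hb
      exact habelian i j hi hj
    | zero => simp
    | add u v _ _ hu hv => rw [lie_add, hu, hv, add_zero]
    | smul c u _ hu => rw [lie_smul, hu, smul_zero]
  | zero => intro t _; simp
  | add u v _ _ hu hv => intro t ht; rw [add_lie, hu t ht, hv t ht, add_zero]
  | smul c u _ hu => intro t ht; rw [smul_lie, hu t ht, smul_zero]

end Lie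

section Lie2
variable {g : Type*} [LieRing g] [LieAlgebra ℝ g] {n : ℕ}
  (e : Module.Basis (Fin 2 ⊕ Fin n ⊕ Fin n) ℝ g)

lemma brkey (μ lam : ℝ) (η : g →ₗ[ℝ] ℝ) (B : g →ₗ[ℝ] g)
    (habelian : ∀ i j : Fin 2 ⊕ Fin n ⊕ Fin n,
      i ≠ Sum.inl 0 → j ≠ Sum.inl 0 → ⁅e i, e j⁆ = 0)
    (hbr12 : ⁅e (Sum.inl 0), e (Sum.inl 1)⁆ = μ • e (Sum.inl 1))
    (hbrV : ∀ x ∈ Submodule.span ℝ (Set.range fun i : Fin n ⊕ Fin n => e (Sum.inr i)),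
      ⁅e (Sum.inl 0), x⁆ = η x • e (Sum.inl 1) + lam • x + B x)
    (x y : g) :
    ⁅x, y⁆ = (e.coord (Sum.inl 0) x * (μ * e.coord (Sum.inl 1) y + η (wpart e y))
          - e.coord (Sum.inl 0) y * (μ * e.coord (Sum.inl 1) x + η (wpart e x)))
            • e (Sum.inl 1)
      + ((lam * e.coord (Sum.inl 0) x) • wpart e y
          + e.coord (Sum.inl 0) x • B (wpart e y))
      - ((lam * e.coord (Sum.inl 0) y) • wpart e x
          + e.coord (Sum.inl 0) y • B (wpart e x)) := by
  have hV2 : Submodule.span ℝ (Set.range fun i : Fin n ⊕ Fin n => e (Sum.inr i))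
      ≤ Submodule.span ℝ (e '' {i | i ≠ Sum.inl 0}) := by
    rw [Submodule.span_le]
    rintro _ ⟨i, rfl⟩
    exact Submodule.subset_span ⟨Sum.inr i, by simp, rfl⟩
  have hf2mem : e (Sum.inl 1) ∈ Submodule.span ℝ (e '' {i | i ≠ Sum.inl 0}) :=
    Submodule.subset_span ⟨Sum.inl 1, by simp, rfl⟩
  have hz := lie_zero_aux e habelian
  have h1y : ⁅e (Sum.inl 0), wpart e y⁆
      = η (wpart e y) • e (Sum.inl 1) + lam • wpart e y + B (wpart e y) :=
    hbrV _ (wpart_mem e y)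
  have h1x : ⁅e (Sum.inl 0), wpart e x⁆
      = η (wpart e x) • e (Sum.inl 1) + lam • wpart e x + B (wpart e x) :=
    hbrV _ (wpart_mem e x)
  have hf21 : ⁅e (Sum.inl 1), e (Sum.inl 0)⁆ = -(μ • e (Sum.inl 1)) := by
    rw [← lie_skew, hbr12]
  have hx1 : ⁅wpart e x, e (Sum.inl 0)⁆
      = -(η (wpart e x) • e (Sum.inl 1) + lam • wpart e x + B (wpart e x)) := by
    rw [← lie_skew, h1x]
  have h2y : ⁅e (Sum.inl 1), wpart e y⁆ = 0 := hz _ hf2mem _ (hV2 (wpart_mem e y))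
  have hx2 : ⁅wpart e x, e (Sum.inl 1)⁆ = 0 := hz _ (hV2 (wpart_mem e x)) _ hf2mem
  have hxy : ⁅wpart e x, wpart e y⁆ = 0 :=
    hz _ (hV2 (wpart_mem e x)) _ (hV2 (wpart_mem e y))
  conv_lhs => rw [decomp e x, decomp e y]
  simp only [add_lie, lie_add, smul_lie, lie_smul, lie_self, hbr12, h1y, hf21, hx1,
    h2y, hx2, hxy, smul_zero, zero_add, add_zero, smul_neg, smul_add, smul_smul]
  module

end Lie2

/-- **LCS structures on almost abelian Lie algebras (Theorem `lcs`, converse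
direction).**
Let `𝔤` be a `(2n+2)`-dimensional real Lie algebra with basis
`f₁, f₂, u₁, …, u_n, v₁, …, v_n` such that the span of `f₂, uᵢ, vⱼ` is an abelian ideal,
`[f₁, f₂] = μ f₂`, and `[f₁, x] = η(x) f₂ + λ x + B x` for `x` in
`V = span{uᵢ, vⱼ}`, with `λ ≠ 0` and `B ∈ 𝔰𝔭(n, ℝ)` preserving `V`.  Then
`ω = f¹∧f² + Σᵢ uⁱ∧vⁱ` and `θ = -2λ f¹` form an LCS structure on `𝔤`. -/
theorem lcs_almost_abelian_converse
    {g : Type*} [LieRing g] [LieAlgebra ℝ g]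
    (n : ℕ) (hn : 1 ≤ n)
    (e : Module.Basis (Fin 2 ⊕ Fin n ⊕ Fin n) ℝ g)
    (μ lam : ℝ) (hlam : lam ≠ 0)
    (η : g →ₗ[ℝ] ℝ) (B : g →ₗ[ℝ] g)
    (habelian : ∀ i j : Fin 2 ⊕ Fin n ⊕ Fin n,
      i ≠ Sum.inl 0 → j ≠ Sum.inl 0 → ⁅e i, e j⁆ = 0)
    (hbr12 : ⁅e (Sum.inl 0), e (Sum.inl 1)⁆ = μ • e (Sum.inl 1))
    (hbrV : ∀ x ∈ Submodule.span ℝ (Set.range fun i : Fin n ⊕ Fin n => e (Sum.inr i)),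
      ⁅e (Sum.inl 0), x⁆ = η x • e (Sum.inl 1) + lam • x + B x)
    (hBV : ∀ x ∈ Submodule.span ℝ (Set.range fun i : Fin n ⊕ Fin n => e (Sum.inr i)),
      B x ∈ Submodule.span ℝ (Set.range fun i : Fin n ⊕ Fin n => e (Sum.inr i)))
    (hBsp : ∀ x ∈ Submodule.span ℝ (Set.range fun i : Fin n ⊕ Fin n => e (Sum.inr i)),
      ∀ y ∈ Submodule.span ℝ (Set.range fun i : Fin n ⊕ Fin n => e (Sum.inr i)),
      omegaZero n e (B x) y + omegaZero n e x (B y) = 0) :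
    (∀ x : g, (∀ y : g, omegaLCS n e x y = 0) → x = 0) ∧
    (∀ x y : g, -2 * lam * e.coord (Sum.inl 0) ⁅x, y⁆ = 0) ∧
    (∃ x : g, -2 * lam * e.coord (Sum.inl 0) x ≠ 0) ∧
    (∀ x y z : g,
      -omegaLCS n e ⁅x, y⁆ z + omegaLCS n e ⁅x, z⁆ y - omegaLCS n e ⁅y, z⁆ x
        = (-2 * lam * e.coord (Sum.inl 0) x) * omegaLCS n e y z
          - (-2 * lam * e.coord (Sum.inl 0) y) * omegaLCS n e x z
          + (-2 * lam * e.coord (Sum.inl 0) z) * omegaLCS n e x y) := by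
  have hw0 : ∀ z : g, e.coord (Sum.inl 0) (wpart e z) = 0 :=
    fun z => coord_inl_of_mem e (wpart_mem e z) 0
  have hw1 : ∀ z : g, e.coord (Sum.inl 1) (wpart e z) = 0 :=
    fun z => coord_inl_of_mem e (wpart_mem e z) 1
  have hB0 : ∀ z : g, e.coord (Sum.inl 0) (B (wpart e z)) = 0 :=
    fun z => coord_inl_of_mem e (hBV _ (wpart_mem e z)) 0
  have hB1 : ∀ z : g, e.coord (Sum.inl 1) (B (wpart e z)) = 0 :=
    fun z => coord_inl_of_mem e (hBV _ (wpart_mem e z)) 1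
  have hc20 : e.coord (Sum.inl 0) (e (Sum.inl 1)) = (0 : ℝ) := by
    simp [Module.Basis.coord_apply, Module.Basis.repr_self, Finsupp.single_apply]
  have hc21 : e.coord (Sum.inl 1) (e (Sum.inl 1)) = (1 : ℝ) := by
    simp [Module.Basis.coord_apply, Module.Basis.repr_self]
  have hbr := brkey e μ lam η B habelian hbr12 hbrV
  have hS : ∀ x y : g,
      omegaZero n e (B (wpart e x)) y = omegaZero n e (B (wpart e y)) x := by
    intro x y
    calc omegaZero n e (B (wpart e x)) y
        = omegaZero n e (B (wpart e x)) (wpart e y) := (oZ_wpart_right e _ y).symm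
      _ = -omegaZero n e (wpart e x) (B (wpart e y)) := by
          have := hBsp _ (wpart_mem e x) _ (wpart_mem e y); linarith
      _ = omegaZero n e (B (wpart e y)) (wpart e x) := by
          rw [oZ_antisymm e (wpart e x) (B (wpart e y)), neg_neg]
      _ = omegaZero n e (B (wpart e y)) x := oZ_wpart_right e _ x
  refine ⟨?_, ?_, ?_, ?_⟩
  · -- nondegeneracy
    intro x hx
    rw [← e.forall_coord_eq_zero_iff]
    intro i
    match i with
    | Sum.inl 0 =>
      have h := hx (e (Sum.inl 1))
      simpa [omegaLCS, omegaZero, Module.Basis.coord_apply, Module.Basis.repr_self,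
        Finsupp.single_apply] using h
    | Sum.inl 1 =>
      have h := hx (e (Sum.inl 0))
      simp only [omegaLCS, omegaZero, Module.Basis.coord_apply, Module.Basis.repr_self] at h
      simp [Finsupp.single_apply] at h
      simpa [Module.Basis.coord_apply] using h
    | Sum.inr (Sum.inl k) =>
      have h := hx (e (Sum.inr (Sum.inr k)))
      simp only [omegaLCS, omegaZero, Module.Basis.coord_apply, Module.Basis.repr_self] at h
      simp [Finsupp.single_apply] at h
      simpa [Module.Basis.coord_apply] using h
    | Sum.inr (Sum.inr k) =>
      have h := hx (e (Sum.inr (Sum.inl k)))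
      simp only [omegaLCS, omegaZero, Module.Basis.coord_apply, Module.Basis.repr_self] at h
      simp [Finsupp.single_apply] at h
      simpa [Module.Basis.coord_apply] using h
  · -- θ closed
    intro x y
    rw [hbr x y]
    simp [map_add, map_sub, map_smul, hc20, hw0, hB0]
  · -- θ nonzero
    refine ⟨e (Sum.inl 0), ?_⟩
    simp [Module.Basis.coord_apply, Module.Basis.repr_self, hlam]
  · -- dω = θ ∧ ω
    intro x y z
    rw [hbr x y, hbr x z, hbr y z]
    simp only [omegaLCS, map_add, map_sub, map_smul, smul_eq_mul,
      oZ_add_left, oZ_sub_left, oZ_smul_left, oZ_basis_left, oZ_wpart_left,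
      hw0, hw1, hB0, hB1, hc20, hc21]
    simp only [hS z x, hS z y, hS y x, oZ_antisymm e z y, oZ_antisymm e z x,
      oZ_antisymm e y x]
    ring
end

section
/- Let 𝔤 be a real Lie algebra of dimension ≥ 6 that admits an abelian ideal of codimension one (𝔤 is almost abelian), and let (ω, θ) be an LCS structure on 𝔤. Then the LCS structure is of the second kind: θ(x) = 0 for every x ∈ 𝔤_ω. -/
/-- **Corollary: LCS structures on almost abelian Lie algebras of dimension ≥ 6 are of
the second kind.**
Let `𝔤` be a real Lie algebra of dimension `≥ 6` with an abelian ideal of codimension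
one, and let `(ω, θ)` be an LCS structure on `𝔤`.  Then `θ` vanishes on
`𝔤_ω = {x : ω([x,y],z) + ω(y,[x,z]) = 0 ∀ y z}`. -/
theorem lcs_second_kind_dim_ge_six
    {g : Type*} [LieRing g] [LieAlgebra ℝ g] [FiniteDimensional ℝ g]
    (hdim : 6 ≤ Module.finrank ℝ g)
    (𝔲 : LieIdeal ℝ g)
    (habelian : ∀ x ∈ 𝔲, ∀ y ∈ 𝔲, ⁅x, y⁆ = 0)
    (hcodim : Module.finrank ℝ ↥(𝔲 : Submodule ℝ g) + 1 = Module.finrank ℝ g)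
    (ω : g →ₗ[ℝ] g →ₗ[ℝ] ℝ)
    (halt : ∀ x : g, ω x x = 0)
    (hnondeg : ∀ x : g, (∀ y : g, ω x y = 0) → x = 0)
    (θ : g →ₗ[ℝ] ℝ)
    (hθclosed : ∀ x y : g, θ ⁅x, y⁆ = 0)
    (hlcs : ∀ x y z : g,
      -ω ⁅x, y⁆ z + ω ⁅x, z⁆ y - ω ⁅y, z⁆ x
        = θ x * ω y z - θ y * ω x z + θ z * ω x y) :
    ∀ x : g, (∀ y z : g, ω ⁅x, y⁆ z + ω y ⁅x, z⁆ = 0) → θ x = 0 := by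
  intro x hx
  by_contra hθx
  -- skew-symmetry of ω
  have hskew : ∀ a b : g, ω a b = -ω b a := by
    intro a b
    have h := halt (a + b)
    simp only [map_add, LinearMap.add_apply, halt a, halt b] at h
    linarith
  -- key identity: for y,z ∈ 𝔲 with θ y = 0 and ω x y = 0, we get ω y z = 0
  have hkey : ∀ y ∈ 𝔲, θ y = 0 → ω x y = 0 → ∀ u ∈ 𝔲, ω y u = 0 := by
    intro y hy hθy hωxy u hu
    have hb := hlcs x y u
    have hbr : ⁅y, u⁆ = (0 : g) := habelian y hy u hu
    have hinv := hx y u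
    have h1 : ω ⁅x, u⁆ y = -ω y ⁅x, u⁆ := hskew _ _
    rw [hbr] at hb
    simp only [map_zero, LinearMap.zero_apply, hθy, hωxy, zero_mul, mul_zero,
      sub_zero, add_zero] at hb
    -- hb : -ω ⁅x, y⁆ u + ω ⁅x, u⁆ y - 0 = θ x * ω y u
    have h0 : θ x * ω y u = 0 := by linarith
    exact (mul_eq_zero.mp h0).resolve_left hθx
  -- pick e ∉ 𝔲
  obtain ⟨e, he⟩ : ∃ e : g, e ∉ (𝔲 : Submodule ℝ g) := by
    by_contra h
    push_neg at h
    have : (𝔲 : Submodule ℝ g) = ⊤ := Submodule.eq_top_iff'.mpr h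
    rw [this, finrank_top] at hcodim
    omega
  have hsup : (𝔲 : Submodule ℝ g) ⊔ Submodule.span ℝ {e} = ⊤ := by
    apply Submodule.eq_top_of_finrank_eq
    have h1 : (𝔲 : Submodule ℝ g) < (𝔲 : Submodule ℝ g) ⊔ Submodule.span ℝ {e} := by
      refine lt_of_le_of_ne le_sup_left ?_
      intro habs
      exact he (habs ▸ Submodule.mem_sup_right (Submodule.mem_span_singleton_self e))
    have h2 := Submodule.finrank_lt_finrank_of_lt h1
    have h3 : Module.finrank ℝ ↥((𝔲 : Submodule ℝ g) ⊔ Submodule.span ℝ {e})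
        ≤ Module.finrank ℝ g := Submodule.finrank_le _
    omega
  -- the linear map y ↦ (θ y, ω x y, ω y e) on 𝔲
  set f : ↥(𝔲 : Submodule ℝ g) →ₗ[ℝ] ℝ × ℝ × ℝ :=
    LinearMap.prod (θ ∘ₗ (𝔲 : Submodule ℝ g).subtype)
      (LinearMap.prod ((ω x) ∘ₗ (𝔲 : Submodule ℝ g).subtype)
        ((ω.flip e) ∘ₗ (𝔲 : Submodule ℝ g).subtype)) with hf
  have hker : LinearMap.ker f = ⊥ := by
    rw [LinearMap.ker_eq_bot']
    intro y hy
    have hθy : θ (y : g) = 0 := congrArg Prod.fst hy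
    have hωxy : ω x (y : g) = 0 := congrArg (fun p => p.2.1) hy
    have hωye : ω (y : g) e = 0 := congrArg (fun p => p.2.2) hy
    have : (y : g) = 0 := by
      apply hnondeg
      intro z
      have hz : z ∈ (𝔲 : Submodule ℝ g) ⊔ Submodule.span ℝ {e} := hsup ▸ Submodule.mem_top
      obtain ⟨u, hu, v, hv, rfl⟩ := Submodule.mem_sup.mp hz
      obtain ⟨c, rfl⟩ := Submodule.mem_span_singleton.mp hv
      have h1 : ω (y : g) u = 0 := hkey (y : g) y.2 hθy hωxy u hu
      simp [map_add, map_smul, h1, hωye]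
    exact Subtype.ext this
  have hrk := LinearMap.finrank_range_add_finrank_ker f
  have hrange : Module.finrank ℝ ↥(LinearMap.range f) ≤ 3 := by
    have := Submodule.finrank_le (LinearMap.range f)
    simpa [Module.finrank_prod] using this
  rw [hker, finrank_bot] at hrk
  omega
end

section
/- Let 𝔤 be a 4-dimensional real Lie algebra with basis f₁, f₂, f₃, f₄ such that span{f₂, f₃, f₄} is an abelian ideal and [f₁, f₂] = μ f₂, [f₁, f₃] = w₁ f₂ + a f₃ + c f₄, [f₁, f₄] = w₂ f₂ + b f₃ + d f₄ for some real numbers μ, w₁, w₂, a, b, c, d with a + d ≠ 0. Then, with f¹, f², f³, f⁴ the dual basis, ω := f¹∧f² + f³∧f⁴ and θ := -(a+d) f¹ form an LCS structure on 𝔤: ω is nondegenerate, θ is closed and nonzero, and dω = θ∧ω. -/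
/-- **Lemma (4-dimensional almost abelian Lie algebras with `tr A ≠ 0` admit LCS
structures).**
Let `𝔤` be a `4`-dimensional real Lie algebra with basis `f₁, f₂, f₃, f₄` such that
`span{f₂, f₃, f₄}` is an abelian ideal, `[f₁,f₂] = μ f₂`,
`[f₁,f₃] = w₁ f₂ + a f₃ + c f₄`, `[f₁,f₄] = w₂ f₂ + b f₃ + d f₄`, with `a + d ≠ 0`.
Then `ω = f¹∧f² + f³∧f⁴` and `θ = -(a+d) f¹` form an LCS structure on `𝔤`. -/
theorem four_dim_lcs_of_trace_ne_zero
    {g : Type*} [LieRing g] [LieAlgebra ℝ g]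
    (e : Module.Basis (Fin 4) ℝ g)
    (μ w₁ w₂ a b c d : ℝ) (had : a + d ≠ 0)
    (habelian : ∀ i j : Fin 4, i ≠ 0 → j ≠ 0 → ⁅e i, e j⁆ = 0)
    (hbr2 : ⁅e 0, e 1⁆ = μ • e 1)
    (hbr3 : ⁅e 0, e 2⁆ = w₁ • e 1 + a • e 2 + c • e 3)
    (hbr4 : ⁅e 0, e 3⁆ = w₂ • e 1 + b • e 2 + d • e 3) :
    (∀ x : g,
      (∀ y : g,
        e.coord 0 x * e.coord 1 y - e.coord 1 x * e.coord 0 y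
          + e.coord 2 x * e.coord 3 y - e.coord 3 x * e.coord 2 y = 0) → x = 0) ∧
    (∀ x y : g, -(a + d) * e.coord 0 ⁅x, y⁆ = 0) ∧
    (∃ x : g, -(a + d) * e.coord 0 x ≠ 0) ∧
    (∀ x y z : g,
      -(e.coord 0 ⁅x, y⁆ * e.coord 1 z - e.coord 1 ⁅x, y⁆ * e.coord 0 z
          + e.coord 2 ⁅x, y⁆ * e.coord 3 z - e.coord 3 ⁅x, y⁆ * e.coord 2 z)
        + (e.coord 0 ⁅x, z⁆ * e.coord 1 y - e.coord 1 ⁅x, z⁆ * e.coord 0 y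
          + e.coord 2 ⁅x, z⁆ * e.coord 3 y - e.coord 3 ⁅x, z⁆ * e.coord 2 y)
        - (e.coord 0 ⁅y, z⁆ * e.coord 1 x - e.coord 1 ⁅y, z⁆ * e.coord 0 x
          + e.coord 2 ⁅y, z⁆ * e.coord 3 x - e.coord 3 ⁅y, z⁆ * e.coord 2 x)
        = (-(a + d) * e.coord 0 x)
            * (e.coord 0 y * e.coord 1 z - e.coord 1 y * e.coord 0 z
              + e.coord 2 y * e.coord 3 z - e.coord 3 y * e.coord 2 z)
          - (-(a + d) * e.coord 0 y)
            * (e.coord 0 x * e.coord 1 z - e.coord 1 x * e.coord 0 z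
              + e.coord 2 x * e.coord 3 z - e.coord 3 x * e.coord 2 z)
          + (-(a + d) * e.coord 0 z)
            * (e.coord 0 x * e.coord 1 y - e.coord 1 x * e.coord 0 y
              + e.coord 2 x * e.coord 3 y - e.coord 3 x * e.coord 2 y)) := by

  -- bracket formula
  have hxy : ∀ x y : g, ⁅x, y⁆ =
      (μ * (e.coord 0 x * e.coord 1 y - e.coord 1 x * e.coord 0 y)
        + w₁ * (e.coord 0 x * e.coord 2 y - e.coord 2 x * e.coord 0 y)
        + w₂ * (e.coord 0 x * e.coord 3 y - e.coord 3 x * e.coord 0 y)) • e 1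
      + (a * (e.coord 0 x * e.coord 2 y - e.coord 2 x * e.coord 0 y)
        + b * (e.coord 0 x * e.coord 3 y - e.coord 3 x * e.coord 0 y)) • e 2
      + (c * (e.coord 0 x * e.coord 2 y - e.coord 2 x * e.coord 0 y)
        + d * (e.coord 0 x * e.coord 3 y - e.coord 3 x * e.coord 0 y)) • e 3 := by
    intro x y
    have hx : x = e.coord 0 x • e 0 + e.coord 1 x • e 1 + e.coord 2 x • e 2
        + e.coord 3 x • e 3 := by
      have := e.sum_repr x
      rw [Fin.sum_univ_four] at this
      simp only [Module.Basis.coord_apply]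
      linear_combination (norm := module) -this
    have hy : y = e.coord 0 y • e 0 + e.coord 1 y • e 1 + e.coord 2 y • e 2
        + e.coord 3 y • e 3 := by
      have := e.sum_repr y
      rw [Fin.sum_univ_four] at this
      simp only [Module.Basis.coord_apply]
      linear_combination (norm := module) -this
    have h10 : ⁅e 1, e 0⁆ = -(μ • e 1) := by rw [← lie_skew, hbr2]
    have h20 : ⁅e 2, e 0⁆ = -(w₁ • e 1 + a • e 2 + c • e 3) := by rw [← lie_skew, hbr3]
    have h30 : ⁅e 3, e 0⁆ = -(w₂ • e 1 + b • e 2 + d • e 3) := by rw [← lie_skew, hbr4]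
    conv_lhs => rw [hx, hy]
    simp only [add_lie, lie_add, smul_lie, lie_smul, lie_self, hbr2, hbr3, hbr4,
      h10, h20, h30,
      habelian 1 2 (by decide) (by decide), habelian 1 3 (by decide) (by decide),
      habelian 2 1 (by decide) (by decide), habelian 2 3 (by decide) (by decide),
      habelian 3 1 (by decide) (by decide), habelian 3 2 (by decide) (by decide),
      smul_zero]
    module
  -- coordinates of brackets
  have hcoord : ∀ (i j : Fin 4), e.coord i (e j) = if j = i then 1 else 0 := by
    intro i j
    simp [Module.Basis.coord_apply, Module.Basis.repr_self, Finsupp.single_apply]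
  have hc0 : ∀ x y : g, e.coord 0 ⁅x, y⁆ = 0 := by
    intro x y
    rw [hxy x y]
    simp [hcoord]
  have hc1 : ∀ x y : g, e.coord 1 ⁅x, y⁆ =
      μ * (e.coord 0 x * e.coord 1 y - e.coord 1 x * e.coord 0 y)
        + w₁ * (e.coord 0 x * e.coord 2 y - e.coord 2 x * e.coord 0 y)
        + w₂ * (e.coord 0 x * e.coord 3 y - e.coord 3 x * e.coord 0 y) := by
    intro x y; rw [hxy x y]; simp [hcoord]
  have hc2 : ∀ x y : g, e.coord 2 ⁅x, y⁆ =
      a * (e.coord 0 x * e.coord 2 y - e.coord 2 x * e.coord 0 y)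
        + b * (e.coord 0 x * e.coord 3 y - e.coord 3 x * e.coord 0 y) := by
    intro x y; rw [hxy x y]; simp [hcoord]
  have hc3 : ∀ x y : g, e.coord 3 ⁅x, y⁆ =
      c * (e.coord 0 x * e.coord 2 y - e.coord 2 x * e.coord 0 y)
        + d * (e.coord 0 x * e.coord 3 y - e.coord 3 x * e.coord 0 y) := by
    intro x y; rw [hxy x y]; simp [hcoord]
  refine ⟨?_, ?_, ?_, ?_⟩
  · intro x hx
    have h0 := hx (e 1)
    have h1 := hx (e 0)
    have h2 := hx (e 3)
    have h3 := hx (e 2)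
    simp [hcoord] at h0 h1 h2 h3
    apply e.ext_elem_iff.2
    intro i
    fin_cases i <;> simp [h0, h1, h2, h3]
  · intro x y; rw [hc0]; ring
  · refine ⟨e 0, ?_⟩
    rw [hcoord]
    simpa using neg_ne_zero.2 had
  · intro x y z
    rw [hc0, hc0, hc0, hc1, hc1, hc1, hc2, hc2, hc2, hc3, hc3, hc3]
    ring
end

section
/- Let μ ∈ ℝ with μ ≠ 0 and let 𝔤 be the 4-dimensional real Lie algebra with basis f₁, f₂, f₃, f₄ whose only nonzero brackets (up to antisymmetry) are [f₁, f₂] = μ f₂, [f₁, f₃] = f₄, [f₁, f₄] = -f₃. Then 𝔤 admits no LCS structure with nonzero Lee form: there is no nondegenerate alternating bilinear form ω on 𝔤 and no closed 1-form θ ≠ 0 such that dω = θ∧ω. -/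
/-- **The Lie algebra `𝔯'_{4,μ,0}` (`μ ≠ 0`) admits no LCS structure.**
Let `𝔤` be the `4`-dimensional real Lie algebra with basis `f₁, f₂, f₃, f₄` and nonzero
brackets `[f₁,f₂] = μ f₂`, `[f₁,f₃] = f₄`, `[f₁,f₄] = -f₃` (`μ ≠ 0`).  Then there is no
nondegenerate alternating bilinear form `ω` and closed `1`-form `θ ≠ 0` with
`dω = θ∧ω`. -/
theorem r4mu0_admits_no_lcs
    {g : Type*} [LieRing g] [LieAlgebra ℝ g]
    (μ : ℝ) (hμ : μ ≠ 0)
    (e : Module.Basis (Fin 4) ℝ g)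
    (habelian : ∀ i j : Fin 4, i ≠ 0 → j ≠ 0 → ⁅e i, e j⁆ = 0)
    (hbr2 : ⁅e 0, e 1⁆ = μ • e 1)
    (hbr3 : ⁅e 0, e 2⁆ = e 3)
    (hbr4 : ⁅e 0, e 3⁆ = -e 2) :
    ¬ ∃ (ω : g →ₗ[ℝ] g →ₗ[ℝ] ℝ) (θ : g →ₗ[ℝ] ℝ),
      (∀ x : g, ω x x = 0) ∧
      (∀ x : g, (∀ y : g, ω x y = 0) → x = 0) ∧
      (∀ x y : g, θ ⁅x, y⁆ = 0) ∧
      θ ≠ 0 ∧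
      (∀ x y z : g,
        -ω ⁅x, y⁆ z + ω ⁅x, z⁆ y - ω ⁅y, z⁆ x
          = θ x * ω y z - θ y * ω x z + θ z * ω x y) := by
  rintro ⟨ω, θ, halt, hnd, hcl, hθ, hlcs⟩
  -- skew symmetry
  have skew : ∀ x y : g, ω x y = -ω y x := by
    intro x y
    have h := halt (x + y)
    simp only [map_add, LinearMap.add_apply] at h
    rw [halt x, halt y] at h
    linarith
  -- θ vanishes on e 1, e 2, e 3
  have hθ1 : θ (e 1) = 0 := by
    have h := hcl (e 0) (e 1)
    rw [hbr2, map_smul] at h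
    simpa [hμ] using h
  have hθ3 : θ (e 3) = 0 := by
    have h := hcl (e 0) (e 2)
    rwa [hbr3] at h
  have hθ2 : θ (e 2) = 0 := by
    have h := hcl (e 0) (e 3)
    rw [hbr4, map_neg, neg_eq_zero] at h
    exact h
  -- c := θ (e 0) ≠ 0
  set c : ℝ := θ (e 0) with hc
  have hcne : c ≠ 0 := by
    intro h0
    apply hθ
    apply Module.Basis.ext e
    intro i
    fin_cases i <;> simp [← hc, h0, hθ1, hθ2, hθ3]
  -- notation for entries
  set a : ℝ := ω (e 0) (e 1) with ha
  set b : ℝ := ω (e 0) (e 2) with hb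
  set d : ℝ := ω (e 0) (e 3) with hd
  set p : ℝ := ω (e 1) (e 2) with hp
  set q : ℝ := ω (e 1) (e 3) with hq
  set r : ℝ := ω (e 2) (e 3) with hr
  have hab12 : ⁅e 1, e 2⁆ = 0 := habelian 1 2 (by decide) (by decide)
  have hab13 : ⁅e 1, e 3⁆ = 0 := habelian 1 3 (by decide) (by decide)
  have hab23 : ⁅e 2, e 3⁆ = 0 := habelian 2 3 (by decide) (by decide)
  -- equation from (0,1,2)
  have eq1 : -μ * p - q = c * p := by
    have h := hlcs (e 0) (e 1) (e 2)
    rw [hbr2, hbr3, hab12] at h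
    simp only [map_smul, map_zero, LinearMap.zero_apply, LinearMap.map_zero,
      LinearMap.smul_apply, smul_eq_mul, hθ1, hθ2] at h
    rw [skew (e 3) (e 1)] at h
    rw [← hp, ← hq, ← hc] at h
    linarith
  -- equation from (0,1,3)
  have eq2 : -μ * q + p = c * q := by
    have h := hlcs (e 0) (e 1) (e 3)
    rw [hbr2, hbr4, hab13] at h
    simp only [map_smul, map_neg, map_zero, LinearMap.zero_apply, LinearMap.map_zero,
      LinearMap.neg_apply, LinearMap.smul_apply, smul_eq_mul, hθ1, hθ3] at h
    rw [skew (e 2) (e 1)] at h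
    rw [← hp, ← hq, ← hc] at h
    linarith
  -- equation from (0,2,3)
  have eq3 : r = 0 := by
    have h := hlcs (e 0) (e 2) (e 3)
    rw [hbr3, hbr4, hab23] at h
    simp only [map_neg, map_zero, LinearMap.zero_apply, LinearMap.map_zero,
      LinearMap.neg_apply, hθ2, hθ3] at h
    rw [halt (e 3), halt (e 2)] at h
    rw [← hr, ← hc] at h
    have : c * r = 0 := by linarith
    exact (mul_eq_zero.mp this).resolve_left hcne
  have hp0 : p = 0 := by
    have h : (1 + (μ + c) ^ 2) * p = 0 := by linear_combination eq2 - (μ + c) * eq1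
    have hpos : (1 : ℝ) + (μ + c) ^ 2 ≠ 0 := by positivity
    exact (mul_eq_zero.mp h).resolve_left hpos
  have hq0 : q = 0 := by
    have h := eq1
    rw [hp0] at h
    linarith
  -- nondegeneracy contradiction
  by_cases haz : a = 0
  · -- e 1 is in the kernel
    have hker : ∀ y : g, ω (e 1) y = 0 := by
      have : ω (e 1) = 0 := by
        apply Module.Basis.ext e
        intro i
        fin_cases i
        · show ω (e 1) (e 0) = 0
          rw [skew (e 1) (e 0), ← ha, haz, neg_zero]
        · exact halt (e 1)
        · show ω (e 1) (e 2) = 0; rw [← hp, hp0]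
        · show ω (e 1) (e 3) = 0; rw [← hq, hq0]
      intro y; rw [this]; rfl
    have : e 1 = 0 := hnd (e 1) hker
    exact (e.ne_zero 1) this
  · -- v = b • e 1 - a • e 2 is in the kernel
    set v : g := b • e 1 - a • e 2 with hv
    have hker : ∀ y : g, ω v y = 0 := by
      have hωv : ω v = 0 := by
        apply Module.Basis.ext e
        intro i
        have expand : ∀ y : g, ω v y = b * ω (e 1) y - a * ω (e 2) y := by
          intro y
          simp [hv, map_sub, map_smul, smul_eq_mul]
        fin_cases i
        · show ω v (e 0) = 0
          rw [expand, skew (e 1) (e 0), skew (e 2) (e 0), ← ha, ← hb]; ring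
        · show ω v (e 1) = 0
          rw [expand, halt (e 1), skew (e 2) (e 1), ← hp, hp0]; ring
        · show ω v (e 2) = 0
          rw [expand, halt (e 2), ← hp, hp0]; ring
        · show ω v (e 3) = 0
          rw [expand, ← hq, ← hr, hq0, eq3]; ring
      intro y; rw [hωv]; rfl
    have hv0 : v = 0 := hnd v hker
    have : a = 0 := by
      have h := congrArg (e.repr) hv0
      rw [hv] at h
      simp only [map_sub, map_smul, Module.Basis.repr_self, map_zero] at h
      have h2 := congrArg (fun f => f 2) h
      simpa using h2
    exact haz this
end

section
/- Let 𝔤 be a finite-dimensional real Lie algebra with an abelian ideal 𝔲 of codimension one, let f₁ ∈ 𝔤 with f₁ ∉ 𝔲, and suppose the map ad_{f₁}|_𝔲 : 𝔲 → 𝔲 is bijective. Then every LCS structure (ω, θ) on 𝔤 is of the second kind: θ(x) = 0 for all x ∈ 𝔤_ω. -/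
/-- **Lemma: if `ad_{f₁}|_𝔲` is invertible then every LCS structure is of the second
kind.**
Let `𝔤` be a finite-dimensional real Lie algebra with an abelian ideal `𝔲` of
codimension one, and let `f₁ ∉ 𝔲` be such that `ad_{f₁}` restricts to a bijection of
`𝔲`.  Then every LCS structure `(ω, θ)` on `𝔤` is of the second kind: `θ` vanishes on
`𝔤_ω`. -/
theorem lcs_second_kind_of_ad_invertible
    {g : Type*} [LieRing g] [LieAlgebra ℝ g] [FiniteDimensional ℝ g]
    (𝔲 : LieIdeal ℝ g)
    (habelian : ∀ x ∈ 𝔲, ∀ y ∈ 𝔲, ⁅x, y⁆ = 0)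
    (hcodim : Module.finrank ℝ ↥(𝔲 : Submodule ℝ g) + 1 = Module.finrank ℝ g)
    (f₁ : g) (hf₁ : f₁ ∉ 𝔲)
    (hinj : ∀ y ∈ 𝔲, ⁅f₁, y⁆ = 0 → y = 0)
    (hsurj : ∀ z ∈ 𝔲, ∃ y ∈ 𝔲, ⁅f₁, y⁆ = z)
    (ω : g →ₗ[ℝ] g →ₗ[ℝ] ℝ)
    (halt : ∀ x : g, ω x x = 0)
    (hnondeg : ∀ x : g, (∀ y : g, ω x y = 0) → x = 0)
    (θ : g →ₗ[ℝ] ℝ)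
    (hθclosed : ∀ x y : g, θ ⁅x, y⁆ = 0)
    (hlcs : ∀ x y z : g,
      -ω ⁅x, y⁆ z + ω ⁅x, z⁆ y - ω ⁅y, z⁆ x
        = θ x * ω y z - θ y * ω x z + θ z * ω x y) :
    ∀ x : g, (∀ y z : g, ω ⁅x, y⁆ z + ω y ⁅x, z⁆ = 0) → θ x = 0 := by
  intro x hx
  by_contra hθx
  -- antisymmetry of ω
  have hanti : ∀ a b : g, ω a b = - ω b a := by
    intro a b
    have h := halt (a + b)
    simp only [map_add, LinearMap.add_apply, halt a, halt b] at h
    linarith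
  -- θ vanishes on 𝔲
  have hθu : ∀ z ∈ 𝔲, θ z = 0 := by
    intro z hz
    obtain ⟨y, _, hyz⟩ := hsurj z hz
    rw [← hyz]; exact hθclosed f₁ y
  -- ω vanishes on 𝔲 × 𝔲
  have hωu : ∀ y ∈ 𝔲, ∀ z ∈ 𝔲, ω y z = 0 := by
    intro y hy z hz
    have h1 := hlcs x y z
    have h2 := hx y z
    have h3 : ω ⁅x, z⁆ y = - ω y ⁅x, z⁆ := hanti _ _
    rw [habelian y hy z hz] at h1
    simp only [hθu y hy, hθu z hz, map_zero, LinearMap.zero_apply, zero_mul,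
      sub_zero, add_zero] at h1
    have h4 : θ x * ω y z = 0 := by linarith
    exact (mul_eq_zero.mp h4).resolve_left hθx
  -- the whole space is 𝔲 ⊔ span {f₁}
  have hf₁U : f₁ ∉ (𝔲 : Submodule ℝ g) := hf₁
  have hmemf₁ : f₁ ∈ (𝔲 : Submodule ℝ g) ⊔ Submodule.span ℝ {f₁} :=
    Submodule.mem_sup_right (Submodule.mem_span_singleton_self f₁)
  have hlt : (𝔲 : Submodule ℝ g) < (𝔲 : Submodule ℝ g) ⊔ Submodule.span ℝ {f₁} :=
    lt_of_le_of_ne le_sup_left (by intro h; rw [← h] at hmemf₁; exact hf₁U hmemf₁)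
  have htop : (𝔲 : Submodule ℝ g) ⊔ Submodule.span ℝ {f₁} = ⊤ := by
    apply Submodule.eq_top_of_finrank_eq
    have h1 := Submodule.finrank_lt_finrank_of_lt hlt
    have h2 := Submodule.finrank_le ((𝔲 : Submodule ℝ g) ⊔ Submodule.span ℝ {f₁})
    omega
  have hdecomp : ∀ w : g, ∃ u ∈ (𝔲 : Submodule ℝ g), ∃ b : ℝ, w = u + b • f₁ := by
    intro w
    have hw : w ∈ (𝔲 : Submodule ℝ g) ⊔ Submodule.span ℝ {f₁} := htop ▸ Submodule.mem_top
    obtain ⟨u, hu, v, hv, huv⟩ := Submodule.mem_sup.mp hw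
    obtain ⟨b, rfl⟩ := Submodule.mem_span_singleton.mp hv
    exact ⟨u, hu, b, huv.symm⟩
  obtain ⟨u₀, hu₀, a, hxdec⟩ := hdecomp x
  have hu₀' : u₀ ∈ 𝔲 := hu₀
  -- a ≠ 0
  have ha : a ≠ 0 := by
    intro h0
    apply hθx
    rw [hxdec, h0, zero_smul, add_zero]
    exact hθu u₀ hu₀'
  -- ω z f₁ = 0 for z ∈ 𝔲
  have hωf : ∀ z ∈ 𝔲, ω z f₁ = 0 := by
    intro z hz
    obtain ⟨y, hy, hyz⟩ := hsurj z hz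
    have h := hx y f₁
    have hb1 : ⁅x, y⁆ = a • z := by
      rw [hxdec, add_lie, smul_lie, habelian u₀ hu₀' y hy, zero_add, hyz]
    have hb2 : ⁅x, f₁⁆ = -⁅f₁, u₀⁆ := by
      rw [hxdec, add_lie, smul_lie, lie_self, smul_zero, add_zero, ← lie_skew]
    have hmem : (-⁅f₁, u₀⁆ : g) ∈ 𝔲 := neg_mem (lie_mem_right ℝ g 𝔲 f₁ u₀ hu₀')
    rw [hb1, hb2] at h
    rw [hωu y hy _ hmem] at h
    simp only [map_smul, LinearMap.smul_apply, smul_eq_mul, add_zero] at h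
    exact (mul_eq_zero.mp h).resolve_left ha
  -- every element of 𝔲 is zero
  have hUzero : ∀ z ∈ 𝔲, z = 0 := by
    intro z hz
    apply hnondeg
    intro w
    obtain ⟨u, hu, b, rfl⟩ := hdecomp w
    rw [map_add, map_smul, hωu z hz u hu, hωf z hz, smul_zero, add_zero]
  -- then f₁ must be zero, contradiction
  have hf₁zero : f₁ = 0 := by
    apply hnondeg
    intro w
    obtain ⟨u, hu, b, rfl⟩ := hdecomp w
    rw [hUzero u hu, zero_add, map_smul, halt, smul_zero]
  exact hf₁ (hf₁zero ▸ zero_mem 𝔲)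
end
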